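/- arXiv:2207.06231 — 12 statements merged into one kernel-verified Lean document; each statement's English description precedes it below -/
import Mathlib

section
/- For all integers m ≥ 1 and n ≥ 1, the simple continued fraction expansion of √((mn)² + n) is [mn; \overline{2m, 2mn}]; that is, the integer part is mn and the partial quotients repeat the block (2m, 2mn). -/
theorem cf_sqrt_mnsq_add_n (m n : ℤ) (hm : 1 ≤ m) (hn : 1 ≤ n) :
    ⌊Real.sqrt (((m * n) ^ 2 + n : ℤ) : ℝ)⌋ = m * n ∧
    ∀ i : ℕ,
      (GenContFract.of (Real.sqrt (((m * n) ^ 2 + n : ℤ) : ℝ))).partDens.get? i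
        = some ((([2 * m, 2 * m * n] : List ℤ).getD (i % 2) 0 : ℝ)) := by
  set a : ℤ := m * n with ha
  set x : ℝ := Real.sqrt (((a ^ 2 + n : ℤ) : ℝ)) with hx
  have hnR : (1 : ℝ) ≤ (n : ℝ) := by exact_mod_cast hn
  have hnpos : (0 : ℝ) < (n : ℝ) := by linarith
  have haR : (1 : ℝ) ≤ (a : ℝ) := by
    have : 1 ≤ a := by nlinarith
    exact_mod_cast this
  have hNnonneg : (0 : ℝ) ≤ ((a ^ 2 + n : ℤ) : ℝ) := by push_cast; nlinarith
  have hx2 : x ^ 2 = (a : ℝ) ^ 2 + (n : ℝ) := by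
    rw [hx, Real.sq_sqrt hNnonneg]; push_cast; ring
  have hxpos : 0 < x := by
    rw [hx]; apply Real.sqrt_pos.mpr; push_cast; nlinarith
  have hxlb : (a : ℝ) < x := by nlinarith
  have han : (n : ℝ) ≤ 2 * (a : ℝ) := by
    have : n ≤ 2 * a := by nlinarith
    exact_mod_cast this
  have hxub : x < (a : ℝ) + 1 := by nlinarith
  have hfloorx : ⌊x⌋ = a := by
    rw [Int.floor_eq_iff]
    · exact ⟨le_of_lt hxlb, by push_cast; linarith⟩
  have key : (x - a) * (x + a) = (n : ℝ) := by nlinarith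
  have hxa_pos : 0 < x - (a : ℝ) := by linarith
  have hxa_ne : x - (a : ℝ) ≠ 0 := ne_of_gt hxa_pos
  have hn_ne : (n : ℝ) ≠ 0 := ne_of_gt hnpos
  have inv1 : (x - (a : ℝ))⁻¹ = (x + a) / n := by
    rw [eq_div_iff hn_ne, inv_mul_eq_div, div_eq_iff hxa_ne]
    linarith [key]
  have inv2 : ((x - (a : ℝ)) / n)⁻¹ = x + a := by
    rw [inv_div, div_eq_iff hxa_ne]
    linarith [key]
  -- floors of the two iterates
  have hfr1_lt : (x + (a : ℝ)) / n < 2 * m + 1 := by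
    rw [div_lt_iff₀ hnpos]
    have : ((2 * m + 1) : ℝ) * n = 2 * a + n := by push_cast [ha]; ring
    rw [this]; linarith
  have hfr1_ge : (2 * m : ℝ) ≤ (x + a) / n := by
    rw [le_div_iff₀ hnpos]
    have : (2 * m : ℝ) * n = 2 * a := by push_cast [ha]; ring
    rw [this]; linarith
  have hfloor1 : ⌊(x + (a : ℝ)) / n⌋ = 2 * m := by
    rw [Int.floor_eq_iff] <;> push_cast
    · exact ⟨hfr1_ge, hfr1_lt⟩
  have hfloor2 : ⌊x + (a : ℝ)⌋ = 2 * a := by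
    rw [Int.floor_eq_iff] <;> push_cast
    constructor <;> linarith
  -- the IntFractPair values
  have hof0 : GenContFract.IntFractPair.of x = ⟨a, x - a⟩ := by
    unfold GenContFract.IntFractPair.of Int.fract
    rw [hfloorx]
  have hof1 : GenContFract.IntFractPair.of (x - (a : ℝ))⁻¹ = ⟨2 * m, (x - a) / n⟩ := by
    unfold GenContFract.IntFractPair.of Int.fract
    rw [inv1, hfloor1]
    congr 1
    push_cast [ha]
    field_simp
    ring
  have hfrac1_pos : 0 < (x - (a : ℝ)) / n := div_pos hxa_pos hnpos
  have hfrac1_ne : (x - (a : ℝ)) / n ≠ 0 := ne_of_gt hfrac1_pos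
  have hof2 : GenContFract.IntFractPair.of ((x - (a : ℝ)) / n)⁻¹ = ⟨2 * a, x - a⟩ := by
    unfold GenContFract.IntFractPair.of Int.fract
    rw [inv2, hfloor2]
    congr 1
    push_cast
    ring
  have h0 : GenContFract.IntFractPair.stream x 0 = some ⟨a, x - a⟩ := by
    rw [GenContFract.IntFractPair.stream_zero, hof0]
  -- the periodic stream
  have hstream : ∀ k : ℕ,
      GenContFract.IntFractPair.stream x (2 * k + 1) = some ⟨2 * m, (x - a) / n⟩ ∧
      GenContFract.IntFractPair.stream x (2 * k + 2) = some ⟨2 * a, x - a⟩ := by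
    intro k
    induction k with
    | zero =>
      have h1 : GenContFract.IntFractPair.stream x 1 = some ⟨2 * m, (x - a) / n⟩ := by
        have := GenContFract.IntFractPair.stream_succ_of_some h0 hxa_ne
        rwa [hof1] at this
      have h2 : GenContFract.IntFractPair.stream x 2 = some ⟨2 * a, x - a⟩ := by
        have := GenContFract.IntFractPair.stream_succ_of_some h1 hfrac1_ne
        rwa [hof2] at this
      exact ⟨h1, h2⟩
    | succ k ih =>
      have h1 : GenContFract.IntFractPair.stream x (2 * (k + 1) + 1)
          = some ⟨2 * m, (x - a) / n⟩ := by
        have := GenContFract.IntFractPair.stream_succ_of_some ih.2 hxa_ne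
        rw [hof1] at this
        have e : 2 * (k + 1) + 1 = 2 * k + 2 + 1 := by ring
        rw [e]
        exact this
      have h2 : GenContFract.IntFractPair.stream x (2 * (k + 1) + 2)
          = some ⟨2 * a, x - a⟩ := by
        have := GenContFract.IntFractPair.stream_succ_of_some h1 hfrac1_ne
        rwa [hof2] at this
      exact ⟨h1, h2⟩
  refine ⟨hfloorx, ?_⟩
  intro i
  rcases Nat.even_or_odd i with ⟨k, hk⟩ | ⟨k, hk⟩
  · have hstr : GenContFract.IntFractPair.stream x (i + 1) = some ⟨2 * m, (x - a) / n⟩ := by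
      have e : i + 1 = 2 * k + 1 := by omega
      rw [e]; exact (hstream k).1
    have hs := GenContFract.get?_of_eq_some_of_succ_get?_intFractPair_stream hstr
    rw [GenContFract.partDen_eq_s_b hs]
    have hmod : i % 2 = 0 := by omega
    rw [hmod]
    norm_num
  · have hstr : GenContFract.IntFractPair.stream x (i + 1) = some ⟨2 * a, x - a⟩ := by
      have e : i + 1 = 2 * k + 2 := by omega
      rw [e]; exact (hstream k).2
    have hs := GenContFract.get?_of_eq_some_of_succ_get?_intFractPair_stream hstr
    rw [GenContFract.partDen_eq_s_b hs]
    have hmod : i % 2 = 1 := by omega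
    rw [hmod]
    push_cast [ha]
    norm_num
    ring
end

section
/- For all integers m ≥ 1 and n ≥ 1, the simple continued fraction expansion of √((mn)² + 2n) is [mn; \overline{m, 2mn}]; that is, the integer part is mn and the partial quotients repeat the block (m, 2mn). -/
open GenContFract

theorem cf_sqrt_mnsq_add_two_n (m n : ℤ) (hm : 1 ≤ m) (hn : 1 ≤ n) :
    ⌊Real.sqrt (((m * n) ^ 2 + 2 * n : ℤ) : ℝ)⌋ = m * n ∧
    ∀ i : ℕ,
      (GenContFract.of (Real.sqrt (((m * n) ^ 2 + 2 * n : ℤ) : ℝ))).partDens.get? i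
        = some ((([m, 2 * m * n] : List ℤ).getD (i % 2) 0 : ℝ)) := by
  have hmR : (1:ℝ) ≤ (m:ℝ) := by exact_mod_cast hm
  have hnR : (1:ℝ) ≤ (n:ℝ) := by exact_mod_cast hn
  set x := Real.sqrt (((m * n) ^ 2 + 2 * n : ℤ) : ℝ) with hxdef
  have hNcast : (((m * n) ^ 2 + 2 * n : ℤ) : ℝ) = ((m:ℝ) * n) ^ 2 + 2 * n := by push_cast; ring
  have hNnonneg : (0:ℝ) ≤ (((m * n) ^ 2 + 2 * n : ℤ) : ℝ) := by rw [hNcast]; nlinarith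
  have hx0 : 0 ≤ x := Real.sqrt_nonneg _
  have hsq : x ^ 2 = ((m:ℝ) * n) ^ 2 + 2 * n := by
    rw [hxdef, Real.sq_sqrt hNnonneg, hNcast]
  have h1 : ((m:ℝ) * n) < x := by nlinarith
  have hmn1 : (0:ℝ) ≤ ((m:ℝ) - 1) * n := by nlinarith
  have h2 : x < (m:ℝ) * n + 1 := by nlinarith [sq_nonneg (x - ((m:ℝ) * n + 1))]
  have hfloorx : ⌊x⌋ = m * n := by
    rw [Int.floor_eq_iff]
    constructor
    · push_cast; linarith
    · push_cast; linarith
  refine ⟨hfloorx, ?_⟩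
  set y := x - (m:ℝ) * n with hydef
  have hy0 : 0 < y := by simp [hydef]; linarith
  have hyne : y ≠ 0 := ne_of_gt hy0
  have h2n : (0:ℝ) < 2 * n := by linarith
  have h2nne : (2:ℝ) * n ≠ 0 := ne_of_gt h2n
  have hkey : y * (x + (m:ℝ) * n) = 2 * n := by
    rw [hydef]; nlinarith
  have hyinv : y⁻¹ = (x + (m:ℝ) * n) / (2 * n) := by
    field_simp
    linarith [hkey]
  have hfr1 : y / (2 * n) ≠ 0 := by positivity
  have hfr1inv : (y / (2 * n))⁻¹ = x + (m:ℝ) * n := by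
    rw [inv_div, div_eq_iff hyne]; linarith [hkey]
  -- the two IntFractPair computations
  have p1 : IntFractPair.of (y⁻¹) = ⟨m, y / (2 * n)⟩ := by
    have hfl : ⌊y⁻¹⌋ = m := by
      rw [hyinv, Int.floor_eq_iff]
      constructor
      · rw [le_div_iff₀ h2n]; push_cast; nlinarith
      · rw [div_lt_iff₀ h2n]; push_cast; nlinarith
    have hfr : Int.fract (y⁻¹) = y / (2 * n) := by
      rw [Int.fract, hfl, hyinv, hydef]
      field_simp; ring
    simp only [IntFractPair.of, hfl, hfr]
  have p2 : IntFractPair.of ((y / (2 * n))⁻¹) = ⟨2 * m * n, y⟩ := by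
    have hfl : ⌊(y / (2 * n))⁻¹⌋ = 2 * m * n := by
      rw [hfr1inv, Int.floor_eq_iff]
      constructor
      · push_cast; linarith
      · push_cast; linarith
    have hfr : Int.fract ((y / (2 * n))⁻¹) = y := by
      rw [Int.fract, hfl, hfr1inv, hydef]; push_cast; ring
    simp only [IntFractPair.of, hfl, hfr]
  have s0 : IntFractPair.stream x 0 = some ⟨m * n, y⟩ := by
    rw [IntFractPair.stream_zero]
    congr 1
    have : Int.fract x = y := by rw [Int.fract, hfloorx, hydef]; push_cast; ring
    simp [IntFractPair.of, hfloorx, this]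
  have hstream : ∀ k : ℕ,
      IntFractPair.stream x (2 * k + 1) = some ⟨m, y / (2 * n)⟩ ∧
      IntFractPair.stream x (2 * k + 2) = some ⟨2 * m * n, y⟩ := by
    intro k
    induction k with
    | zero =>
      have s1 : IntFractPair.stream x 1 = some ⟨m, y / (2 * n)⟩ := by
        have := IntFractPair.stream_succ_of_some s0 (by simpa using hyne)
        rwa [p1] at this
      have s2 : IntFractPair.stream x 2 = some ⟨2 * m * n, y⟩ := by
        have := IntFractPair.stream_succ_of_some s1 (by simpa using hfr1)
        rwa [p2] at this
      exact ⟨s1, s2⟩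
    | succ k ih =>
      have s1 : IntFractPair.stream x (2 * (k + 1) + 1) = some ⟨m, y / (2 * n)⟩ := by
        have := IntFractPair.stream_succ_of_some ih.2 (by simpa using hyne)
        rw [p1] at this
        have he : 2 * k + 2 + 1 = 2 * (k + 1) + 1 := by ring
        rwa [he] at this
      have s2 : IntFractPair.stream x (2 * (k + 1) + 2) = some ⟨2 * m * n, y⟩ := by
        have := IntFractPair.stream_succ_of_some s1 (by simpa using hfr1)
        rwa [p2] at this
      exact ⟨s1, s2⟩
  intro i
  rcases Nat.even_or_odd i with ⟨k, hk⟩ | ⟨k, hk⟩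
  · have hi : i = 2 * k := by omega
    have hget := GenContFract.get?_of_eq_some_of_succ_get?_intFractPair_stream
      (v := x) (n := i) (by rw [hi]; exact (hstream k).1)
    rw [GenContFract.partDens, Stream'.Seq.map_get?, hget]
    have : i % 2 = 0 := by omega
    simp [this]
  · have hi : i = 2 * k + 1 := by omega
    have hget := GenContFract.get?_of_eq_some_of_succ_get?_intFractPair_stream
      (v := x) (n := i) (by rw [hi]; exact (hstream k).2)
    rw [GenContFract.partDens, Stream'.Seq.map_get?, hget]
    have : i % 2 = 1 := by omega
    simp [this]
end

section
/- (Perron's period-3 formula.) For all integers m ≥ 1 and n ≥ 1, set a = (4m² + 1)n + m. Then the simple continued fraction expansion of √(a² + 4mn + 1) is [a; \overline{2m, 2m, 2a}]. -/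
open GenContFract

private lemma ifp_of_eq {v : ℝ} {k : ℤ} (h1 : (k:ℝ) ≤ v) (h2 : v < k + 1) :
    IntFractPair.of v = ⟨k, v - k⟩ := by
  have hf : ⌊v⌋ = k := Int.floor_eq_iff.mpr ⟨h1, h2⟩
  simp [IntFractPair.of, Int.fract, hf]

private lemma pden_of_stream {v : ℝ} {i : ℕ} {p : IntFractPair ℝ}
    (h : IntFractPair.stream v (i+1) = some p) :
    (GenContFract.of v).partDens.get? i = some ((p.b : ℝ)) := by
  have := GenContFract.get?_of_eq_some_of_succ_get?_intFractPair_stream h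
  simp [GenContFract.partDens, Stream'.Seq.map_get?, this]

set_option maxHeartbeats 1000000 in
theorem cf_perron_period_three (m n a : ℤ) (hm : 1 ≤ m) (hn : 1 ≤ n)
    (ha : a = (4 * m ^ 2 + 1) * n + m) :
    ⌊Real.sqrt ((a ^ 2 + 4 * m * n + 1 : ℤ) : ℝ)⌋ = a ∧
    ∀ i : ℕ,
      (GenContFract.of (Real.sqrt ((a ^ 2 + 4 * m * n + 1 : ℤ) : ℝ))).partDens.get? i
        = some ((([2 * m, 2 * m, 2 * a] : List ℤ).getD (i % 3) 0 : ℝ)) := by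
  set x := Real.sqrt ((a ^ 2 + 4 * m * n + 1 : ℤ) : ℝ) with hxdef
  have hm' : (1:ℝ) ≤ (m:ℝ) := by exact_mod_cast hm
  have hn' : (1:ℝ) ≤ (n:ℝ) := by exact_mod_cast hn
  have ha' : (a:ℝ) = (4 * (m:ℝ) ^ 2 + 1) * n + m := by exact_mod_cast congrArg (Int.cast : ℤ → ℝ) ha
  set c : ℝ := 4 * (m:ℝ) * n + 1 with hcdef
  set b : ℝ := (4 * (m:ℝ) ^ 2 - 1) * n + m with hbdef
  have hc0 : (0:ℝ) < c := by rw [hcdef]; nlinarith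
  have hc1 : (1:ℝ) ≤ c := by rw [hcdef]; nlinarith
  have hc2a : c < 2 * (a:ℝ) + 1 := by rw [hcdef, ha']; nlinarith
  have ha0 : (1:ℝ) ≤ (a:ℝ) := by rw [ha']; nlinarith
  have hba : b < (a:ℝ) := by rw [hbdef, ha']; nlinarith
  have hbca : (a:ℝ) + 1 ≤ b + c := by rw [hbdef, hcdef, ha']; nlinarith
  have habc : (a:ℝ) + b = 2 * m * c := by rw [hbdef, hcdef, ha']; ring
  have hD : ((a ^ 2 + 4 * m * n + 1 : ℤ) : ℝ) = (a:ℝ)^2 + c := by rw [hcdef]; push_cast; ring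
  have hD0 : (0:ℝ) ≤ ((a ^ 2 + 4 * m * n + 1 : ℤ) : ℝ) := by rw [hD]; nlinarith
  have hx2 : x^2 = (a:ℝ)^2 + c := by rw [hxdef, Real.sq_sqrt hD0, hD]
  have hx0 : 0 ≤ x := Real.sqrt_nonneg _
  have hDb : (a:ℝ)^2 + c - b^2 = c^2 := by rw [hbdef, hcdef, ha']; ring
  clear_value x c b
  clear hxdef hcdef hbdef hD hD0 ha' ha
  have hax : (a:ℝ) < x := by nlinarith
  have hxa1 : x < (a:ℝ) + 1 := by nlinarith
  -- inverses
  have hinv0 : (x - a)⁻¹ = (x + a) / c := by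
    refine inv_eq_of_mul_eq_one_right ?_
    field_simp
    linear_combination hx2
  have hinv1 : ((x - b) / c)⁻¹ = (x + b) / c := by
    refine inv_eq_of_mul_eq_one_right ?_
    field_simp
    linear_combination hx2 + hDb
  have hinv2 : ((x - a) / c)⁻¹ = x + a := by
    refine inv_eq_of_mul_eq_one_right ?_
    field_simp
    linear_combination hx2
  -- floors, via ifp_of_eq
  have hof1 : IntFractPair.of ((x + a) / c) = ⟨2*m, (x - b)/c⟩ := by
    rw [ifp_of_eq (k := 2*m) ?_ ?_]
    · congr 1
      push_cast
      field_simp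
      linear_combination habc
    · push_cast
      rw [le_div_iff₀ hc0]
      nlinarith
    · push_cast
      rw [div_lt_iff₀ hc0]
      nlinarith
  have hof2 : IntFractPair.of ((x + b) / c) = ⟨2*m, (x - (a:ℝ))/c⟩ := by
    rw [ifp_of_eq (k := 2*m) ?_ ?_]
    · congr 1
      push_cast
      field_simp
      linear_combination habc
    · push_cast
      rw [le_div_iff₀ hc0]
      nlinarith
    · push_cast
      rw [div_lt_iff₀ hc0]
      nlinarith
  have hof3 : IntFractPair.of (x + a) = ⟨2*a, x - a⟩ := by
    rw [ifp_of_eq (k := 2*a) ?_ ?_]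
    · congr 1
      push_cast
      ring
    · push_cast; linarith
    · push_cast; linarith
  have hne0 : x - (a:ℝ) ≠ 0 := by nlinarith
  have hne1 : (x - b) / c ≠ 0 := (div_pos (by nlinarith) hc0).ne'
  have hne2 : (x - (a:ℝ)) / c ≠ 0 := (div_pos (by nlinarith) hc0).ne'
  have step : ∀ j (p : IntFractPair ℝ), IntFractPair.stream x j = some p → p.fr = x - a →
      IntFractPair.stream x (j+1) = some ⟨2*m, (x - b)/c⟩ ∧
      IntFractPair.stream x (j+2) = some ⟨2*m, (x - (a:ℝ))/c⟩ ∧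
      IntFractPair.stream x (j+3) = some ⟨2*a, x - a⟩ := by
    intro j p hp hfr
    have s1 : IntFractPair.stream x (j+1) = some ⟨2*m, (x - b)/c⟩ := by
      rw [IntFractPair.stream_succ_of_some hp (hfr ▸ hne0), hfr, hinv0, hof1]
    have s2 : IntFractPair.stream x (j+2) = some ⟨2*m, (x - (a:ℝ))/c⟩ := by
      rw [show j+2 = (j+1)+1 from rfl, IntFractPair.stream_succ_of_some s1 hne1]
      simp only [hinv1, hof2]
    have s3 : IntFractPair.stream x (j+3) = some ⟨2*a, x - a⟩ := by
      rw [show j+3 = (j+2)+1 from rfl, IntFractPair.stream_succ_of_some s2 hne2]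
      simp only [hinv2, hof3]
    exact ⟨s1, s2, s3⟩
  have hfloor : ⌊x⌋ = a := Int.floor_eq_iff.mpr ⟨hax.le, by push_cast; linarith⟩
  have s0 : IntFractPair.stream x 0 = some ⟨a, x - a⟩ := by
    rw [IntFractPair.stream_zero]
    congr 1
    exact ifp_of_eq hax.le (by push_cast; linarith)
  have main : ∀ k : ℕ, IntFractPair.stream x (3*k+1) = some ⟨2*m, (x - b)/c⟩ ∧
      IntFractPair.stream x (3*k+2) = some ⟨2*m, (x - (a:ℝ))/c⟩ ∧
      IntFractPair.stream x (3*k+3) = some ⟨2*a, x - a⟩ := by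
    intro k
    induction k with
    | zero => simpa using step 0 ⟨a, x - a⟩ s0 rfl
    | succ k ih =>
        have h := step (3*k+3) ⟨2*a, x - a⟩ ih.2.2 rfl
        refine ⟨?_, ?_, ?_⟩
        · rw [show 3*(k+1)+1 = (3*k+3)+1 by ring]; exact h.1
        · rw [show 3*(k+1)+2 = (3*k+3)+2 by ring]; exact h.2.1
        · rw [show 3*(k+1)+3 = (3*k+3)+3 by ring]; exact h.2.2
  refine ⟨hfloor, fun i => ?_⟩
  have hi : 3 * (i / 3) + i % 3 = i := Nat.div_add_mod i 3
  rcases (by omega : i % 3 = 0 ∨ i % 3 = 1 ∨ i % 3 = 2) with h|h|h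
  · have hs : IntFractPair.stream x (i+1) = some ⟨2*m, (x - b)/c⟩ := by
      rw [show i + 1 = 3*(i/3)+1 by omega]
      exact (main (i/3)).1
    rw [pden_of_stream hs, h]
    simp
  · have hs : IntFractPair.stream x (i+1) = some ⟨2*m, (x - (a:ℝ))/c⟩ := by
      rw [show i + 1 = 3*(i/3)+2 by omega]
      exact (main (i/3)).2.1
    rw [pden_of_stream hs, h]
    simp
  · have hs : IntFractPair.stream x (i+1) = some ⟨2*a, x - a⟩ := by
      rw [show i + 1 = 3*(i/3)+3 by omega]
      exact (main (i/3)).2.2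
    rw [pden_of_stream hs, h]
    simp
end

section
/- For every integer n ≥ 1, the simple continued fraction expansion of √((2n+1)² + 4) is [2n+1; \overline{n, 1, 1, n, 4n+2}]. -/
private lemma of_s_iterate (i : ℕ) (v : ℝ) :
    (GenContFract.of v).s.get? i
      = (GenContFract.of ((fun w : ℝ => (Int.fract w)⁻¹)^[i] v)).s.get? 0 := by
  induction i generalizing v with
  | zero => rfl
  | succ k ih =>
    rw [GenContFract.of_s_succ, ih, Function.iterate_succ_apply]

set_option maxHeartbeats 2000000 in
theorem cf_period_five (n : ℤ) (hn : 1 ≤ n) :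
    ⌊Real.sqrt (((2 * n + 1) ^ 2 + 4 : ℤ) : ℝ)⌋ = 2 * n + 1 ∧
    ∀ i : ℕ,
      (GenContFract.of (Real.sqrt (((2 * n + 1) ^ 2 + 4 : ℤ) : ℝ))).partDens.get? i
        = some ((([n, 1, 1, n, 4 * n + 2] : List ℤ).getD (i % 5) 0 : ℝ)) := by
  set x : ℝ := Real.sqrt (((2 * n + 1) ^ 2 + 4 : ℤ) : ℝ) with hxdef
  set a : ℝ := (n : ℝ) with hadef
  have ha : (1 : ℝ) ≤ a := by rw [hadef]; exact_mod_cast hn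
  have hD : (((2 * n + 1) ^ 2 + 4 : ℤ) : ℝ) = (2 * a + 1) ^ 2 + 4 := by push_cast; ring
  have hDnn : (0 : ℝ) ≤ (((2 * n + 1) ^ 2 + 4 : ℤ) : ℝ) := by nlinarith
  have hx2 : x ^ 2 = (2 * a + 1) ^ 2 + 4 := by rw [hxdef, Real.sq_sqrt hDnn, hD]
  have h1 : 2 * a + 1 < x := by
    rw [hxdef]
    rw [Real.lt_sqrt (by nlinarith)]
    rw [hD]; nlinarith
  have h2 : x < 2 * a + 2 := by
    rw [hxdef]
    rw [Real.sqrt_lt' (by nlinarith)]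
    rw [hD]; nlinarith
  -- the five periodic complete quotients
  set x5 : ℝ := x + (2 * a + 1) with hx5
  set x1 : ℝ := (x + (2 * a + 1)) / 4 with hx1
  set x2 : ℝ := (x + (2 * a - 1)) / (2 * a + 1) with hx2d
  set x3 : ℝ := (x + 2) / (2 * a + 1) with hx3
  set x4 : ℝ := (x + (2 * a - 1)) / 4 with hx4
  have hden : (2 * a + 1) ≠ 0 := by nlinarith
  -- floors
  have hfx : ⌊x⌋ = 2 * n + 1 := by
    rw [Int.floor_eq_iff]
    constructor <;> push_cast <;> [linarith; linarith]
  have hb1 : (a : ℝ) < x1 ∧ x1 < a + 1 := by constructor <;> [rw [hx1]; rw [hx1]] <;> nlinarith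
  have hb2' : (1 : ℝ) < x2 ∧ x2 < 2 := by
    refine ⟨?_, ?_⟩
    · rw [hx2d, lt_div_iff₀ (by nlinarith)]; nlinarith
    · rw [hx2d, div_lt_iff₀ (by nlinarith)]; nlinarith
  have hb3 : (1 : ℝ) < x3 ∧ x3 < 2 := by
    refine ⟨?_, ?_⟩
    · rw [hx3, lt_div_iff₀ (by nlinarith)]; nlinarith
    · rw [hx3, div_lt_iff₀ (by nlinarith)]; nlinarith
  have hb4 : (a : ℝ) < x4 ∧ x4 < a + 1 := by constructor <;> [rw [hx4]; rw [hx4]] <;> nlinarith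
  have hb5 : (4 * a + 2 : ℝ) < x5 ∧ x5 < 4 * a + 3 := by
    constructor <;> rw [hx5] <;> nlinarith
  have hf1 : ⌊x1⌋ = n := by
    rw [Int.floor_eq_iff]; exact ⟨le_of_lt hb1.1, by push_cast; exact hb1.2⟩
  have hf2 : ⌊x2⌋ = 1 := by
    rw [Int.floor_eq_iff]
    constructor <;> push_cast <;> [exact le_of_lt hb2'.1; linarith [hb2'.2]]
  have hf3 : ⌊x3⌋ = 1 := by
    rw [Int.floor_eq_iff]
    constructor <;> push_cast <;> [exact le_of_lt hb3.1; linarith [hb3.2]]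
  have hf4 : ⌊x4⌋ = n := by
    rw [Int.floor_eq_iff]; exact ⟨le_of_lt hb4.1, by push_cast; exact hb4.2⟩
  have hf5 : ⌊x5⌋ = 4 * n + 2 := by
    rw [Int.floor_eq_iff]
    constructor <;> push_cast <;> [exact le_of_lt hb5.1; linarith [hb5.2]]
  -- fract computations
  have hfr : ∀ w : ℝ, Int.fract w = w - ⌊w⌋ := fun w => rfl
  -- step maps
  have s0 : (Int.fract x)⁻¹ = x1 := by
    rw [hfr, hfx]
    refine inv_eq_of_mul_eq_one_right ?_
    push_cast; rw [hx1]; field_simp; nlinarith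
  have s1 : (Int.fract x1)⁻¹ = x2 := by
    rw [hfr, hf1]
    refine inv_eq_of_mul_eq_one_right ?_
    rw [hx1, hx2d]; field_simp; nlinarith
  have s2 : (Int.fract x2)⁻¹ = x3 := by
    rw [hfr, hf2]
    refine inv_eq_of_mul_eq_one_right ?_
    rw [hx2d, hx3]; push_cast; field_simp; nlinarith
  have s3 : (Int.fract x3)⁻¹ = x4 := by
    rw [hfr, hf3]
    refine inv_eq_of_mul_eq_one_right ?_
    rw [hx3, hx4]; push_cast; field_simp; nlinarith
  have s4 : (Int.fract x4)⁻¹ = x5 := by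
    rw [hfr, hf4]
    refine inv_eq_of_mul_eq_one_right ?_
    rw [hx4, hx5]; field_simp; nlinarith
  have s5 : (Int.fract x5)⁻¹ = x1 := by
    rw [hfr, hf5]
    refine inv_eq_of_mul_eq_one_right ?_
    rw [hx5, hx1]; push_cast; field_simp; nlinarith
  set F : ℝ → ℝ := fun w : ℝ => (Int.fract w)⁻¹ with hF
  set y : ℕ → ℝ := fun r => [x1, x2, x3, x4, x5].getD r 0 with hy
  have horb : ∀ i : ℕ, F^[i + 1] x = y (i % 5) := by
    intro i
    induction i with
    | zero => simpa [hy] using s0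
    | succ k ih =>
      rw [Function.iterate_succ_apply', ih]
      have hk : k % 5 < 5 := Nat.mod_lt _ (by norm_num)
      have hk1 : (k + 1) % 5 = (k % 5 + 1) % 5 := by omega
      rw [hk1]
      interval_cases h : (k % 5) <;> simp only [hy, hF, List.getD] <;> simp [s1, s2, s3, s4, s5]
  -- fract nonzero along the orbit
  have hfrpos : ∀ i : ℕ, Int.fract (F^[i] x) ≠ 0 := by
    intro i
    match i with
    | 0 =>
      have : 0 < Int.fract x := by rw [hfr, hfx]; push_cast; linarith
      simp only [Function.iterate_zero_apply]; linarith
    | (k + 1) =>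
      rw [horb k]
      have hk : k % 5 < 5 := Nat.mod_lt _ (by norm_num)
      have : 0 < Int.fract (y (k % 5)) := by
        interval_cases h : (k % 5) <;>
          [(show 0 < Int.fract x1); (show 0 < Int.fract x2); (show 0 < Int.fract x3);
           (show 0 < Int.fract x4); (show 0 < Int.fract x5)] <;>
          rw [hfr] <;>
          [rw [hf1]; rw [hf2]; rw [hf3]; rw [hf4]; rw [hf5]] <;>
          push_cast <;>
          [linarith [hb1.1]; linarith [hb2'.1]; linarith [hb3.1]; linarith [hb4.1]; linarith [hb5.1]]
      linarith
  refine ⟨hfx, ?_⟩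
  intro i
  have key : (GenContFract.of x).s.get? i = some ⟨1, (⌊F^[i + 1] x⌋ : ℝ)⟩ := by
    rw [of_s_iterate i x]
    have hh := GenContFract.of_s_head (hfrpos i)
    have hhead : (GenContFract.of (F^[i] x)).s.get? 0 = (GenContFract.of (F^[i] x)).s.head := rfl
    rw [hhead, hh, Function.iterate_succ_apply', hF]
  have : (GenContFract.of x).partDens.get? i
      = ((GenContFract.of x).s.get? i).map GenContFract.Pair.b := by
    simp [GenContFract.partDens, Stream'.Seq.map_get?]
  rw [this, key]
  simp only [Option.map_some]
  congr 1
  rw [horb i]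
  have hk : i % 5 < 5 := Nat.mod_lt _ (by norm_num)
  interval_cases h : (i % 5) <;>
    [(show ((⌊x1⌋ : ℤ) : ℝ) = _); (show ((⌊x2⌋ : ℤ) : ℝ) = _); (show ((⌊x3⌋ : ℤ) : ℝ) = _);
     (show ((⌊x4⌋ : ℤ) : ℝ) = _); (show ((⌊x5⌋ : ℤ) : ℝ) = _)] <;>
    [rw [hf1]; rw [hf2]; rw [hf3]; rw [hf4]; rw [hf5]] <;> norm_num
end

section
/- For every integer n ≥ 1, the simple continued fraction expansion of √((2n+2)² + 4n + 1) is [2n+2; \overline{1, n, 2, n, 1, 4n+4}]. -/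
open GenContFract

private def PP (n : ℤ) (i : ℕ) : ℤ :=
  if i = 0 then 0 else [2*n+2, 2*n+2, 2*n-1, 2*n+1, 2*n+1, 2*n-1].getD (i % 6) 0

private def QQ (n : ℤ) (i : ℕ) : ℤ :=
  [1, 4*n+1, 4, 2*n+1, 4, 4*n+1].getD (i % 6) 0

private def AA (n : ℤ) (i : ℕ) : ℤ :=
  if i = 0 then 2*n+2 else [4*n+4, 1, n, 2, n, 1].getD (i % 6) 0

private lemma step_lemma (s : ℝ) (D p q a p' q' : ℤ)
    (hs : s ^ 2 = (D : ℝ)) (hq : (0:ℤ) < q) (hq' : (0:ℤ) < q')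
    (hp' : p' = a * q - p) (hqq' : q * q' = D - p' ^ 2)
    (hlow : (p' : ℝ) < s) (hhigh : s < (p' : ℝ) + (q : ℝ)) :
    ⌊(s + p)/q⌋ = a ∧ Int.fract ((s + p)/q) ≠ 0 ∧
      (Int.fract ((s + p)/q))⁻¹ = (s + p')/q' := by
  have hqR : (0:ℝ) < q := by exact_mod_cast hq
  have hq'R : (0:ℝ) < q' := by exact_mod_cast hq'
  have hp'R : (p' : ℝ) = a * q - p := by exact_mod_cast hp'
  have hqq'R : (q : ℝ) * q' = (D : ℝ) - (p' : ℝ) ^ 2 := by exact_mod_cast hqq'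
  have hfloor : ⌊(s + p)/q⌋ = a := by
    rw [Int.floor_eq_iff]
    constructor
    · rw [le_div_iff₀ hqR]; nlinarith
    · rw [div_lt_iff₀ hqR]; push_cast; nlinarith
  have hfract : Int.fract ((s + p)/q) = (s - p')/q := by
    rw [Int.fract, hfloor]
    field_simp
    linarith [hp'R]
  have hsp : (0:ℝ) < s - p' := by linarith
  refine ⟨hfloor, ?_, ?_⟩
  · rw [hfract]
    positivity
  · rw [hfract]
    rw [inv_div]
    rw [div_eq_div_iff hsp.ne' hq'R.ne']
    nlinarith
private lemma iter_lemma (n : ℤ) (hn : 1 ≤ n) (s : ℝ)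
    (hs : s ^ 2 = ((4*n^2 + 12*n + 5 : ℤ) : ℝ))
    (hlow : ((2*n+2 : ℤ) : ℝ) < s) (hhigh : s < ((2*n+3 : ℤ) : ℝ)) (i : ℕ) :
    ⌊(s + PP n i)/QQ n i⌋ = AA n i ∧ Int.fract ((s + PP n i)/QQ n i) ≠ 0 ∧
      (Int.fract ((s + PP n i)/QQ n i))⁻¹ = (s + PP n (i+1))/QQ n (i+1) := by
  push_cast at hlow hhigh
  have hnR : (1:ℝ) ≤ (n:ℝ) := by exact_mod_cast hn
  have h6 : i % 6 = 0 ∨ i % 6 = 1 ∨ i % 6 = 2 ∨ i % 6 = 3 ∨ i % 6 = 4 ∨ i % 6 = 5 := by omega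
  rcases h6 with h | h | h | h | h | h
  · -- p' = 2n+2, q' = 4n+1 ; next index mod 6 = 1
    have h1 : (i+1) % 6 = 1 := by omega
    by_cases h0 : i = 0
    · subst h0
      simpa [PP, QQ, AA, h1] using
        step_lemma s (4*n^2+12*n+5) 0 1 (2*n+2) (2*n+2) (4*n+1) hs (by norm_num)
          (by linarith) (by ring) (by ring) (by push_cast; linarith) (by push_cast; linarith)
    · simpa [PP, QQ, AA, h, h1, h0] using
        step_lemma s (4*n^2+12*n+5) (2*n+2) 1 (4*n+4) (2*n+2) (4*n+1) hs (by norm_num)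
          (by linarith) (by ring) (by ring) (by push_cast; linarith) (by push_cast; linarith)
  · have h0 : i ≠ 0 := by omega
    have h1 : (i+1) % 6 = 2 := by omega
    simpa [PP, QQ, AA, h, h1, h0] using
      step_lemma s (4*n^2+12*n+5) (2*n+2) (4*n+1) 1 (2*n-1) 4 hs (by linarith) (by norm_num)
        (by ring) (by ring) (by push_cast; linarith) (by push_cast; linarith)
  · have h0 : i ≠ 0 := by omega
    have h1 : (i+1) % 6 = 3 := by omega
    simpa [PP, QQ, AA, h, h1, h0] using
      step_lemma s (4*n^2+12*n+5) (2*n-1) 4 n (2*n+1) (2*n+1) hs (by norm_num) (by linarith)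
        (by ring) (by ring) (by push_cast; linarith) (by push_cast; linarith)
  · have h0 : i ≠ 0 := by omega
    have h1 : (i+1) % 6 = 4 := by omega
    simpa [PP, QQ, AA, h, h1, h0] using
      step_lemma s (4*n^2+12*n+5) (2*n+1) (2*n+1) 2 (2*n+1) 4 hs (by linarith) (by norm_num)
        (by ring) (by ring) (by push_cast; linarith) (by push_cast; linarith)
  · have h0 : i ≠ 0 := by omega
    have h1 : (i+1) % 6 = 5 := by omega
    simpa [PP, QQ, AA, h, h1, h0] using
      step_lemma s (4*n^2+12*n+5) (2*n+1) 4 n (2*n-1) (4*n+1) hs (by norm_num) (by linarith)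
        (by ring) (by ring) (by push_cast; linarith) (by push_cast; linarith)
  · have h0 : i ≠ 0 := by omega
    have h1 : (i+1) % 6 = 0 := by omega
    have h1' : i + 1 ≠ 0 := by omega
    simpa [PP, QQ, AA, h, h1, h0, h1'] using
      step_lemma s (4*n^2+12*n+5) (2*n-1) (4*n+1) 1 (2*n+2) 1 hs (by linarith) (by norm_num)
        (by ring) (by ring) (by push_cast; linarith) (by push_cast; linarith)

private lemma get_lemma (n : ℤ) (hn : 1 ≤ n) (s : ℝ)
    (hs : s ^ 2 = ((4*n^2 + 12*n + 5 : ℤ) : ℝ))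
    (hlow : ((2*n+2 : ℤ) : ℝ) < s) (hhigh : s < ((2*n+3 : ℤ) : ℝ)) :
    ∀ i j : ℕ, (GenContFract.of ((s + PP n j)/QQ n j)).s.get? i
      = some ⟨1, ((AA n (i + j + 1) : ℤ) : ℝ)⟩ := by
  intro i
  induction i with
  | zero =>
    intro j
    obtain ⟨_, hne, hinv⟩ := iter_lemma n hn s hs hlow hhigh j
    obtain ⟨hfl, _, _⟩ := iter_lemma n hn s hs hlow hhigh (j + 1)
    have hh : (GenContFract.of ((s + PP n j)/QQ n j)).s.get? 0
        = (GenContFract.of ((s + PP n j)/QQ n j)).s.head := rfl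
    rw [hh, GenContFract.of_s_head hne, hinv, hfl, show 0 + j + 1 = j + 1 by omega]
  | succ i ih =>
    intro j
    obtain ⟨_, hne, hinv⟩ := iter_lemma n hn s hs hlow hhigh j
    rw [GenContFract.of_s_succ, hinv,
      show i + 1 + j + 1 = i + (j + 1) + 1 by omega]
    exact ih (j+1)

theorem cf_period_six (n : ℤ) (hn : 1 ≤ n) :
    ⌊Real.sqrt (((2 * n + 2) ^ 2 + 4 * n + 1 : ℤ) : ℝ)⌋ = 2 * n + 2 ∧
    ∀ i : ℕ,
      (GenContFract.of (Real.sqrt (((2 * n + 2) ^ 2 + 4 * n + 1 : ℤ) : ℝ))).partDens.get? i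
        = some ((([1, n, 2, n, 1, 4 * n + 4] : List ℤ).getD (i % 6) 0 : ℝ)) := by
  set s := Real.sqrt (((2 * n + 2) ^ 2 + 4 * n + 1 : ℤ) : ℝ) with hsdef
  have hD : ((((2 * n + 2) ^ 2 + 4 * n + 1 : ℤ)) : ℝ) = ((4*n^2 + 12*n + 5 : ℤ) : ℝ) := by
    push_cast; ring
  have hDpos : (0:ℝ) ≤ (((2 * n + 2) ^ 2 + 4 * n + 1 : ℤ) : ℝ) := by
    rw [hD]; push_cast; nlinarith [sq_nonneg (n:ℝ), (by exact_mod_cast hn : (1:ℝ) ≤ (n:ℝ))]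
  have hs : s ^ 2 = ((4*n^2 + 12*n + 5 : ℤ) : ℝ) := by
    rw [hsdef, Real.sq_sqrt hDpos, hD]
  have hs0 : 0 ≤ s := Real.sqrt_nonneg _
  push_cast at hs
  have hnR : (1:ℝ) ≤ (n:ℝ) := by exact_mod_cast hn
  have hlow : ((2*n+2 : ℤ) : ℝ) < s := by push_cast; nlinarith [hnR, hs0, hs]
  have hhigh : s < ((2*n+3 : ℤ) : ℝ) := by push_cast; nlinarith [hnR, hs0, hs]
  have hs' : s ^ 2 = ((4*n^2 + 12*n + 5 : ℤ) : ℝ) := by push_cast; linarith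
  constructor
  · rw [Int.floor_eq_iff]
    push_cast at hlow hhigh ⊢
    constructor <;> linarith
  · intro i
    have hkey := get_lemma n hn s hs' hlow hhigh i 0
    have hP0 : PP n 0 = 0 := rfl
    have hQ0 : QQ n 0 = 1 := rfl
    rw [hP0, hQ0] at hkey
    norm_num at hkey
    unfold GenContFract.partDens
    rw [Stream'.Seq.map_get?, hkey]
    simp only [Option.map_some]
    congr 1
    have h6 : i % 6 = 0 ∨ i % 6 = 1 ∨ i % 6 = 2 ∨ i % 6 = 3 ∨ i % 6 = 4 ∨ i % 6 = 5 := by omega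
    have hA : AA n (i + 0 + 1) = ([1, n, 2, n, 1, 4 * n + 4] : List ℤ).getD (i % 6) 0 := by
      rcases h6 with h | h | h | h | h | h <;>
        · have h1 : (i + 0 + 1) % 6 = (i % 6 + 1) % 6 := by omega
          simp [AA, h1, h]
    rw [hA]
end

section
/- For every integer n ≥ 2, the simple continued fraction expansion of √(n² + 2n − 1) is [n; \overline{1, n−1, 1, 2n}]. -/
/-! With `x = √(n² + 2n - 1)`, so that `x² - n² = 2n - 1`, the complete quotients are
`x, (x + n)/(2n - 1), (x + n - 1)/2, (x + n - 1)/(2n - 1), x + n`, with integer parts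
`n, 1, n - 1, 1, 2n`. The last one has the same fractional part `x - n` as `x`, so from there on
the expansion repeats with period four. -/

open GenContFract

namespace GenContFract.IntFractPair

variable {K : Type*} [DivisionRing K] [LinearOrder K] [FloorRing K] {v : K}

theorem stream_succ_of_mul_eq_one [IsStrictOrderedRing K] {k : ℕ} {a b : ℤ} {f g : K}
    (hk : IntFractPair.stream v k = some ⟨a, f⟩) (hfg : f * (b + g) = 1) (hg₀ : 0 ≤ g)
    (hg₁ : g < 1) : IntFractPair.stream v (k + 1) = some ⟨b, g⟩ := by
  have hb : ⌊(b : K) + g⌋ = b := by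
    rw [Int.floor_intCast_add, Int.floor_eq_zero_iff.mpr ⟨hg₀, hg₁⟩, add_zero]
  rw [stream_succ_of_some hk (left_ne_zero_of_mul_eq_one hfg), inv_eq_of_mul_eq_one_right hfg]
  simp [IntFractPair.of, Int.fract, hb]

theorem stream_succ_eq_of_fr_eq {k m : ℕ} {a b : ℤ} {f : K}
    (hk : IntFractPair.stream v k = some ⟨a, f⟩) (hm : IntFractPair.stream v m = some ⟨b, f⟩) :
    IntFractPair.stream v (k + 1) = IntFractPair.stream v (m + 1) := by
  rw [IntFractPair.stream, IntFractPair.stream, hk, hm]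
  rfl

theorem stream_succ_eq_stream_mod_succ {ℓ : ℕ} {a b : ℤ} {f : K}
    (h₀ : IntFractPair.stream v 0 = some ⟨a, f⟩) (hℓ : IntFractPair.stream v ℓ = some ⟨b, f⟩)
    (i : ℕ) : IntFractPair.stream v (i + 1) = IntFractPair.stream v (i % ℓ + 1) := by
  have shift : ∀ j, IntFractPair.stream v (j + ℓ + 1) = IntFractPair.stream v (j + 1) := by
    intro j
    induction j with
    | zero => simpa using stream_succ_eq_of_fr_eq hℓ h₀
    | succ j ih =>
      rw [show j + 1 + ℓ + 1 = j + ℓ + 1 + 1 by omega, IntFractPair.stream, ih]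
      rfl
  conv_lhs => rw [← Nat.mod_add_div i ℓ]
  induction i / ℓ with
  | zero => rfl
  | succ q ih => rw [Nat.mul_succ, ← add_assoc, shift, ih]

end GenContFract.IntFractPair


section SqAddTwoMulSubOne

variable {K : Type*} [Field K] [LinearOrder K] [IsStrictOrderedRing K] [FloorRing K] {n : ℤ}
  {x : K}

theorem lt_and_lt_add_one_of_sq_eq (hn : 2 ≤ n) (hx : x ^ 2 = n ^ 2 + 2 * n - 1) (hx₀ : 0 ≤ x) :
    (n : K) < x ∧ x < n + 1 := by
  have hn' : (2 : K) ≤ n := by exact_mod_cast hn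
  constructor <;> nlinarith

theorem floor_eq_of_sq_eq (hn : 2 ≤ n) (hx : x ^ 2 = n ^ 2 + 2 * n - 1) (hx₀ : 0 ≤ x) :
    ⌊x⌋ = n := by
  obtain ⟨h₁, h₂⟩ := lt_and_lt_add_one_of_sq_eq hn hx hx₀
  exact Int.floor_eq_iff.mpr ⟨h₁.le, h₂⟩

theorem stream_zero_of_sq_eq (hn : 2 ≤ n) (hx : x ^ 2 = n ^ 2 + 2 * n - 1) (hx₀ : 0 ≤ x) :
    IntFractPair.stream x 0 = some ⟨n, x - n⟩ := by
  rw [IntFractPair.stream_zero, IntFractPair.of, Int.fract, floor_eq_of_sq_eq hn hx hx₀]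

theorem stream_one_of_sq_eq (hn : 2 ≤ n) (hx : x ^ 2 = n ^ 2 + 2 * n - 1) (hx₀ : 0 ≤ x) :
    IntFractPair.stream x 1 = some ⟨1, (x - n + 1) / (2 * n - 1)⟩ := by
  obtain ⟨h₁, h₂⟩ := lt_and_lt_add_one_of_sq_eq hn hx hx₀
  have hn' : (2 : K) ≤ n := by exact_mod_cast hn
  have hd : (0 : K) < 2 * n - 1 := by linarith
  refine IntFractPair.stream_succ_of_mul_eq_one (stream_zero_of_sq_eq hn hx hx₀) ?_
    (div_nonneg (by linarith) hd.le) ((div_lt_one hd).mpr (by linarith))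
  push_cast
  rw [one_add_div hd.ne', mul_div_assoc', div_eq_one_iff_eq hd.ne']
  linear_combination hx

theorem stream_two_of_sq_eq (hn : 2 ≤ n) (hx : x ^ 2 = n ^ 2 + 2 * n - 1) (hx₀ : 0 ≤ x) :
    IntFractPair.stream x 2 = some ⟨n - 1, (x - n + 1) / 2⟩ := by
  obtain ⟨h₁, h₂⟩ := lt_and_lt_add_one_of_sq_eq hn hx hx₀
  have hn' : (2 : K) ≤ n := by exact_mod_cast hn
  have hd : (2 : K) * n - 1 ≠ 0 := by linarith
  refine IntFractPair.stream_succ_of_mul_eq_one (stream_one_of_sq_eq hn hx hx₀) ?_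
    (div_nonneg (by linarith) zero_le_two) ((div_lt_one zero_lt_two).mpr (by linarith))
  push_cast
  rw [div_mul_eq_mul_div, div_eq_one_iff_eq hd]
  linear_combination hx / 2

theorem stream_three_of_sq_eq (hn : 2 ≤ n) (hx : x ^ 2 = n ^ 2 + 2 * n - 1) (hx₀ : 0 ≤ x) :
    IntFractPair.stream x 3 = some ⟨1, (x - n) / (2 * n - 1)⟩ := by
  obtain ⟨h₁, h₂⟩ := lt_and_lt_add_one_of_sq_eq hn hx hx₀
  have hn' : (2 : K) ≤ n := by exact_mod_cast hn
  have hd : (0 : K) < 2 * n - 1 := by linarith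
  refine IntFractPair.stream_succ_of_mul_eq_one (stream_two_of_sq_eq hn hx hx₀) ?_
    (div_nonneg (by linarith) hd.le) ((div_lt_one hd).mpr (by linarith))
  push_cast
  rw [one_add_div hd.ne', div_mul_div_comm, div_eq_one_iff_eq (mul_ne_zero two_ne_zero hd.ne')]
  linear_combination hx

theorem stream_four_of_sq_eq (hn : 2 ≤ n) (hx : x ^ 2 = n ^ 2 + 2 * n - 1) (hx₀ : 0 ≤ x) :
    IntFractPair.stream x 4 = some ⟨2 * n, x - n⟩ := by
  obtain ⟨h₁, h₂⟩ := lt_and_lt_add_one_of_sq_eq hn hx hx₀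
  have hn' : (2 : K) ≤ n := by exact_mod_cast hn
  have hd : (2 : K) * n - 1 ≠ 0 := by linarith
  refine IntFractPair.stream_succ_of_mul_eq_one (stream_three_of_sq_eq hn hx hx₀) ?_
    (by linarith) (by linarith)
  push_cast
  rw [div_mul_eq_mul_div, div_eq_one_iff_eq hd]
  linear_combination hx

end SqAddTwoMulSubOne

theorem cf_period_four (n : ℤ) (hn : 2 ≤ n) :
    ⌊Real.sqrt ((n ^ 2 + 2 * n - 1 : ℤ) : ℝ)⌋ = n ∧
    ∀ i : ℕ,
      (GenContFract.of (Real.sqrt ((n ^ 2 + 2 * n - 1 : ℤ) : ℝ))).partDens.get? i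
        = some ((([1, n - 1, 1, 2 * n] : List ℤ).getD (i % 4) 0 : ℝ)) := by
  set x := Real.sqrt ((n ^ 2 + 2 * n - 1 : ℤ) : ℝ)
  have hx₀ : 0 ≤ x := Real.sqrt_nonneg _
  have hx : x ^ 2 = n ^ 2 + 2 * n - 1 := by
    rw [Real.sq_sqrt (by exact_mod_cast (by nlinarith : (0 : ℤ) ≤ n ^ 2 + 2 * n - 1))]
    push_cast
    ring
  refine ⟨floor_eq_of_sq_eq hn hx hx₀, fun i => ?_⟩
  obtain ⟨p, hp, hb⟩ : ∃ p : IntFractPair ℝ, IntFractPair.stream x (i + 1) = some p ∧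
      p.b = ([1, n - 1, 1, 2 * n] : List ℤ).getD (i % 4) 0 := by
    rw [IntFractPair.stream_succ_eq_stream_mod_succ (stream_zero_of_sq_eq hn hx hx₀)
      (stream_four_of_sq_eq hn hx hx₀) i]
    have : i % 4 < 4 := Nat.mod_lt i (by norm_num)
    interval_cases i % 4
    · exact ⟨_, stream_one_of_sq_eq hn hx hx₀, rfl⟩
    · exact ⟨_, stream_two_of_sq_eq hn hx hx₀, rfl⟩
    · exact ⟨_, stream_three_of_sq_eq hn hx hx₀, rfl⟩
    · exact ⟨_, stream_four_of_sq_eq hn hx hx₀, rfl⟩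
  rw [partDen_eq_s_b (get?_of_eq_some_of_succ_get?_intFractPair_stream hp), hb]
end

section
/- For all integers m ≥ 2 and n ≥ 0, set a = (2m² − 1)n + 2m² − m − 1. Then the simple continued fraction expansion of √(a² + 4mn + 4m − 2) is [a; \overline{m−1, 1, 2m−1, a, 2m−1, 1, m−1, 2a}]. -/
set_option maxHeartbeats 2000000

lemma sqrt_step (D P Q b P' Q' : ℤ) (s : ℝ) (hs : s ^ 2 = (D : ℝ)) (hs0 : 0 ≤ s)
    (hQ : 0 < Q) (hQ' : 0 < Q') (hP'0 : 0 ≤ P') (hP' : P' = b * Q - P)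
    (hDQ : D = P' ^ 2 + Q * Q') (hub : Q' < Q + 2 * P') :
    ⌊((P : ℝ) + s) / (Q : ℝ)⌋ = b ∧ Int.fract (((P : ℝ) + s) / (Q : ℝ)) ≠ 0 ∧
      (Int.fract (((P : ℝ) + s) / (Q : ℝ)))⁻¹ = ((P' : ℝ) + s) / (Q' : ℝ) := by
  have hQR : (0:ℝ) < (Q:ℝ) := by exact_mod_cast hQ
  have hQ'R : (0:ℝ) < (Q':ℝ) := by exact_mod_cast hQ'
  have hP'R : (0:ℝ) ≤ (P':ℝ) := by exact_mod_cast hP'0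
  have hsD : s ^ 2 = (P':ℝ) ^ 2 + (Q:ℝ) * (Q':ℝ) := by
    rw [hs]; exact_mod_cast congrArg (fun z : ℤ => (z : ℝ)) hDQ
  have h1 : (P':ℝ) < s := by nlinarith [mul_pos hQR hQ'R]
  have hubR : (Q':ℝ) < (Q:ℝ) + 2 * (P':ℝ) := by exact_mod_cast hub
  have h2 : s < (P':ℝ) + Q := by nlinarith
  have hP'c : (P':ℝ) = (b:ℝ) * Q - P := by exact_mod_cast hP'
  have hfl : ⌊((P : ℝ) + s) / (Q : ℝ)⌋ = b := by
    rw [Int.floor_eq_iff]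
    constructor
    · rw [le_div_iff₀ hQR]; nlinarith
    · rw [div_lt_iff₀ hQR]; push_cast; nlinarith
  refine ⟨hfl, ?_, ?_⟩
  · rw [Int.fract, hfl]
    have : 0 < ((P : ℝ) + s) / (Q : ℝ) - (b:ℝ) := by
      rw [lt_sub_iff_add_lt, zero_add, lt_div_iff₀ hQR]; nlinarith
    linarith
  · rw [Int.fract, hfl]
    have hne : ((P : ℝ) + s) / (Q : ℝ) - (b:ℝ) = (s - P') / Q := by
      field_simp; linarith [hP'c]
    rw [hne]
    rw [inv_div]
    have hsp : (0:ℝ) < s - (P':ℝ) := by linarith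
    rw [div_eq_div_iff hsp.ne' hQ'R.ne']
    nlinarith [hsD]

def cfA (m n : ℤ) : ℤ := (2 * m ^ 2 - 1) * n + 2 * m ^ 2 - m - 1

def cfPL (m n : ℤ) : List ℤ :=
  [cfA m n, 2*m^2*n + 2*m^2 - 4*m*n - 5*m + n + 3, 2*m^2*n + 2*m^2 - 2*m*n - 3*m + n + 2,
   cfA m n, cfA m n, 2*m^2*n + 2*m^2 - 2*m*n - 3*m + n + 2,
   2*m^2*n + 2*m^2 - 4*m*n - 5*m + n + 3, cfA m n]

def cfQL (m n : ℤ) : List ℤ :=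
  [4*m*n + 4*m - 2, 4*m^2*n + 4*m^2 - 6*m*n - 8*m + 2*n + 5, 2*m*n + 2*m - 1, 2,
   2*m*n + 2*m - 1, 4*m^2*n + 4*m^2 - 6*m*n - 8*m + 2*n + 5, 4*m*n + 4*m - 2, 1]

def cfBL (m n : ℤ) : List ℤ :=
  [m - 1, 1, 2*m - 1, cfA m n, 2*m - 1, 1, m - 1, 2 * cfA m n]

def cfP (m n : ℤ) : ℕ → ℤ
  | 0 => 0
  | j + 1 => (cfPL m n).getD (j % 8) 0

def cfQ (m n : ℤ) : ℕ → ℤ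
  | 0 => 1
  | j + 1 => (cfQL m n).getD (j % 8) 0

def cfB (m n : ℤ) : ℕ → ℤ
  | 0 => cfA m n
  | j + 1 => (cfBL m n).getD (j % 8) 0

noncomputable def cfXi (m n : ℤ) (s : ℝ) (k : ℕ) : ℝ :=
  ((cfP m n k : ℝ) + s) / (cfQ m n k : ℝ)

lemma cf_step (m n : ℤ) (hm : 2 ≤ m) (hn : 0 ≤ n) (s : ℝ)
    (hs : s ^ 2 = (((cfA m n) ^ 2 + 4*m*n + 4*m - 2 : ℤ) : ℝ)) (hs0 : 0 ≤ s) (k : ℕ) :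
    ⌊cfXi m n s k⌋ = cfB m n k ∧ Int.fract (cfXi m n s k) ≠ 0 ∧
      (Int.fract (cfXi m n s k))⁻¹ = cfXi m n s (k + 1) := by
  have e1 : (0:ℤ) ≤ (m - 2) * n := mul_nonneg (by linarith) hn
  have e2 : (0:ℤ) ≤ m * n := mul_nonneg (by linarith) hn
  have e3 : (0:ℤ) ≤ m ^ 2 * n := mul_nonneg (by positivity) hn
  have e4 : (0:ℤ) ≤ (4 * m - 1) * ((m - 2) * n) := mul_nonneg (by linarith) e1
  have e5 : (0:ℤ) ≤ (m - 2) ^ 2 := sq_nonneg _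
  have e6 : (0:ℤ) ≤ (m - 1) ^ 2 := sq_nonneg _
  have hA : 0 ≤ cfA m n := by simp only [cfA]; nlinarith
  cases k with
  | zero =>
    simp only [cfXi, cfP, cfQ, cfB, cfPL, cfQL, cfBL, Nat.zero_mod,
      List.getD_cons_zero]
    exact sqrt_step _ 0 1 (cfA m n) (cfA m n) (4*m*n + 4*m - 2) s hs hs0 (by norm_num)
      (by nlinarith) hA (by ring) (by ring) (by simp only [cfA]; nlinarith)
  | succ j =>
    have h8 : j % 8 = 0 ∨ j % 8 = 1 ∨ j % 8 = 2 ∨ j % 8 = 3 ∨ j % 8 = 4 ∨ j % 8 = 5 ∨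
        j % 8 = 6 ∨ j % 8 = 7 := by omega
    have h' : (j + 1) % 8 = (j % 8 + 1) % 8 := by omega
    rcases h8 with h | h | h | h | h | h | h | h <;>
      rw [h] at h' <;> norm_num at h' <;>
      simp only [cfXi, cfP, cfQ, cfB, h, h', cfPL, cfQL, cfBL, cfA,
        List.getD_cons_zero, List.getD_cons_succ] <;>
      exact sqrt_step ((cfA m n) ^ 2 + 4*m*n + 4*m - 2) _ _ _ _ _ s hs hs0
        (by nlinarith) (by nlinarith) (by nlinarith) (by ring)
        (by simp only [cfA]; ring) (by nlinarith)

theorem cf_period_eight (m n a : ℤ) (hm : 2 ≤ m) (hn : 0 ≤ n)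
    (ha : a = (2 * m ^ 2 - 1) * n + 2 * m ^ 2 - m - 1) :
    ⌊Real.sqrt ((a ^ 2 + 4 * m * n + 4 * m - 2 : ℤ) : ℝ)⌋ = a ∧
    ∀ i : ℕ,
      (GenContFract.of (Real.sqrt ((a ^ 2 + 4 * m * n + 4 * m - 2 : ℤ) : ℝ))).partDens.get? i
        = some ((([m - 1, 1, 2 * m - 1, a, 2 * m - 1, 1, m - 1, 2 * a] : List ℤ).getD (i % 8) 0 : ℝ)) := by
  subst ha
  set s := Real.sqrt (((((2 * m ^ 2 - 1) * n + 2 * m ^ 2 - m - 1) : ℤ) ^ 2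
      + 4 * m * n + 4 * m - 2 : ℤ) : ℝ) with hsdef
  have hD0 : (0:ℤ) ≤ ((2 * m ^ 2 - 1) * n + 2 * m ^ 2 - m - 1) ^ 2 + 4 * m * n + 4 * m - 2 := by
    nlinarith [sq_nonneg ((2 * m ^ 2 - 1) * n + 2 * m ^ 2 - m - 1), mul_nonneg (by linarith : (0:ℤ) ≤ m) hn]
  have hs : s ^ 2 = (((cfA m n) ^ 2 + 4*m*n + 4*m - 2 : ℤ) : ℝ) := by
    rw [hsdef, Real.sq_sqrt (by exact_mod_cast hD0)]
    norm_num [cfA]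
  have hs0 : 0 ≤ s := Real.sqrt_nonneg _
  have hstep := cf_step m n hm hn s hs hs0
  have hx : s = cfXi m n s 0 := by simp [cfXi, cfP, cfQ]
  have hstream : ∀ k, GenContFract.IntFractPair.stream s k
      = some (GenContFract.IntFractPair.of (cfXi m n s k)) := by
    intro k
    induction k with
    | zero => rw [GenContFract.IntFractPair.stream_zero, ← hx]
    | succ k ih =>
      obtain ⟨h1, h2, h3⟩ := hstep k
      have hfr : (GenContFract.IntFractPair.of (cfXi m n s k)).fr = Int.fract (cfXi m n s k) := rfl
      have := GenContFract.IntFractPair.stream_succ_of_some ih (by rw [hfr]; exact h2)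
      rw [this, hfr, h3]
  constructor
  · have := (hstep 0).1
    rw [← hx] at this
    simpa [cfB, cfA] using this
  · intro i
    have hsg := GenContFract.get?_of_eq_some_of_succ_get?_intFractPair_stream (hstream (i + 1))
    have hb : (GenContFract.IntFractPair.of (cfXi m n s (i + 1))).b = ⌊cfXi m n s (i + 1)⌋ := rfl
    rw [GenContFract.partDens, Stream'.Seq.map_get?, hsg]
    simp only [Option.map_some, GenContFract.Pair.b, hb, (hstep (i + 1)).1]
    norm_num
    simp [cfB, cfBL, cfA]
end

section
/- Let (p_k) with p_0 = 1, p_1 = 1 and p_{k+1} = 2 p_k + p_{k-1} (k ≥ 1) be the numerators of the convergents of √2. For all integers k ≥ 1 and n ≥ 1, the simple continued fraction expansion of √((p_{k+1} n + 1)² + 2 p_k n + 1) is [p_{k+1} n + 1; \overline{2, 2, …, 2 (k twos), 1, p_{k+1} n, 1, 2, 2, …, 2 (k twos), 2(p_{k+1} n + 1)}]; that is, the period of length 2k+4 consists of the quotient 2 repeated k times, then 1, then p_{k+1} n, then 1, then 2 repeated k times, then 2(p_{k+1} n + 1). -/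
/-!
Put `a₀ = p_{k+1} n + 1`, `D = a₀² + 2 p_k n + 1` and `z = 1 / (√D - a₀)`. Since
`a₀² < D < (a₀ + 1)²`, we have `√D = a₀ + 1 / z` with `z > 1`. If a list `R` of positive integers
satisfies `z = [R; z]`, the complete quotients of `a₀ + 1 / z` run through the tails of `R`, so
its partial quotients are `R` repeated. For `R = L ++ [2 a₀]` this fixed-point equation says
`z = [L; a₀ + √D]`. Evaluating `[L; t]` as the Möbius transformation of the continuant matrix `M`
of `L`, it becomes `M₁₀ = M₀₁` together with `M₀₀ (D - a₀²) = 2 a₀ M₀₁ + M₁₁`. For the palindrome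
`L = 2ᵏ, 1, p_{k+1} n, 1, 2ᵏ` we have `M = A N A`, with `N` the continuant matrix of
`1, p_{k+1} n, 1` and `A = (2 1; 1 0)ᵏ = (a b; b c)`, where `a = 2b + c`, `p_{k+1} = a + b` and
`p_k = b + c`. The second condition is then a ring identity in `b`, `c`, `n`.
-/

open Matrix

section ContinuedFractionValues

variable {K : Type*} [Field K]

/-- `cfValue [a₁, …, aₘ] t = [a₁; a₂, …, aₘ, t] = a₁ + 1 / (a₂ + ⋯ + 1 / (aₘ + 1 / t))`. -/
def cfValue (L : List ℤ) (t : K) : K := L.foldr (fun (a : ℤ) s => (a : K) + s⁻¹) t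

@[simp] lemma cfValue_nil (t : K) : cfValue [] t = t := rfl

@[simp] lemma cfValue_cons (a : ℤ) (L : List ℤ) (t : K) :
    cfValue (a :: L) t = a + (cfValue L t)⁻¹ := rfl

lemma cfValue_append (L₁ L₂ : List ℤ) (t : K) :
    cfValue (L₁ ++ L₂) t = cfValue L₁ (cfValue L₂ t) := List.foldr_append

lemma cfValue_drop (R : List ℤ) {r : ℕ} (hr : r < R.length) (t : K) :
    cfValue (R.drop r) t = R.getD r 0 + (cfValue (R.drop (r + 1)) t)⁻¹ := by
  rw [List.drop_eq_getElem_cons hr, cfValue_cons, List.getD_eq_getElem _ _ hr]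

def cfMatrix (a : ℤ) : Matrix (Fin 2) (Fin 2) ℤ := !![a, 1; 1, 0]

lemma cfMatrix_mulVec (a x y : ℤ) : cfMatrix a *ᵥ ![x, y] = ![a * x + y, x] := by
  ext i; fin_cases i <;> simp [cfMatrix, mul_comm]

lemma cfMatrix_mul (a : ℤ) (M : Matrix (Fin 2) (Fin 2) ℤ) :
    cfMatrix a * M = !![a * M 0 0 + M 1 0, a * M 0 1 + M 1 1; M 0 0, M 0 1] := by
  rw [M.eta_fin_two]; simp [cfMatrix]

def mobius (M : Matrix (Fin 2) (Fin 2) ℤ) (t : K) : K :=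
  (M 0 0 * t + M 0 1) / (M 1 0 * t + M 1 1)

variable [LinearOrder K] [IsStrictOrderedRing K]

lemma cfValue_eq_mobius {L : List ℤ} (hL : ∀ a ∈ L, 0 ≤ a) {t : K} (ht : 0 < t) :
    cfValue L t = mobius (L.map cfMatrix).prod t := by
  suffices ∀ M : Matrix (Fin 2) (Fin 2) ℤ, (L.map cfMatrix).prod = M →
      0 < M 0 0 * t + M 0 1 ∧ 0 < M 1 0 * t + M 1 1 ∧ cfValue L t = mobius M t from
    (this _ rfl).2.2
  induction L with
  | nil =>
    rintro M rfl
    simp [mobius, ht]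
  | cons a L ih =>
    rintro _ rfl
    obtain ⟨hnum, hden, hval⟩ := ih (fun b hb => hL b (List.mem_cons_of_mem a hb)) _ rfl
    have ha : (0 : K) ≤ a := by exact_mod_cast hL a List.mem_cons_self
    rw [List.map_cons, List.prod_cons, cfMatrix_mul]
    simp only [mobius] at hval ⊢
    simp only [of_apply, cons_val', cons_val_zero, cons_val_one, cons_val_fin_one, Int.cast_add,
      Int.cast_mul, cfValue_cons, hval]
    refine ⟨by nlinarith, hnum, ?_⟩
    field_simp
    ring

lemma one_lt_cfValue {L : List ℤ} (hL : ∀ a ∈ L, 1 ≤ a) {t : K} (ht : 1 < t) :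
    1 < cfValue L t := by
  induction L with
  | nil => exact ht
  | cons a L ih =>
    have ha : (1 : K) ≤ a := by exact_mod_cast hL a List.mem_cons_self
    have hpos : 0 < (cfValue L t)⁻¹ :=
      inv_pos.2 (zero_lt_one.trans (ih fun b hb => hL b (List.mem_cons_of_mem a hb)))
    rw [cfValue_cons]
    linarith

variable [FloorRing K]

lemma floor_add_inv_of_one_lt (a : ℤ) {y : K} (hy : 1 < y) : ⌊(a : K) + y⁻¹⌋ = a := by
  have h₀ : 0 < y⁻¹ := inv_pos.2 (zero_lt_one.trans hy)
  have h₁ : y⁻¹ < 1 := inv_lt_one_of_one_lt₀ hy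
  rw [Int.floor_eq_iff]
  constructor <;> linarith

lemma fract_add_inv_of_one_lt (a : ℤ) {y : K} (hy : 1 < y) :
    Int.fract ((a : K) + y⁻¹) = y⁻¹ := by
  rw [Int.fract, floor_add_inv_of_one_lt a hy, add_sub_cancel_left]

namespace GenContFract

lemma partDens_of_eq_add_inv (a : ℕ → ℤ) (y : ℕ → K)
    (hy : ∀ i, y i = a i + (y (i + 1))⁻¹) (hy₁ : ∀ i, 1 < y (i + 1)) (i : ℕ) :
    (GenContFract.of (y 0)).partDens.get? i = some (a (i + 1) : K) := by
  have hfract : ∀ t, Int.fract (y t) = (y (t + 1))⁻¹ := fun t => by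
    rw [hy t]; exact fract_add_inv_of_one_lt _ (hy₁ t)
  have hs : ∀ i t, (GenContFract.of (y t)).s.get? i = some ⟨1, (a (t + i + 1) : K)⟩ := by
    intro i
    induction i with
    | zero =>
      intro t
      have hne : Int.fract (y t) ≠ 0 := by
        rw [hfract t]; exact inv_ne_zero (zero_lt_one.trans (hy₁ t)).ne'
      change (GenContFract.of (y t)).s.head = _
      rw [of_s_head hne, hfract t, inv_inv, hy (t + 1), floor_add_inv_of_one_lt _ (hy₁ _)]
    | succ i ih =>
      intro t
      rw [of_s_succ, hfract t, inv_inv, ih (t + 1), show t + 1 + i + 1 = t + (i + 1) + 1 by omega]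
  rw [partDens, Stream'.Seq.map_get?, hs i 0, zero_add]
  rfl

lemma partDens_of_add_inv_of_cfValue_eq_self {R : List ℤ} (hR₀ : R ≠ []) (hR : ∀ a ∈ R, 1 ≤ a)
    {z : K} (hz : 1 < z) (hfix : cfValue R z = z) (a₀ : ℤ) (i : ℕ) :
    (GenContFract.of ((a₀ : K) + z⁻¹)).partDens.get? i
      = some (R.getD (i % R.length) 0 : K) := by
  have hl : 0 < R.length := List.length_pos_iff.2 hR₀
  let y : ℕ → K := fun
    | 0 => a₀ + z⁻¹
    | i + 1 => cfValue (R.drop (i % R.length)) z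
  let a : ℕ → ℤ := fun
    | 0 => a₀
    | i + 1 => R.getD (i % R.length) 0
  have hdrop_succ : ∀ i, cfValue (R.drop (i % R.length + 1)) z
      = cfValue (R.drop ((i + 1) % R.length)) z := by
    intro i
    rw [← Nat.mod_add_mod]
    have h : i % R.length + 1 ≤ R.length := Nat.mod_lt i hl
    rcases h.lt_or_eq with h | h
    · rw [Nat.mod_eq_of_lt h]
    · rw [h, Nat.mod_self, List.drop_length, List.drop_zero, cfValue_nil, hfix]
  refine partDens_of_eq_add_inv a y (fun i => ?_) (fun i => ?_) i
  · cases i with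
    | zero => simp [y, a, hfix]
    | succ i => exact (cfValue_drop R (Nat.mod_lt i hl) z).trans (by rw [hdrop_succ])
  · exact one_lt_cfValue (fun b hb => hR b (List.mem_of_mem_drop hb)) hz

end GenContFract

end ContinuedFractionValues

lemma cfMatrix_two_pow_mulVec (p : ℕ → ℤ) (hp0 : p 0 = 1) (hp1 : p 1 = 1)
    (hp : ∀ j : ℕ, 1 ≤ j → p (j + 1) = 2 * p j + p (j - 1)) (k : ℕ) :
    cfMatrix 2 ^ k *ᵥ ![1, 1] = ![p (k + 1), p k] := by
  induction k with
  | zero => simp [hp0, hp1]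
  | succ k ih =>
    rw [pow_succ', ← mulVec_mulVec, ih, cfMatrix_mulVec, hp (k + 1) (by omega), Nat.add_sub_cancel]

lemma exists_cfMatrix_two_pow (k : ℕ) :
    ∃ a b c : ℕ, 0 < a ∧ a = 2 * b + c ∧ cfMatrix 2 ^ k = !![(a : ℤ), b; b, c] := by
  induction k with
  | zero => exact ⟨1, 0, 1, one_pos, rfl, by simp [one_fin_two]⟩
  | succ k ih =>
    obtain ⟨a, b, c, ha, habc, h⟩ := ih
    refine ⟨2 * a + b, a, b, by omega, by omega, ?_⟩
    rw [pow_succ', h, cfMatrix_mul]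
    simp [habc]

lemma mobius_eq_inv_sqrt_sub {M : Matrix (Fin 2) (Fin 2) ℤ} {a₀ D : ℤ} (hsymm : M 1 0 = M 0 1)
    (hM : M 0 0 * (D - a₀ ^ 2) = 2 * a₀ * M 0 1 + M 1 1) (hD : 0 ≤ D)
    (hnum : (M 0 0 * (a₀ + √D) + M 0 1 : ℝ) ≠ 0) :
    mobius M ((a₀ : ℝ) + √D) = (√D - a₀)⁻¹ := by
  have hs : √(D : ℝ) ^ 2 = D := Real.sq_sqrt (Int.cast_nonneg hD)
  have hMR : (M 0 0 * (D - a₀ ^ 2) : ℝ) = 2 * a₀ * M 0 1 + M 1 1 := by exact_mod_cast hM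
  have hsymmR : (M 1 0 : ℝ) = M 0 1 := by exact_mod_cast hsymm
  rw [mobius, ← inv_div, _root_.inv_inj, div_eq_iff hnum]
  linear_combination -(M 0 0 : ℝ) * hs - hMR + ((a₀ : ℝ) + √D) * hsymmR

lemma period_matrix_relations {a b c P Q n : ℤ} (habc : a = 2 * b + c) (hP : P = a + b)
    (hQ : Q = b + c) {M : Matrix (Fin 2) (Fin 2) ℤ}
    (hM : M = !![a, b; b, c] * (cfMatrix 1 * cfMatrix (P * n) * cfMatrix 1) * !![a, b; b, c]) :
    M 1 0 = M 0 1 ∧ M 0 0 * (2 * Q * n + 1) = 2 * (P * n + 1) * M 0 1 + M 1 1 := by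
  subst hM hP hQ habc
  simp only [cfMatrix, mul_fin_two, of_apply, cons_val', cons_val_zero, cons_val_one,
    cons_val_fin_one]
  constructor <;> ring

lemma one_le_of_mem_period {k : ℕ} {m a x : ℤ} (hm : 1 ≤ m) (ha : 1 ≤ a)
    (hx : x ∈ List.replicate k 2 ++ [1, m, 1] ++ List.replicate k 2 ++ [a]) : 1 ≤ x := by
  simp only [List.mem_append, List.mem_replicate, List.mem_cons, List.not_mem_nil] at hx
  rcases hx with (((⟨-, rfl⟩ | rfl | rfl | rfl | h) | ⟨-, rfl⟩) | rfl | h) <;>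
    first | omega | simp at h

lemma cfValue_period_fixes_inv_sqrt_sub {k a b c : ℕ} (habc : a = 2 * b + c)
    (hT : cfMatrix 2 ^ k = !![(a : ℤ), b; b, c]) {P Q n a₀ D : ℤ} (hP : P = a + b)
    (hQ : Q = b + c) (hn : 0 ≤ n) (hm : 1 ≤ P * n) (ha₀ : a₀ = P * n + 1)
    (hD : D = a₀ ^ 2 + 2 * Q * n + 1) :
    cfValue (List.replicate k 2 ++ [1, P * n, 1] ++ List.replicate k 2 ++ [2 * a₀])
      (√(D : ℝ) - a₀)⁻¹ = (√(D : ℝ) - a₀)⁻¹ := by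
  set L := List.replicate k (2 : ℤ) ++ [1, P * n, 1] ++ List.replicate k 2
  have hL : ∀ x ∈ L, 1 ≤ x := fun x hx =>
    one_le_of_mem_period hm le_rfl (List.mem_append_left [1] hx)
  have hw : 1 < (a₀ : ℝ) + √D := by
    have : (1 : ℝ) ≤ P * n := by exact_mod_cast hm
    have := Real.sqrt_nonneg (D : ℝ)
    rw [ha₀]; push_cast; linarith
  have hlast : cfValue [2 * a₀] (√(D : ℝ) - a₀)⁻¹ = a₀ + √D := by
    simp only [cfValue_cons, cfValue_nil, inv_inv]; push_cast; ring
  have hval := cfValue_eq_mobius (fun x hx => zero_le_one.trans (hL x hx)) (zero_lt_one.trans hw)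
  have hpos : 0 < mobius (L.map cfMatrix).prod ((a₀ : ℝ) + √D) :=
    hval ▸ zero_lt_one.trans (one_lt_cfValue hL hw)
  have hprod : (L.map cfMatrix).prod = !![(a : ℤ), b; b, c] *
      (cfMatrix 1 * cfMatrix (P * n) * cfMatrix 1) * !![(a : ℤ), b; b, c] := by
    simp [L, List.prod_replicate, hT, Matrix.mul_assoc]
  obtain ⟨hsymm, hM⟩ := period_matrix_relations (by exact_mod_cast habc) hP hQ hprod
  rw [cfValue_append, hlast, hval]
  refine mobius_eq_inv_sqrt_sub hsymm ?_ ?_ (div_ne_zero_iff.1 hpos.ne').1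
  · rw [hD, ha₀]; linear_combination hM
  · rw [hD, hQ]; positivity

lemma one_lt_inv_sqrt_sub {a₀ D : ℤ} (h₁ : a₀ ^ 2 < D) (h₂ : D < (a₀ + 1) ^ 2) :
    1 < (√(D : ℝ) - a₀)⁻¹ := by
  have ha₀ : 0 ≤ a₀ := by nlinarith
  have hlt : (a₀ : ℝ) < √(D : ℝ) := by
    rw [Real.lt_sqrt (by positivity)]; exact_mod_cast h₁
  have hgt : √(D : ℝ) < a₀ + 1 := by
    rw [Real.sqrt_lt' (by positivity)]; exact_mod_cast h₂
  exact (one_lt_inv₀ (by linarith)).2 (by linarith)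

theorem cf_repeated_twos_general
    (p : ℕ → ℤ)
    (hp0 : p 0 = 1) (hp1 : p 1 = 1)
    (hp : ∀ j : ℕ, 1 ≤ j → p (j + 1) = 2 * p j + p (j - 1))
    (k : ℕ) (n : ℤ) (hn : 1 ≤ n) :
    ⌊Real.sqrt (((p (k + 1) * n + 1) ^ 2 + 2 * p k * n + 1 : ℤ) : ℝ)⌋ = p (k + 1) * n + 1 ∧
    ∀ i : ℕ,
      (GenContFract.of
          (Real.sqrt (((p (k + 1) * n + 1) ^ 2 + 2 * p k * n + 1 : ℤ) : ℝ))).partDens.get? i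
        = some (((List.replicate k (2 : ℤ) ++ [1, p (k + 1) * n, 1]
            ++ List.replicate k (2 : ℤ) ++ [2 * (p (k + 1) * n + 1)]).getD
              (i % (2 * k + 4)) 0 : ℝ)) := by
  obtain ⟨a, b, c, ha, habc, hT⟩ := exists_cfMatrix_two_pow k
  have hpk := cfMatrix_two_pow_mulVec p hp0 hp1 hp k
  rw [hT] at hpk
  have hP : p (k + 1) = a + b := by simpa using (congrFun hpk 0).symm
  have hQ : p k = b + c := by simpa using (congrFun hpk 1).symm
  have hm : 1 ≤ p (k + 1) * n := by nlinarith
  set a₀ := p (k + 1) * n + 1 with ha₀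
  set D := a₀ ^ 2 + 2 * p k * n + 1 with hD
  have hz := one_lt_inv_sqrt_sub (a₀ := a₀) (D := D) (by nlinarith) (by nlinarith)
  have hfix := cfValue_period_fixes_inv_sqrt_sub habc hT hP hQ (by omega) hm ha₀ hD
  have hlen : (List.replicate k (2 : ℤ) ++ [1, p (k + 1) * n, 1] ++ List.replicate k 2
      ++ [2 * a₀]).length = 2 * k + 4 := by
    simp only [List.length_append, List.length_replicate, List.length_cons, List.length_nil]
    omega
  rw [show √(D : ℝ) = a₀ + ((√(D : ℝ) - a₀)⁻¹)⁻¹ by rw [inv_inv]; ring, ← hlen]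
  exact ⟨floor_add_inv_of_one_lt a₀ hz, GenContFract.partDens_of_add_inv_of_cfValue_eq_self
    (by simp) (fun x hx => one_le_of_mem_period hm (by omega) hx) hz hfix a₀⟩

theorem cf_repeated_twos
    (p : ℕ → ℤ)
    (hp0 : p 0 = 1) (hp1 : p 1 = 1)
    (hp : ∀ j : ℕ, 1 ≤ j → p (j + 1) = 2 * p j + p (j - 1))
    (k : ℕ) (hk : 1 ≤ k) (n : ℤ) (hn : 1 ≤ n) :
    ⌊Real.sqrt (((p (k + 1) * n + 1) ^ 2 + 2 * p k * n + 1 : ℤ) : ℝ)⌋ = p (k + 1) * n + 1 ∧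
    ∀ i : ℕ,
      (GenContFract.of
          (Real.sqrt (((p (k + 1) * n + 1) ^ 2 + 2 * p k * n + 1 : ℤ) : ℝ))).partDens.get? i
        = some (((List.replicate k (2 : ℤ) ++ [1, p (k + 1) * n, 1]
            ++ List.replicate k (2 : ℤ) ++ [2 * (p (k + 1) * n + 1)]).getD
              (i % (2 * k + 4)) 0 : ℝ)) :=
  cf_repeated_twos_general p hp0 hp1 hp k n hn
end

section
/- Let (A_k) and (B_k) be defined by A_0 = 1, A_1 = 3, A_{k+1} = 4 A_k − A_{k-1}, and B_0 = 0, B_1 = 1, B_{k+1} = 4 B_k − B_{k-1}. For all integers k ≥ 1 and n ≥ 1, the simple continued fraction expansion of √((A_k n + 1)² + 2(2 B_k n + 1)) is [A_k n + 1; \overline{(1, 2) repeated k times, A_k n + 1, (2, 1) repeated k times, 2(A_k n + 1)}]; that is, the period of length 4k+2 consists of the pair (1, 2) repeated k times, then the central quotient A_k n + 1, then the pair (2, 1) repeated k times, then 2(A_k n + 1). -/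
open GenContFract

private lemma repTwo_length (x y : ℤ) (k : ℕ) :
    ((List.replicate k [x, y]).flatten).length = 2 * k := by
  induction k with
  | zero => simp
  | succ k ih =>
    rw [List.replicate_succ, List.flatten_cons, List.length_append, ih]
    simp; omega

private lemma repTwo_getD (x y : ℤ) : ∀ (k j : ℕ), j < 2 * k →
    ((List.replicate k [x, y]).flatten).getD j 0 = if j % 2 = 0 then x else y := by
  intro k
  induction k with
  | zero => intro j h; omega
  | succ k ih =>
    intro j h
    rw [List.replicate_succ, List.flatten_cons]
    match j with
    | 0 => rfl
    | 1 => rfl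
    | (j+2) =>
      show (x :: y :: (List.replicate k [x, y]).flatten).getD (j+2) 0 = _
      rw [List.getD_cons_succ, List.getD_cons_succ, ih j (by omega)]
      have e : (j+2) % 2 = j % 2 := by omega
      rw [e]

private lemma stream_of_seq (x : ℝ) (a : ℕ → ℤ) (g : ℕ → ℝ) (h0 : g 0 = x)
    (hlt : ∀ i, (a i : ℝ) < g i) (hub : ∀ i, g i < a i + 1)
    (hrec : ∀ i, (g i - a i) * g (i + 1) = 1) :
    ∀ i, IntFractPair.stream x i = some ⟨a i, g i - a i⟩ := by
  have hfl : ∀ i, ⌊g i⌋ = a i := by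
    intro i
    rw [Int.floor_eq_iff]
    exact ⟨(hlt i).le, by exact_mod_cast hub i⟩
  have hfr : ∀ i, Int.fract (g i) = g i - a i := by
    intro i; rw [Int.fract, hfl i]
  have hne : ∀ i, g i - (a i : ℝ) ≠ 0 := by
    intro i
    have := hlt i
    intro h; rw [sub_eq_zero] at h; rw [h] at this; exact lt_irrefl _ this
  have hofg : ∀ i, IntFractPair.of (g i) = ⟨a i, g i - a i⟩ := by
    intro i; unfold IntFractPair.of; rw [hfl i, hfr i]
  intro i
  induction i with
  | zero => rw [IntFractPair.stream_zero, ← h0, hofg 0]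
  | succ i ih =>
    have h1 : (⟨a i, g i - (a i : ℝ)⟩ : IntFractPair ℝ).fr ≠ 0 := hne i
    rw [IntFractPair.stream_succ_of_some ih h1]
    have h2 : ((⟨a i, g i - (a i : ℝ)⟩ : IntFractPair ℝ).fr)⁻¹ = g (i + 1) := by
      show (g i - (a i : ℝ))⁻¹ = g (i + 1)
      exact inv_eq_of_mul_eq_one_right (hrec i)
    rw [h2, hofg (i + 1)]

private lemma partDens_of_seq (x : ℝ) (a : ℕ → ℤ) (g : ℕ → ℝ) (h0 : g 0 = x)
    (hlt : ∀ i, (a i : ℝ) < g i) (hub : ∀ i, g i < a i + 1)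
    (hrec : ∀ i, (g i - a i) * g (i + 1) = 1) (i : ℕ) :
    (GenContFract.of x).partDens.get? i = some ((a (i + 1) : ℝ)) := by
  have hs := stream_of_seq x a g h0 hlt hub hrec (i + 1)
  have h2 := get?_of_eq_some_of_succ_get?_intFractPair_stream hs
  show ((GenContFract.of x).s.map Pair.b).get? i = _
  rw [Stream'.Seq.map_get?, h2]
  rfl

private lemma floor_of_seq (x : ℝ) (a : ℕ → ℤ) (g : ℕ → ℝ) (h0 : g 0 = x)
    (hlt : ∀ i, (a i : ℝ) < g i) (hub : ∀ i, g i < a i + 1) :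
    ⌊x⌋ = a 0 := by
  rw [← h0, Int.floor_eq_iff]
  exact ⟨(hlt 0).le, by exact_mod_cast hub 0⟩

/-- First-half formulas for the `P` of the surd algorithm, position `r' ∈ [1, 2k+1]`. -/
private def PP1 (A B : ℕ → ℤ) (k : ℕ) (n : ℤ) (r' : ℕ) : ℤ :=
  if r' % 2 = 1 then (A (r' / 2) * A (k - r' / 2) - 2 * (B (r' / 2) * B (k - r' / 2))) * n + 1
  else (4 * (A (k - r' / 2) * B (r' / 2)) - A (r' / 2) * A (k - r' / 2)
        + 2 * (B (r' / 2) * B (k - r' / 2))) * n + 1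

private def QQ1 (A B : ℕ → ℤ) (k : ℕ) (n : ℤ) (r' : ℕ) : ℤ :=
  if r' % 2 = 1 then 4 * (A (r' / 2) * B (k - r' / 2)) * n + 2
  else 2 * (A (k - r' / 2) * B (r' / 2)) * n + 1

private def PPf (A B : ℕ → ℤ) (k : ℕ) (n : ℤ) (r : ℕ) : ℤ :=
  PP1 A B k n (if r ≤ 2 * k + 1 then r else 4 * k + 3 - r)

private def QQf (A B : ℕ → ℤ) (k : ℕ) (n : ℤ) (r : ℕ) : ℤ :=
  QQ1 A B k n (if r ≤ 2 * k + 1 then r else 4 * k + 2 - r)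

private def aaf (k : ℕ) (m : ℤ) (r : ℕ) : ℤ :=
  if r = 2 * k + 1 then m
  else if r = 4 * k + 2 then 2 * m
  else if r % 2 = 1 then 1 else 2

section unfoldLemmas
variable (A B : ℕ → ℤ) (k : ℕ) (n : ℤ)

private lemma PPf_odd {t : ℕ} (ht : t ≤ k) :
    PPf A B k n (2 * t + 1) = (A t * A (k - t) - 2 * (B t * B (k - t))) * n + 1 := by
  unfold PPf
  rw [show (if 2 * t + 1 ≤ 2 * k + 1 then 2 * t + 1 else 4 * k + 3 - (2 * t + 1)) = 2 * t + 1
      from if_pos (by omega)]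
  unfold PP1
  rw [if_pos (show (2 * t + 1) % 2 = 1 by omega), show (2 * t + 1) / 2 = t by omega]

private lemma PPf_even {t : ℕ} (ht1 : 1 ≤ t) (ht : t ≤ k) :
    PPf A B k n (2 * t) = (4 * (A (k - t) * B t) - A t * A (k - t)
      + 2 * (B t * B (k - t))) * n + 1 := by
  unfold PPf
  rw [show (if 2 * t ≤ 2 * k + 1 then 2 * t else 4 * k + 3 - 2 * t) = 2 * t
      from if_pos (by omega)]
  unfold PP1
  rw [if_neg (show ¬ (2 * t) % 2 = 1 by omega), show (2 * t) / 2 = t by omega]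

private lemma PPf_mirror {r : ℕ} (h1 : 2 * k + 1 < r) (h2 : r ≤ 4 * k + 2) :
    PPf A B k n r = PPf A B k n (4 * k + 3 - r) := by
  unfold PPf
  rw [show (if r ≤ 2 * k + 1 then r else 4 * k + 3 - r) = 4 * k + 3 - r from if_neg (by omega),
    show (if 4 * k + 3 - r ≤ 2 * k + 1 then 4 * k + 3 - r else 4 * k + 3 - (4 * k + 3 - r))
      = 4 * k + 3 - r from if_pos (by omega)]

private lemma QQf_odd {t : ℕ} (ht : t ≤ k) :
    QQf A B k n (2 * t + 1) = 4 * (A t * B (k - t)) * n + 2 := by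
  unfold QQf
  rw [show (if 2 * t + 1 ≤ 2 * k + 1 then 2 * t + 1 else 4 * k + 2 - (2 * t + 1)) = 2 * t + 1
      from if_pos (by omega)]
  unfold QQ1
  rw [if_pos (show (2 * t + 1) % 2 = 1 by omega), show (2 * t + 1) / 2 = t by omega]

private lemma QQf_even {t : ℕ} (ht : t ≤ k) :
    QQf A B k n (2 * t) = 2 * (A (k - t) * B t) * n + 1 := by
  unfold QQf
  rw [show (if 2 * t ≤ 2 * k + 1 then 2 * t else 4 * k + 2 - 2 * t) = 2 * t
      from if_pos (by omega)]
  unfold QQ1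
  rw [if_neg (show ¬ (2 * t) % 2 = 1 by omega), show (2 * t) / 2 = t by omega]

private lemma QQf_mirror {r : ℕ} (h1 : 2 * k + 1 < r) (h2 : r ≤ 4 * k + 2) :
    QQf A B k n r = QQf A B k n (4 * k + 2 - r) := by
  unfold QQf
  rw [show (if r ≤ 2 * k + 1 then r else 4 * k + 2 - r) = 4 * k + 2 - r from if_neg (by omega),
    show (if 4 * k + 2 - r ≤ 2 * k + 1 then 4 * k + 2 - r else 4 * k + 2 - (4 * k + 2 - r))
      = 4 * k + 2 - r from if_pos (by omega)]

end unfoldLemmas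

set_option maxHeartbeats 3200000 in
theorem cf_repeated_one_two_pairs
    (A B : ℕ → ℤ)
    (hA0 : A 0 = 1) (hA1 : A 1 = 3)
    (hB0 : B 0 = 0) (hB1 : B 1 = 1)
    (hA : ∀ j : ℕ, 1 ≤ j → A (j + 1) = 4 * A j - A (j - 1))
    (hB : ∀ j : ℕ, 1 ≤ j → B (j + 1) = 4 * B j - B (j - 1))
    (k : ℕ) (hk : 1 ≤ k) (n : ℤ) (hn : 1 ≤ n) :
    ⌊Real.sqrt (((A k * n + 1) ^ 2 + 2 * (2 * B k * n + 1) : ℤ) : ℝ)⌋ = A k * n + 1 ∧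
    ∀ i : ℕ,
      (GenContFract.of
          (Real.sqrt (((A k * n + 1) ^ 2 + 2 * (2 * B k * n + 1) : ℤ) : ℝ))).partDens.get? i
        = some ((((List.replicate k ([1, 2] : List ℤ)).flatten ++ [A k * n + 1]
            ++ (List.replicate k ([2, 1] : List ℤ)).flatten
            ++ [2 * (A k * n + 1)]).getD (i % (4 * k + 2)) 0 : ℝ)) := by
  -- first-order step relations for A, B
  have hstep : ∀ j : ℕ, A (j + 1) = 3 * A j + 2 * B j ∧ B (j + 1) = A j + B j := by
    intro j
    induction j using Nat.strong_induction_on with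
    | _ j ih =>
      match j with
      | 0 => rw [hA1, hA0, hB1, hB0]; constructor <;> ring
      | 1 =>
        have h2 : A (1 + 1) = 4 * A 1 - A (1 - 1) := hA 1 le_rfl
        have h2' : B (1 + 1) = 4 * B 1 - B (1 - 1) := hB 1 le_rfl
        norm_num at h2 h2'
        rw [h2, h2', hA1, hA0, hB1, hB0]; constructor <;> ring
      | (j + 2) =>
        have i1 := ih (j + 1) (by omega)
        have i0 := ih j (by omega)
        have h2 : A (j + 2 + 1) = 4 * A (j + 2) - A (j + 2 - 1) := hA (j + 2) (by omega)
        have h2' : B (j + 2 + 1) = 4 * B (j + 2) - B (j + 2 - 1) := hB (j + 2) (by omega)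
        rw [show j + 2 - 1 = j + 1 by omega] at h2 h2'
        constructor
        · rw [h2]; linarith [i1.1, i1.2, i0.1, i0.2]
        · rw [h2']; linarith [i1.1, i1.2, i0.1, i0.2]
  have hposAB : ∀ j : ℕ, 1 ≤ A j ∧ 0 ≤ B j := by
    intro j
    induction j with
    | zero => rw [hA0, hB0]; omega
    | succ j ih =>
      have hs := hstep j
      exact ⟨by rw [hs.1]; linarith [ih.1, ih.2], by rw [hs.2]; linarith [ih.1, ih.2]⟩
  have hApos : ∀ j, 1 ≤ A j := fun j => (hposAB j).1
  have hBpos : ∀ j, 0 ≤ B j := fun j => (hposAB j).2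
  have hAB : ∀ j : ℕ, 2 * B j + 1 ≤ A j := by
    intro j
    cases j with
    | zero => rw [hA0, hB0]; omega
    | succ j =>
      have hs := hstep j
      rw [hs.1, hs.2]; linarith [hApos j, hBpos j]
  have hA4B : ∀ j : ℕ, 1 ≤ j → A j ≤ 4 * B j := by
    intro j hj
    match j, hj with
    | (j + 1), _ =>
      have hs := hstep j
      rw [hs.1, hs.2]; linarith [hApos j, hBpos j]
  have hadd : ∀ t s : ℕ, A (t + s) = A t * A s + 2 * (B t * B s)
      ∧ B (t + s) = A t * B s + B t * A s - 2 * (B t * B s) := by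
    intro t
    induction t with
    | zero =>
      intro s
      rw [Nat.zero_add, hA0, hB0]
      constructor <;> ring
    | succ t ih =>
      intro s
      have hs1 := hstep (t + s)
      have hs2 := hstep t
      have i := ih s
      constructor
      · rw [show t + 1 + s = (t + s) + 1 by omega, hs1.1, hs2.1, hs2.2, i.1, i.2]; ring
      · rw [show t + 1 + s = (t + s) + 1 by omega, hs1.2, hs2.1, hs2.2, i.1, i.2]; ring
  set m : ℤ := A k * n + 1 with hm
  set E : ℤ := m ^ 2 + 2 * (2 * B k * n + 1) with hE
  have hE2 : E = m ^ 2 + 4 * B k * n + 2 := by rw [hE]; ring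
  have hmpos : 1 ≤ m := by
    have h1 : 1 * 1 ≤ A k * n := mul_le_mul (hApos k) hn (by norm_num) (by linarith [hApos k])
    rw [hm]; linarith
  have hEpos : 0 ≤ E := by
    have h1 : 0 ≤ B k * n := mul_nonneg (hBpos k) (by linarith)
    rw [hE2]; nlinarith [sq_nonneg m]
  -- algebraic core lemmas
  have hC1even : ∀ t : ℕ, 1 ≤ t → t ≤ k →
      PPf A B k n (2 * t + 1) = 2 * QQf A B k n (2 * t) - PPf A B k n (2 * t) := by
    intro t h1 h2
    rw [PPf_odd A B k n h2, PPf_even A B k n h1 h2, QQf_even A B k n h2]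
    ring
  have hC2even : ∀ t : ℕ, t ≤ k →
      QQf A B k n (2 * t) * QQf A B k n (2 * t + 1) = E - (PPf A B k n (2 * t + 1)) ^ 2 := by
    intro t h2
    have ha := hadd t (k - t)
    rw [show t + (k - t) = k by omega] at ha
    rw [PPf_odd A B k n h2, QQf_even A B k n h2, QQf_odd A B k n h2, hE, hm, ha.1, ha.2]
    ring
  have hC1odd : ∀ t : ℕ, t < k →
      PPf A B k n (2 * t + 2) = QQf A B k n (2 * t + 1) - PPf A B k n (2 * t + 1) := by
    intro t ht
    have hs1 := hstep t
    have hs2 := hstep (k - t - 1)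
    rw [show k - t - 1 + 1 = k - t by omega] at hs2
    rw [show 2 * t + 2 = 2 * (t + 1) by omega]
    rw [PPf_even A B k n (by omega) (by omega), PPf_odd A B k n (show t ≤ k by omega),
      QQf_odd A B k n (show t ≤ k by omega)]
    rw [show k - (t + 1) = k - t - 1 by omega]
    rw [hs1.1, hs1.2, hs2.1, hs2.2]
    ring
  have hC2odd : ∀ t : ℕ, t < k →
      QQf A B k n (2 * t + 1) * QQf A B k n (2 * t + 2) = E - (PPf A B k n (2 * t + 2)) ^ 2 := by
    intro t ht
    have hs1 := hstep t
    have hs2 := hstep (k - t - 1)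
    rw [show k - t - 1 + 1 = k - t by omega] at hs2
    have ha := hadd (t + 1) (k - t - 1)
    rw [show t + 1 + (k - t - 1) = k by omega] at ha
    rw [show 2 * t + 2 = 2 * (t + 1) by omega]
    rw [PPf_even A B k n (by omega) (by omega), QQf_even A B k n (show t + 1 ≤ k by omega),
      QQf_odd A B k n (show t ≤ k by omega)]
    rw [show k - (t + 1) = k - t - 1 by omega]
    simp only [hE, hm, ha.1, ha.2, hs1.1, hs1.2, hs2.1, hs2.2]
    ring
  have hI_A : ∀ t : ℕ, t < k →
      QQf A B k n (2 * t + 2) < QQf A B k n (2 * t + 1) + 2 * PPf A B k n (2 * t + 2) := by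
    intro t ht
    have hs1 := hstep t
    have hs2 := hstep (k - t - 1)
    rw [show k - t - 1 + 1 = k - t by omega] at hs2
    rw [show 2 * t + 2 = 2 * (t + 1) by omega]
    rw [PPf_even A B k n (by omega) (by omega), QQf_even A B k n (show t + 1 ≤ k by omega),
      QQf_odd A B k n (show t ≤ k by omega)]
    rw [show k - (t + 1) = k - t - 1 by omega]
    simp only [hs1.1, hs1.2, hs2.1, hs2.2]
    have f1 : 0 ≤ A t * A (k - t - 1) * n :=
      mul_nonneg (mul_nonneg (by linarith [hApos t]) (by linarith [hApos (k - t - 1)])) (by linarith)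
    have f2 : 0 ≤ A t * B (k - t - 1) * n :=
      mul_nonneg (mul_nonneg (by linarith [hApos t]) (hBpos _)) (by linarith)
    have f3 : 0 ≤ A (k - t - 1) * B t * n :=
      mul_nonneg (mul_nonneg (by linarith [hApos (k - t - 1)]) (hBpos t)) (by linarith)
    have f4 : 0 ≤ B t * B (k - t - 1) * n :=
      mul_nonneg (mul_nonneg (hBpos _) (hBpos _)) (by linarith)
    nlinarith [f1, f2, f3, f4]
  have hI_D : ∀ t : ℕ, t < k →
      QQf A B k n (2 * t + 1) < QQf A B k n (2 * t + 2) + 2 * PPf A B k n (2 * t + 2) := by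
    intro t ht
    have hs1 := hstep t
    have hs2 := hstep (k - t - 1)
    rw [show k - t - 1 + 1 = k - t by omega] at hs2
    rw [show 2 * t + 2 = 2 * (t + 1) by omega]
    rw [PPf_even A B k n (by omega) (by omega), QQf_even A B k n (show t + 1 ≤ k by omega),
      QQf_odd A B k n (show t ≤ k by omega)]
    rw [show k - (t + 1) = k - t - 1 by omega]
    simp only [hs1.1, hs1.2, hs2.1, hs2.2]
    have f3 : 0 ≤ A (k - t - 1) * B t * n :=
      mul_nonneg (mul_nonneg (by linarith [hApos (k - t - 1)]) (hBpos t)) (by linarith)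
    have f4 : 0 ≤ B t * B (k - t - 1) * n :=
      mul_nonneg (mul_nonneg (hBpos _) (hBpos _)) (by linarith)
    nlinarith [f3, f4]
  have hI_B : ∀ t : ℕ, 1 ≤ t → t ≤ k →
      QQf A B k n (2 * t + 1) < QQf A B k n (2 * t) + 2 * PPf A B k n (2 * t + 1) := by
    intro t h1 h2
    rw [PPf_odd A B k n h2, QQf_even A B k n h2, QQf_odd A B k n h2]
    have key : 0 ≤ (A t + B t) * (A (k - t) - 2 * B (k - t)) * n :=
      mul_nonneg (mul_nonneg (by linarith [hApos t, hBpos t]) (by linarith [hAB (k - t)]))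
        (by linarith)
    nlinarith [key]
  have hI_E : ∀ t : ℕ, t ≤ k →
      QQf A B k n (2 * t) < QQf A B k n (2 * t + 1) + 2 * PPf A B k n (2 * t + 1) := by
    intro t h2
    rw [PPf_odd A B k n h2, QQf_even A B k n h2, QQf_odd A B k n h2]
    have key : 0 ≤ (A t - B t) * (A (k - t) + 2 * B (k - t)) * n :=
      mul_nonneg (mul_nonneg (by linarith [hAB t, hBpos t])
        (by linarith [hApos (k - t), hBpos (k - t)])) (by linarith)
    nlinarith [key]
  -- positivity
  have hQfh : ∀ r : ℕ, r ≤ 2 * k + 1 → 1 ≤ QQf A B k n r := by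
    intro r hr
    by_cases hp : r % 2 = 1
    · obtain ⟨t, rfl⟩ : ∃ t, r = 2 * t + 1 := ⟨r / 2, by omega⟩
      rw [QQf_odd A B k n (show t ≤ k by omega)]
      have f2 : 0 ≤ A t * B (k - t) * n :=
        mul_nonneg (mul_nonneg (by linarith [hApos t]) (hBpos _)) (by linarith)
      linarith
    · obtain ⟨t, rfl⟩ : ∃ t, r = 2 * t := ⟨r / 2, by omega⟩
      rw [QQf_even A B k n (show t ≤ k by omega)]
      have f2 : 0 ≤ A (k - t) * B t * n :=
        mul_nonneg (mul_nonneg (by linarith [hApos (k - t)]) (hBpos t)) (by linarith)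
      linarith
  have hQpos : ∀ r : ℕ, r ≤ 4 * k + 2 → 1 ≤ QQf A B k n r := by
    intro r hr
    by_cases h : r ≤ 2 * k + 1
    · exact hQfh r h
    · rw [QQf_mirror A B k n (r := r) (by omega) hr]; exact hQfh _ (by omega)
  have hPfh : ∀ r : ℕ, 1 ≤ r → r ≤ 2 * k + 1 → 1 ≤ PPf A B k n r := by
    intro r h1 hr
    by_cases hp : r % 2 = 1
    · obtain ⟨t, rfl⟩ : ∃ t, r = 2 * t + 1 := ⟨r / 2, by omega⟩
      rw [PPf_odd A B k n (show t ≤ k by omega)]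
      have f1 : 0 ≤ A t * (A (k - t) - 2 * B (k - t)) * n :=
        mul_nonneg (mul_nonneg (by linarith [hApos t]) (by linarith [hAB (k - t)])) (by linarith)
      have f2 : 0 ≤ B (k - t) * (A t - B t) * n :=
        mul_nonneg (mul_nonneg (hBpos _) (by linarith [hAB t, hBpos t])) (by linarith)
      nlinarith [f1, f2]
    · obtain ⟨t, rfl⟩ : ∃ t, r = 2 * t := ⟨r / 2, by omega⟩
      rw [PPf_even A B k n (show 1 ≤ t by omega) (show t ≤ k by omega)]
      have f1 : 0 ≤ A (k - t) * (4 * B t - A t) * n :=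
        mul_nonneg (mul_nonneg (by linarith [hApos (k - t)]) (by linarith [hA4B t (by omega)]))
          (by linarith)
      have f2 : 0 ≤ B t * B (k - t) * n :=
        mul_nonneg (mul_nonneg (hBpos _) (hBpos _)) (by linarith)
      nlinarith [f1, f2]
  have hPpos : ∀ r : ℕ, 1 ≤ r → r ≤ 4 * k + 2 → 1 ≤ PPf A B k n r := by
    intro r h1 hr
    by_cases h : r ≤ 2 * k + 1
    · exact hPfh r h1 h
    · rw [PPf_mirror A B k n (r := r) (by omega) hr]; exact hPfh _ (by omega) (by omega)
  -- special values
  have hPP1 : PPf A B k n 1 = m := by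
    have h := PPf_odd A B k n (Nat.zero_le k)
    norm_num [hA0, hB0] at h
    linarith [h, hm]
  have hQQ1 : QQf A B k n 1 = 4 * B k * n + 2 := by
    have h := QQf_odd A B k n (Nat.zero_le k)
    norm_num [hA0] at h
    linarith [h]
  have hPP2k1 : PPf A B k n (2 * k + 1) = m := by
    have h := PPf_odd A B k n (le_refl k)
    rw [Nat.sub_self, hA0, hB0] at h
    linarith [h, hm]
  have hQQ2k1 : QQf A B k n (2 * k + 1) = 2 := by
    have h := QQf_odd A B k n (le_refl k)
    rw [Nat.sub_self, hB0] at h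
    linarith [h]
  have hQQ2k : QQf A B k n (2 * k) = 2 * B k * n + 1 := by
    have h := QQf_even A B k n (le_refl k)
    rw [Nat.sub_self, hA0] at h
    linarith [h]
  have hQQ0 : QQf A B k n 0 = 1 := by
    have h := QQf_even A B k n (Nat.zero_le k)
    norm_num [hB0] at h
    exact h
  have hQQ4k2 : QQf A B k n (4 * k + 2) = 1 := by
    rw [QQf_mirror A B k n (r := 4 * k + 2) (by omega) le_rfl, Nat.sub_self]
    exact hQQ0
  have hPP4k2 : PPf A B k n (4 * k + 2) = m := by
    rw [PPf_mirror A B k n (r := 4 * k + 2) (by omega) le_rfl,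
      show 4 * k + 3 - (4 * k + 2) = 1 by omega]
    exact hPP1
  -- the big transition lemma
  have htrans : ∀ r : ℕ, 1 ≤ r → r ≤ 4 * k + 2 →
      PPf A B k n (if r = 4 * k + 2 then 1 else r + 1)
          = aaf k m r * QQf A B k n r - PPf A B k n r
      ∧ QQf A B k n r * QQf A B k n (if r = 4 * k + 2 then 1 else r + 1)
          = E - (PPf A B k n (if r = 4 * k + 2 then 1 else r + 1)) ^ 2
      ∧ QQf A B k n (if r = 4 * k + 2 then 1 else r + 1)
          < QQf A B k n r + 2 * PPf A B k n (if r = 4 * k + 2 then 1 else r + 1) := by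
    intro r h1 h2
    by_cases hF : r = 4 * k + 2
    · subst hF
      rw [if_pos rfl, hPP1, hQQ1, hQQ4k2, hPP4k2,
        show aaf k m (4 * k + 2) = 2 * m from by
          unfold aaf; rw [if_neg (by omega), if_pos rfl]]
      refine ⟨by ring, by rw [hE2]; ring, ?_⟩
      have key : 1 * 1 ≤ (A k - 2 * B k) * n :=
        mul_le_mul (by linarith [hAB k]) hn (by norm_num) (by linarith [hAB k])
      rw [hm]
      nlinarith [key]
    · rw [if_neg hF]
      by_cases hC : r = 2 * k + 1
      · subst hC
        have eP : PPf A B k n (2 * k + 1 + 1) = m := by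
          rw [show 2 * k + 1 + 1 = 2 * k + 2 by omega,
            PPf_mirror A B k n (r := 2 * k + 2) (by omega) (by omega),
            show 4 * k + 3 - (2 * k + 2) = 2 * k + 1 by omega, hPP2k1]
        have eQ : QQf A B k n (2 * k + 1 + 1) = 2 * B k * n + 1 := by
          rw [show 2 * k + 1 + 1 = 2 * k + 2 by omega,
            QQf_mirror A B k n (r := 2 * k + 2) (by omega) (by omega),
            show 4 * k + 2 - (2 * k + 2) = 2 * k by omega, hQQ2k]
        rw [eP, eQ, hPP2k1, hQQ2k1,
          show aaf k m (2 * k + 1) = m from by unfold aaf; rw [if_pos rfl]]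
        refine ⟨by ring, by rw [hE2]; ring, ?_⟩
        have key : 0 ≤ (A k - B k) * n :=
          mul_nonneg (by linarith [hAB k, hBpos k]) (by linarith)
        rw [hm]
        nlinarith [key]
      · by_cases hp : r % 2 = 1
        · -- r odd
          obtain ⟨t, rfl⟩ : ∃ t, r = 2 * t + 1 := ⟨r / 2, by omega⟩
          have haa : aaf k m (2 * t + 1) = 1 := by
            unfold aaf
            rw [if_neg (by omega), if_neg (by omega), if_pos (by omega)]
          rw [haa]
          by_cases hH : t < k
          · rw [show 2 * t + 1 + 1 = 2 * t + 2 by omega]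
            exact ⟨by linarith [hC1odd t hH], hC2odd t hH, hI_A t hH⟩
          · have m1 : PPf A B k n (2 * t + 1) = PPf A B k n (2 * (2 * k + 1 - t)) := by
              rw [PPf_mirror A B k n (r := 2 * t + 1) (by omega) (by omega),
                show 4 * k + 3 - (2 * t + 1) = 2 * (2 * k + 1 - t) by omega]
            have m2 : QQf A B k n (2 * t + 1) = QQf A B k n (2 * (2 * k - t) + 1) := by
              rw [QQf_mirror A B k n (r := 2 * t + 1) (by omega) (by omega),
                show 4 * k + 2 - (2 * t + 1) = 2 * (2 * k - t) + 1 by omega]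
            have m3 : PPf A B k n (2 * t + 1 + 1) = PPf A B k n (2 * (2 * k - t) + 1) := by
              rw [show 2 * t + 1 + 1 = 2 * t + 2 by omega,
                PPf_mirror A B k n (r := 2 * t + 2) (by omega) (by omega),
                show 4 * k + 3 - (2 * t + 2) = 2 * (2 * k - t) + 1 by omega]
            have m4 : QQf A B k n (2 * t + 1 + 1) = QQf A B k n (2 * (2 * k - t)) := by
              rw [show 2 * t + 1 + 1 = 2 * t + 2 by omega,
                QQf_mirror A B k n (r := 2 * t + 2) (by omega) (by omega),
                show 4 * k + 2 - (2 * t + 2) = 2 * (2 * k - t) by omega]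
            rw [m1, m2, m3, m4]
            have hc1 := hC1odd (2 * k - t) (by omega)
            rw [show 2 * (2 * k - t) + 2 = 2 * (2 * k + 1 - t) by omega] at hc1
            have hc2 := hC2even (2 * k - t) (by omega)
            have hi := hI_E (2 * k - t) (by omega)
            exact ⟨by linarith [hc1], by linarith [hc2], hi⟩
        · -- r even
          obtain ⟨t, rfl⟩ : ∃ t, r = 2 * t := ⟨r / 2, by omega⟩
          have haa : aaf k m (2 * t) = 2 := by
            unfold aaf
            rw [if_neg (by omega), if_neg (by omega), if_neg (by omega)]
          rw [haa]
          by_cases hH : t ≤ k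
          · exact ⟨by linarith [hC1even t (by omega) hH], hC2even t hH,
              hI_B t (by omega) hH⟩
          · have m1 : PPf A B k n (2 * t) = PPf A B k n (2 * (2 * k + 1 - t) + 1) := by
              rw [PPf_mirror A B k n (r := 2 * t) (by omega) (by omega),
                show 4 * k + 3 - 2 * t = 2 * (2 * k + 1 - t) + 1 by omega]
            have m2 : QQf A B k n (2 * t) = QQf A B k n (2 * (2 * k + 1 - t)) := by
              rw [QQf_mirror A B k n (r := 2 * t) (by omega) (by omega),
                show 4 * k + 2 - 2 * t = 2 * (2 * k + 1 - t) by omega]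
            have m3 : PPf A B k n (2 * t + 1) = PPf A B k n (2 * (2 * k + 1 - t)) := by
              rw [PPf_mirror A B k n (r := 2 * t + 1) (by omega) (by omega),
                show 4 * k + 3 - (2 * t + 1) = 2 * (2 * k + 1 - t) by omega]
            have m4 : QQf A B k n (2 * t + 1) = QQf A B k n (2 * (2 * k - t) + 1) := by
              rw [QQf_mirror A B k n (r := 2 * t + 1) (by omega) (by omega),
                show 4 * k + 2 - (2 * t + 1) = 2 * (2 * k - t) + 1 by omega]
            rw [m1, m2, m3, m4]
            have hc1 := hC1even (2 * k + 1 - t) (by omega) (by omega)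
            have hc2 := hC2odd (2 * k - t) (by omega)
            rw [show 2 * (2 * k - t) + 2 = 2 * (2 * k + 1 - t) by omega] at hc2
            have hi := hI_D (2 * k - t) (by omega)
            rw [show 2 * (2 * k - t) + 2 = 2 * (2 * k + 1 - t) by omega] at hi
            exact ⟨by linarith [hc1], by linarith [hc2], by linarith [hi]⟩
  -- sequences over ℕ
  set Pn : ℕ → ℤ := fun i => if i = 0 then 0 else PPf A B k n ((i - 1) % (4 * k + 2) + 1)
    with hPndef
  set Qn : ℕ → ℤ := fun i => if i = 0 then 1 else QQf A B k n ((i - 1) % (4 * k + 2) + 1)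
    with hQndef
  set an : ℕ → ℤ := fun i => if i = 0 then m else aaf k m ((i - 1) % (4 * k + 2) + 1)
    with handef
  have hPn0 : Pn 0 = 0 := rfl
  have hQn0 : Qn 0 = 1 := rfl
  have han0 : an 0 = m := rfl
  have hPnS : ∀ i : ℕ, Pn (i + 1) = PPf A B k n (i % (4 * k + 2) + 1) := by
    intro i; simp [hPndef]
  have hQnS : ∀ i : ℕ, Qn (i + 1) = QQf A B k n (i % (4 * k + 2) + 1) := by
    intro i; simp [hQndef]
  have hanS : ∀ i : ℕ, an (i + 1) = aaf k m (i % (4 * k + 2) + 1) := by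
    intro i; simp [handef]
  have hmodsucc : ∀ j : ℕ, (j + 1) % (4 * k + 2)
      = if j % (4 * k + 2) = 4 * k + 1 then 0 else j % (4 * k + 2) + 1 := by
    intro j
    have hl := Nat.mod_lt j (y := 4 * k + 2) (by omega)
    conv_lhs => rw [Nat.add_mod]
    rw [Nat.mod_eq_of_lt (show 1 < 4 * k + 2 by omega)]
    by_cases hj : j % (4 * k + 2) = 4 * k + 1
    · rw [if_pos hj, hj, show 4 * k + 1 + 1 = 4 * k + 2 by omega, Nat.mod_self]
    · rw [if_neg hj]
      exact Nat.mod_eq_of_lt (by omega)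
  have hstepAll : ∀ i : ℕ, Pn (i + 1) = an i * Qn i - Pn i
      ∧ Qn i * Qn (i + 1) = E - (Pn (i + 1)) ^ 2
      ∧ Qn (i + 1) < Qn i + 2 * Pn (i + 1) ∧ 1 ≤ Qn i ∧ 1 ≤ Pn (i + 1) := by
    intro i
    cases i with
    | zero =>
      rw [hPn0, hQn0, han0, hPnS 0, hQnS 0, Nat.zero_mod, Nat.zero_add, hPP1, hQQ1]
      refine ⟨by ring, by rw [hE2]; ring, ?_, le_refl 1, hmpos⟩
      have key : 1 * 1 ≤ (A k - 2 * B k) * n :=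
        mul_le_mul (by linarith [hAB k]) hn (by norm_num) (by linarith [hAB k])
      rw [hm]
      nlinarith [key]
    | succ j =>
      have hl := Nat.mod_lt j (y := 4 * k + 2) (by omega)
      have hr1 : 1 ≤ j % (4 * k + 2) + 1 := by omega
      have hr2 : j % (4 * k + 2) + 1 ≤ 4 * k + 2 := by omega
      have ht := htrans (j % (4 * k + 2) + 1) hr1 hr2
      have hnext : (j + 1) % (4 * k + 2) + 1
          = if j % (4 * k + 2) + 1 = 4 * k + 2 then 1 else j % (4 * k + 2) + 1 + 1 := by
        rw [hmodsucc j]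
        by_cases hj : j % (4 * k + 2) = 4 * k + 1
        · rw [if_pos hj, if_pos (by omega)]
        · rw [if_neg hj, if_neg (by omega)]
      rw [hPnS (j + 1), hPnS j, hQnS (j + 1), hQnS j, hanS j, hnext]
      refine ⟨ht.1, ht.2.1, ht.2.2, hQpos _ (by omega), ?_⟩
      by_cases hc : j % (4 * k + 2) + 1 = 4 * k + 2
      · rw [if_pos hc]; exact hPpos 1 le_rfl (by omega)
      · rw [if_neg hc]; exact hPpos _ (by omega) (by omega)
  have hQn1 : ∀ i : ℕ, 1 ≤ Qn i := by
    intro i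
    cases i with
    | zero => rw [hQn0]
    | succ j =>
      rw [hQnS j]
      exact hQpos _ (by have := Nat.mod_lt j (y := 4 * k + 2) (by omega); omega)
  have hQR : ∀ i : ℕ, (0 : ℝ) < ((Qn i : ℤ) : ℝ) := by
    intro i
    have h := hQn1 i
    have h2 : (0 : ℤ) < Qn i := by linarith
    exact_mod_cast h2
  have hsqE : Real.sqrt ((E : ℤ) : ℝ) ^ 2 = ((E : ℤ) : ℝ) :=
    Real.sq_sqrt (by exact_mod_cast hEpos)
  have hlt : ∀ i : ℕ,
      ((an i : ℤ) : ℝ) < (Real.sqrt ((E : ℤ) : ℝ) + ((Pn i : ℤ) : ℝ)) / ((Qn i : ℤ) : ℝ) := by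
    intro i
    obtain ⟨hG1, hG2, hG3, hQ, hP⟩ := hstepAll i
    have hQ' : 1 ≤ Qn (i + 1) := hQn1 (i + 1)
    have honele : (1 : ℤ) * 1 ≤ Qn i * Qn (i + 1) :=
      mul_le_mul hQ hQ' (by norm_num) (by linarith)
    have hPE : (Pn (i + 1)) ^ 2 < E := by linarith
    have hsql : ((Pn (i + 1) : ℤ) : ℝ) < Real.sqrt ((E : ℤ) : ℝ) := by
      rw [Real.lt_sqrt (by exact_mod_cast (by linarith : (0 : ℤ) ≤ Pn (i + 1)))]
      exact_mod_cast hPE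
    rw [lt_div_iff₀ (hQR i)]
    have hc : ((Pn (i + 1) : ℤ) : ℝ) = ((an i : ℤ) : ℝ) * ((Qn i : ℤ) : ℝ) - ((Pn i : ℤ) : ℝ) := by
      exact_mod_cast hG1
    linarith [hsql]
  have hub : ∀ i : ℕ,
      (Real.sqrt ((E : ℤ) : ℝ) + ((Pn i : ℤ) : ℝ)) / ((Qn i : ℤ) : ℝ) < ((an i : ℤ) : ℝ) + 1 := by
    intro i
    obtain ⟨hG1, hG2, hG3, hQ, hP⟩ := hstepAll i
    have hElt : E < (Pn (i + 1) + Qn i) ^ 2 := by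
      have hmul : 0 < Qn i * (2 * Pn (i + 1) + Qn i - Qn (i + 1)) :=
        mul_pos (by linarith) (by linarith)
      nlinarith [hmul]
    have hsqr : Real.sqrt ((E : ℤ) : ℝ) < (((Pn (i + 1) + Qn i : ℤ)) : ℝ) := by
      rw [Real.sqrt_lt' (by exact_mod_cast (by linarith : (0 : ℤ) < Pn (i + 1) + Qn i))]
      exact_mod_cast hElt
    rw [div_lt_iff₀ (hQR i)]
    have hc : ((Pn (i + 1) : ℤ) : ℝ) = ((an i : ℤ) : ℝ) * ((Qn i : ℤ) : ℝ) - ((Pn i : ℤ) : ℝ) := by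
      exact_mod_cast hG1
    push_cast at hsqr
    nlinarith [hsqr]
  have hrec : ∀ i : ℕ,
      ((Real.sqrt ((E : ℤ) : ℝ) + ((Pn i : ℤ) : ℝ)) / ((Qn i : ℤ) : ℝ) - ((an i : ℤ) : ℝ))
        * ((Real.sqrt ((E : ℤ) : ℝ) + ((Pn (i + 1) : ℤ) : ℝ)) / ((Qn (i + 1) : ℤ) : ℝ)) = 1 := by
    intro i
    obtain ⟨hG1, hG2, hG3, hQ, hP⟩ := hstepAll i
    have h1 := hQR i
    have h2 := hQR (i + 1)
    have hc1 : ((an i : ℤ) : ℝ) * ((Qn i : ℤ) : ℝ) = ((Pn i : ℤ) : ℝ) + ((Pn (i + 1) : ℤ) : ℝ) := by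
      have hc : ((Pn (i + 1) : ℤ) : ℝ)
          = ((an i : ℤ) : ℝ) * ((Qn i : ℤ) : ℝ) - ((Pn i : ℤ) : ℝ) := by exact_mod_cast hG1
      linarith
    have hc2 : ((Qn i : ℤ) : ℝ) * ((Qn (i + 1) : ℤ) : ℝ)
        = ((E : ℤ) : ℝ) - ((Pn (i + 1) : ℤ) : ℝ) ^ 2 := by exact_mod_cast hG2
    have e1 : (Real.sqrt ((E : ℤ) : ℝ) + ((Pn i : ℤ) : ℝ)) / ((Qn i : ℤ) : ℝ) - ((an i : ℤ) : ℝ)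
        = (Real.sqrt ((E : ℤ) : ℝ) - ((Pn (i + 1) : ℤ) : ℝ)) / ((Qn i : ℤ) : ℝ) := by
      field_simp
      linarith [hc1]
    rw [e1, div_mul_div_comm, div_eq_one_iff_eq (ne_of_gt (mul_pos h1 h2))]
    linear_combination hsqE - hc2
  have hg0 : ((fun i : ℕ =>
      (Real.sqrt ((E : ℤ) : ℝ) + ((Pn i : ℤ) : ℝ)) / ((Qn i : ℤ) : ℝ)) 0)
      = Real.sqrt ((E : ℤ) : ℝ) := by
    simp [hPn0, hQn0]
  have hlg : ∀ ρ : ℕ, ρ < 4 * k + 2 →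
      ((List.replicate k ([1, 2] : List ℤ)).flatten ++ [m]
        ++ (List.replicate k ([2, 1] : List ℤ)).flatten ++ [2 * m]).getD ρ 0
        = aaf k m (ρ + 1) := by
    intro ρ hρ
    have len1 := repTwo_length (1 : ℤ) 2 k
    have len2 := repTwo_length (2 : ℤ) 1 k
    by_cases c1 : ρ < 2 * k
    · rw [List.getD_append _ _ _ _ (by
          simp only [List.length_append, len1, len2, List.length_cons, List.length_nil]; omega),
        List.getD_append _ _ _ _ (by
          simp only [List.length_append, len1, List.length_cons, List.length_nil]; omega),
        List.getD_append _ _ _ _ (by rw [len1]; omega)]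
      rw [repTwo_getD 1 2 k ρ c1]
      have haa : aaf k m (ρ + 1) = if ρ % 2 = 0 then 1 else 2 := by
        unfold aaf
        rw [if_neg (by omega), if_neg (by omega)]
        by_cases cp : ρ % 2 = 0
        · rw [if_pos (show (ρ + 1) % 2 = 1 by omega), if_pos cp]
        · rw [if_neg (show ¬ (ρ + 1) % 2 = 1 by omega), if_neg cp]
      rw [haa]
    · by_cases c2 : ρ = 2 * k
      · subst c2
        rw [List.getD_append _ _ _ _ (by
            simp only [List.length_append, len1, len2, List.length_cons, List.length_nil]; omega),
          List.getD_append _ _ _ _ (by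
            simp only [List.length_append, len1, List.length_cons, List.length_nil]; omega),
          List.getD_append_right _ _ _ _ (by simp [len1])]
        rw [len1, Nat.sub_self, List.getD_cons_zero]
        unfold aaf
        rw [if_pos rfl]
      · by_cases c3 : ρ = 4 * k + 1
        · subst c3
          have hlen : (((List.replicate k ([1, 2] : List ℤ)).flatten ++ [m])
              ++ (List.replicate k ([2, 1] : List ℤ)).flatten).length = 4 * k + 1 := by
            simp only [List.length_append, len1, len2, List.length_cons, List.length_nil]
            omega
          rw [List.getD_append_right _ _ _ _ (by rw [hlen])]
          rw [hlen, Nat.sub_self, List.getD_cons_zero]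
          unfold aaf
          rw [if_neg (by omega), if_pos rfl]
        · have hlen2 : ((List.replicate k ([1, 2] : List ℤ)).flatten ++ [m]).length
              = 2 * k + 1 := by
            simp only [List.length_append, len1, List.length_cons, List.length_nil]
          rw [List.getD_append _ _ _ _ (by
            simp only [List.length_append, hlen2, len2]; omega)]
          rw [List.getD_append_right _ _ _ _ (by rw [hlen2]; omega)]
          rw [hlen2]
          rw [repTwo_getD 2 1 k (ρ - (2 * k + 1)) (by omega)]
          have haa : aaf k m (ρ + 1) = if (ρ - (2 * k + 1)) % 2 = 0 then 2 else 1 := by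
            unfold aaf
            rw [if_neg (by omega), if_neg (by omega)]
            by_cases cp : (ρ - (2 * k + 1)) % 2 = 0
            · rw [if_neg (show ¬ (ρ + 1) % 2 = 1 by omega), if_pos cp]
            · rw [if_pos (show (ρ + 1) % 2 = 1 by omega), if_neg cp]
          rw [haa]
  constructor
  · have hfl := floor_of_seq (Real.sqrt ((E : ℤ) : ℝ)) an
      (fun i : ℕ => (Real.sqrt ((E : ℤ) : ℝ) + ((Pn i : ℤ) : ℝ)) / ((Qn i : ℤ) : ℝ))
      hg0 hlt hub
    rw [hfl, han0]
  · intro i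
    rw [partDens_of_seq (Real.sqrt ((E : ℤ) : ℝ)) an
      (fun i : ℕ => (Real.sqrt ((E : ℤ) : ℝ) + ((Pn i : ℤ) : ℝ)) / ((Qn i : ℤ) : ℝ))
      hg0 hlt hub hrec i]
    have hh : an (i + 1)
        = ((List.replicate k ([1, 2] : List ℤ)).flatten ++ [m]
          ++ (List.replicate k ([2, 1] : List ℤ)).flatten ++ [2 * m]).getD (i % (4 * k + 2)) 0 :=
      (hanS i).trans (hlg (i % (4 * k + 2)) (Nat.mod_lt i (by omega))).symm
    rw [hh]
end

section
/- Fix an integer m ≥ 1 and let (q_j) be the denominators of the convergents of √(m² + 2) = [m; \overline{m, 2m}], i.e. q_0 = 1, q_1 = m, and q_{j+1} = c_j q_j + q_{j-1} for j ≥ 1, where c_j = 2m if j is odd and c_j = m if j is even. Then for all integers k ≥ 1 and n ≥ 1, the simple continued fraction expansion of √((q_{2k} n + m)² + 2(2 q_{2k-1} n + 1)) is [q_{2k} n + m; \overline{(m, 2m) repeated k times, q_{2k} n + m, (2m, m) repeated k times, 2(q_{2k} n + m)}]; that is, the period of length 4k+2 consists of the pair (m, 2m) repeated k times, then the central quotient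 q_{2k} n + m, then the pair (2m, m) repeated k times, then 2(q_{2k} n + m). -/
section WSeq

variable (m : ℤ) (w : ℕ → ℤ)
variable (hm : 1 ≤ m) (hw0 : w 0 = 1) (hw1 : w 1 = 0)
variable (hrec : ∀ j : ℕ, w (j + 2) = (if j % 2 = 0 then 2 * m else m) * w (j + 1) + w j)

include hrec in
theorem w_rec_even : ∀ s : ℕ, w (2 * s + 2) = 2 * m * w (2 * s + 1) + w (2 * s) := by
  intro s
  have h := hrec (2 * s)
  rwa [if_pos (by omega)] at h

include hrec in
theorem w_rec_odd : ∀ s : ℕ, w (2 * s + 3) = m * w (2 * s + 2) + w (2 * s + 1) := by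
  intro s
  have h := hrec (2 * s + 1)
  rw [if_neg (by omega)] at h
  rw [show 2 * s + 3 = 2 * s + 1 + 2 by ring, show 2 * s + 2 = 2 * s + 1 + 1 by ring]
  exact h

include hm hw0 hw1 hrec in
theorem w_nonneg : ∀ j, 0 ≤ w j := by
  have key : ∀ j, 0 ≤ w j ∧ 0 ≤ w (j + 1) := by
    intro j
    induction j with
    | zero => constructor <;> simp [hw0, hw1]
    | succ j ih =>
      refine ⟨ih.2, ?_⟩
      rw [hrec j]
      split_ifs <;> nlinarith [ih.1, ih.2]
  exact fun j => (key j).1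

include hm hw0 hw1 hrec in
theorem w_mono : ∀ j, w (j + 1) ≤ w (j + 2) := by
  intro j
  rw [hrec j]
  have h1 := w_nonneg m w hm hw0 hw1 hrec j
  have h2 := w_nonneg m w hm hw0 hw1 hrec (j + 1)
  split_ifs <;> nlinarith

include hm hw0 hw1 hrec in
theorem w_two : w 2 = 1 := by
  have h := hrec 0
  rw [if_pos (by omega)] at h
  simp [hw0, hw1] at h
  omega

include hm hw0 hw1 hrec in
theorem w_one_le : ∀ j, 1 ≤ w (j + 2) := by
  intro j
  induction j with
  | zero => rw [w_two m w hm hw0 hw1 hrec]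
  | succ j ih => exact le_trans ih (w_mono m w hm hw0 hw1 hrec (j + 1))

include hm hw0 hw1 hrec in
theorem w_add : ∀ t s : ℕ,
    w (2 * s + 2 * t + 1) = w (2 * t + 2) * w (2 * s + 1) + w (2 * t + 1) * w (2 * s) ∧
    w (2 * s + 2 * t) = 2 * w (2 * t + 1) * w (2 * s + 1) + w (2 * t) * w (2 * s) := by
  intro t
  induction t with
  | zero =>
    intro s
    constructor
    · rw [show 2 * s + 2 * 0 + 1 = 2 * s + 1 by ring, show 2 * 0 + 2 = 2 by ring,
        show 2 * 0 + 1 = 1 by ring, w_two m w hm hw0 hw1 hrec, hw1]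
      ring
    · rw [show 2 * s + 2 * 0 = 2 * s by ring, show 2 * 0 + 1 = 1 by ring, hw1, hw0]
      ring
  | succ t ih =>
    intro s
    have ho := (ih s).1
    have he := (ih s).2
    have re_st : w (2 * s + 2 * t + 2) = 2 * m * w (2 * s + 2 * t + 1) + w (2 * s + 2 * t) := by
      rw [show 2 * s + 2 * t + 2 = 2 * (s + t) + 2 by ring,
        show 2 * s + 2 * t + 1 = 2 * (s + t) + 1 by ring,
        show 2 * s + 2 * t = 2 * (s + t) by ring]
      exact w_rec_even m w hrec (s + t)
    have ro_st : w (2 * s + 2 * t + 3) = m * w (2 * s + 2 * t + 2) + w (2 * s + 2 * t + 1) := by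
      rw [show 2 * s + 2 * t + 3 = 2 * (s + t) + 3 by ring,
        show 2 * s + 2 * t + 2 = 2 * (s + t) + 2 by ring,
        show 2 * s + 2 * t + 1 = 2 * (s + t) + 1 by ring]
      exact w_rec_odd m w hrec (s + t)
    have re_t := w_rec_even m w hrec t
    have ro_t := w_rec_odd m w hrec t
    have re_t1 : w (2 * t + 4) = 2 * m * w (2 * t + 3) + w (2 * t + 2) := by
      rw [show 2 * t + 4 = 2 * (t + 1) + 2 by ring, show 2 * t + 3 = 2 * (t + 1) + 1 by ring,
        show 2 * t + 2 = 2 * (t + 1) by ring]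
      exact w_rec_even m w hrec (t + 1)
    have hADDe' : w (2 * s + 2 * t + 2) =
        2 * w (2 * t + 3) * w (2 * s + 1) + w (2 * t + 2) * w (2 * s) := by
      rw [re_st, ho, he, ro_t, re_t]
      ring
    constructor
    · rw [show 2 * s + 2 * (t + 1) + 1 = 2 * s + 2 * t + 3 by ring,
        show 2 * (t + 1) + 2 = 2 * t + 4 by ring, show 2 * (t + 1) + 1 = 2 * t + 3 by ring,
        ro_st, hADDe', ho, re_t1, ro_t]
      ring
    · rw [show 2 * s + 2 * (t + 1) = 2 * s + 2 * t + 2 by ring,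
        show 2 * (t + 1) + 1 = 2 * t + 3 by ring, show 2 * (t + 1) = 2 * t + 2 by ring]
      exact hADDe'

include hm hw0 hw1 hrec in
theorem w_adde2 : ∀ t s : ℕ,
    w (2 * s + 2 * t + 2) = w (2 * s + 2) * w (2 * t + 2) + 2 * w (2 * s + 1) * w (2 * t + 1) := by
  intro t s
  have h := (w_add m w hm hw0 hw1 hrec (t + 1) s).2
  rw [show 2 * s + 2 * (t + 1) = 2 * s + 2 * t + 2 by ring,
    show 2 * (t + 1) + 1 = 2 * t + 3 by ring, show 2 * (t + 1) = 2 * t + 2 by ring] at h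
  rw [h, w_rec_odd m w hrec t, w_rec_even m w hrec s]
  ring

end WSeq

/-- `P`-value of the surd orbit at position `ρ` (raw formula, valid for `1 ≤ ρ ≤ 2k+1`). -/
def Praw (m : ℤ) (w : ℕ → ℤ) (n : ℤ) (k : ℕ) (ρ : ℕ) : ℤ :=
  m + (w (2 * k + 2) - (if ρ % 2 = 0 then 2 else 4) * (w ρ * w (2 * k + 2 - ρ))) * n

/-- `Q`-value of the surd orbit at position `ρ` (raw formula, valid for `0 ≤ ρ ≤ 2k+1`). -/
def Qraw (w : ℕ → ℤ) (n : ℤ) (k : ℕ) (ρ : ℕ) : ℤ :=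
  (if ρ % 2 = 0 then 2 else 4) * (w (ρ + 1) * w (2 * k + 2 - ρ)) * n +
    (if ρ % 2 = 0 then 1 else 2)

section Families

variable (m : ℤ) (w : ℕ → ℤ) (n : ℤ)
variable (hm : 1 ≤ m) (hw0 : w 0 = 1) (hw1 : w 1 = 0)
variable (hrec : ∀ j : ℕ, w (j + 2) = (if j % 2 = 0 then 2 * m else m) * w (j + 1) + w j)

include hm hw0 hw1 hrec in
theorem F1o (s t k : ℕ) (hk : k = s + t + 1) :
    Praw m w n k (2 * s + 1) + Praw m w n k (2 * s + 2) = m * Qraw w n k (2 * s + 1) := by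
  subst hk
  simp only [Praw, Qraw, if_neg (show ¬(2 * s + 1) % 2 = 0 by omega),
    if_pos (show (2 * s + 2) % 2 = 0 by omega)]
  rw [show 2 * (s + t + 1) + 2 - (2 * s + 1) = 2 * t + 3 by omega,
    show 2 * (s + t + 1) + 2 - (2 * s + 2) = 2 * t + 2 by omega,
    show 2 * s + 1 + 1 = 2 * s + 2 by omega]
  have hadd : w (2 * (s + t + 1) + 2) = w (2 * s + 2) * w (2 * t + 4)
      + 2 * w (2 * s + 1) * w (2 * t + 3) := by
    have h := w_adde2 m w hm hw0 hw1 hrec (t + 1) s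
    rw [show 2 * s + 2 * (t + 1) + 2 = 2 * (s + t + 1) + 2 by ring,
      show 2 * (t + 1) + 2 = 2 * t + 4 by ring, show 2 * (t + 1) + 1 = 2 * t + 3 by ring] at h
    exact h
  have hre : w (2 * t + 4) = 2 * m * w (2 * t + 3) + w (2 * t + 2) := by
    have h := w_rec_even m w hrec (t + 1)
    rw [show 2 * (t + 1) + 2 = 2 * t + 4 by ring, show 2 * (t + 1) + 1 = 2 * t + 3 by ring] at h
    exact h
  rw [hadd, hre]
  ring

include hm hw0 hw1 hrec in
theorem F1e (s t k : ℕ) (hk : k = s + t + 1) :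
    Praw m w n k (2 * s + 2) + Praw m w n k (2 * s + 3) = 2 * m * Qraw w n k (2 * s + 2) := by
  subst hk
  simp only [Praw, Qraw, if_pos (show (2 * s + 2) % 2 = 0 by omega),
    if_neg (show ¬(2 * s + 3) % 2 = 0 by omega)]
  rw [show 2 * (s + t + 1) + 2 - (2 * s + 2) = 2 * t + 2 by omega,
    show 2 * (s + t + 1) + 2 - (2 * s + 3) = 2 * t + 1 by omega,
    show 2 * s + 2 + 1 = 2 * s + 3 by omega]
  have hA : w (2 * (s + t + 1) + 2) = 2 * w (2 * t + 3) * w (2 * s + 3)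
      + w (2 * t + 2) * w (2 * s + 2) := by
    have h := (w_add m w hm hw0 hw1 hrec (t + 1) (s + 1)).2
    rw [show 2 * (s + 1) + 2 * (t + 1) = 2 * (s + t + 1) + 2 by ring,
      show 2 * (t + 1) + 1 = 2 * t + 3 by ring, show 2 * (t + 1) = 2 * t + 2 by ring,
      show 2 * (s + 1) + 1 = 2 * s + 3 by ring, show 2 * (s + 1) = 2 * s + 2 by ring] at h
    exact h
  have hB : w (2 * t + 3) = m * w (2 * t + 2) + w (2 * t + 1) := w_rec_odd m w hrec t
  rw [hA, hB]
  ring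

include hm hw0 hw1 hrec in
theorem F2o (s t k : ℕ) (hk : k = s + t) :
    Qraw w n k (2 * s) * Qraw w n k (2 * s + 1) =
      ((w (2 * k + 2) * n + m) ^ 2 + 2 * (2 * w (2 * k + 1) * n + 1))
        - Praw m w n k (2 * s + 1) ^ 2 := by
  subst hk
  simp only [Praw, Qraw, if_pos (show (2 * s) % 2 = 0 by omega),
    if_neg (show ¬(2 * s + 1) % 2 = 0 by omega)]
  rw [show 2 * (s + t) + 2 - (2 * s) = 2 * t + 2 by omega,
    show 2 * (s + t) + 2 - (2 * s + 1) = 2 * t + 1 by omega,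
    show 2 * s + 1 + 1 = 2 * s + 2 by omega]
  have h1 : w (2 * (s + t) + 2) = w (2 * s + 2) * w (2 * t + 2)
      + 2 * w (2 * s + 1) * w (2 * t + 1) := by
    have h := w_adde2 m w hm hw0 hw1 hrec t s
    rw [show 2 * s + 2 * t + 2 = 2 * (s + t) + 2 by ring] at h
    exact h
  have h2 : w (2 * (s + t) + 1) = w (2 * t + 2) * w (2 * s + 1)
      + w (2 * t + 1) * w (2 * s) := by
    have h := (w_add m w hm hw0 hw1 hrec t s).1
    rw [show 2 * s + 2 * t + 1 = 2 * (s + t) + 1 by ring] at h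
    exact h
  have h3 : w (2 * s + 2) = 2 * m * w (2 * s + 1) + w (2 * s) := w_rec_even m w hrec s
  rw [h1, h2, h3]
  ring

include hm hw0 hw1 hrec in
theorem F2e (s t k : ℕ) (hk : k = s + t + 1) :
    Qraw w n k (2 * s + 1) * Qraw w n k (2 * s + 2) =
      ((w (2 * k + 2) * n + m) ^ 2 + 2 * (2 * w (2 * k + 1) * n + 1))
        - Praw m w n k (2 * s + 2) ^ 2 := by
  subst hk
  simp only [Praw, Qraw, if_neg (show ¬(2 * s + 1) % 2 = 0 by omega),
    if_pos (show (2 * s + 2) % 2 = 0 by omega)]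
  rw [show 2 * (s + t + 1) + 2 - (2 * s + 1) = 2 * t + 3 by omega,
    show 2 * (s + t + 1) + 2 - (2 * s + 2) = 2 * t + 2 by omega,
    show 2 * s + 1 + 1 = 2 * s + 2 by omega, show 2 * s + 2 + 1 = 2 * s + 3 by omega]
  have hA : w (2 * (s + t + 1) + 2) = 2 * w (2 * t + 3) * w (2 * s + 3)
      + w (2 * t + 2) * w (2 * s + 2) := by
    have h := (w_add m w hm hw0 hw1 hrec (t + 1) (s + 1)).2
    rw [show 2 * (s + 1) + 2 * (t + 1) = 2 * (s + t + 1) + 2 by ring,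
      show 2 * (t + 1) + 1 = 2 * t + 3 by ring, show 2 * (t + 1) = 2 * t + 2 by ring,
      show 2 * (s + 1) + 1 = 2 * s + 3 by ring, show 2 * (s + 1) = 2 * s + 2 by ring] at h
    exact h
  have hB : w (2 * (s + t + 1) + 1) = w (2 * t + 2) * w (2 * s + 3)
      + w (2 * t + 1) * w (2 * s + 2) := by
    have h := (w_add m w hm hw0 hw1 hrec t (s + 1)).1
    rw [show 2 * (s + 1) + 2 * t + 1 = 2 * (s + t + 1) + 1 by ring,
      show 2 * (s + 1) + 1 = 2 * s + 3 by ring, show 2 * (s + 1) = 2 * s + 2 by ring] at h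
    exact h
  have hC : w (2 * t + 3) = m * w (2 * t + 2) + w (2 * t + 1) := w_rec_odd m w hrec t
  rw [hA, hB, hC]
  ring

end Families

theorem rep2_length (a b : ℤ) (k : ℕ) : ((List.replicate k [a, b]).flatten).length = 2 * k := by
  induction k with
  | zero => simp
  | succ k ih => simp only [List.replicate_succ, List.flatten_cons, List.length_append, ih,
      List.length_cons, List.length_nil]; omega

theorem rep2_getD (a b : ℤ) : ∀ (k j : ℕ), j < 2 * k →
    ((List.replicate k [a, b]).flatten).getD j 0 = if j % 2 = 0 then a else b := by
  intro k
  induction k with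
  | zero => intro j hj; omega
  | succ k ih =>
    intro j hj
    rw [List.replicate_succ, List.flatten_cons]
    match j with
    | 0 => simp
    | 1 => simp
    | (j + 2) =>
      have h2 : [a, b] ++ (List.replicate k [a, b]).flatten
          = a :: b :: (List.replicate k [a, b]).flatten := by simp
      rw [h2, List.getD_cons_succ, List.getD_cons_succ, ih j (by omega)]
      have : (j + 2) % 2 = j % 2 := by omega
      rw [this]

theorem getD_pattern (m A : ℤ) (k j : ℕ) (hj : j < 4 * k + 2) :
    ((List.replicate k ([m, 2 * m] : List ℤ)).flatten ++ [A]
        ++ (List.replicate k ([2 * m, m] : List ℤ)).flatten ++ [2 * A]).getD j 0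
      = if j = 2 * k then A
        else if j = 4 * k + 1 then 2 * A
        else if j % 2 = 0 then m else 2 * m := by
  have hlen1 := rep2_length m (2 * m) k
  have hlen2 := rep2_length (2 * m) m k
  have hlenX : ((List.replicate k ([m, 2 * m] : List ℤ)).flatten ++ [A]
      ++ (List.replicate k ([2 * m, m] : List ℤ)).flatten).length = 4 * k + 1 := by
    simp only [List.length_append, hlen1, hlen2, List.length_cons, List.length_nil]; omega
  have hlenY : ((List.replicate k ([m, 2 * m] : List ℤ)).flatten ++ [A]).length = 2 * k + 1 := by
    simp only [List.length_append, hlen1, List.length_cons, List.length_nil]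
  rcases eq_or_ne j (4 * k + 1) with h4 | h4
  · subst h4
    rw [List.getD_append_right _ _ _ _ hlenX.le, hlenX]
    simp [if_neg (show ¬ (4 * k + 1 = 2 * k) by omega)]
  rw [List.getD_append _ _ _ _ (by rw [hlenX]; omega)]
  rcases lt_trichotomy j (2 * k) with h | h | h
  · rw [List.getD_append _ _ _ _ (by rw [hlenY]; omega),
      List.getD_append _ _ _ _ (by rw [hlen1]; omega), rep2_getD m (2 * m) k j (by omega)]
    rw [if_neg (show ¬ (j = 2 * k) by omega), if_neg (show ¬ (j = 4 * k + 1) by omega)]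
  · subst h
    rw [List.getD_append _ _ _ _ (by rw [hlenY]; omega),
      List.getD_append_right _ _ _ _ hlen1.le, hlen1]
    simp
  · obtain ⟨u, rfl⟩ : ∃ u, j = 2 * k + 1 + u := ⟨j - (2 * k + 1), by omega⟩
    rw [List.getD_append_right _ _ _ _ (by rw [hlenY]; omega), hlenY,
      show 2 * k + 1 + u - (2 * k + 1) = u by omega, rep2_getD (2 * m) m k u (by omega),
      if_neg (show ¬ (2 * k + 1 + u = 2 * k) by omega),
      if_neg (show ¬ (2 * k + 1 + u = 4 * k + 1) by omega)]
    have hcase : u % 2 = 0 ∨ u % 2 = 1 := by omega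
    rcases hcase with h0 | h1
    · rw [if_pos h0, if_neg (show ¬ ((2 * k + 1 + u) % 2 = 0) by omega)]
    · rw [if_neg (show ¬ (u % 2 = 0) by omega), if_pos (show (2 * k + 1 + u) % 2 = 0 by omega)]

/-- `P`-value of the surd orbit at residue `ρ` of the period. -/
def Pfun (m : ℤ) (w : ℕ → ℤ) (n : ℤ) (k : ℕ) (ρ : ℕ) : ℤ :=
  if ρ = 0 then w (2 * k + 2) * n + m
  else if ρ ≤ 2 * k + 1 then Praw m w n k ρ
  else Praw m w n k (4 * k + 3 - ρ)

/-- `Q`-value of the surd orbit at residue `ρ` of the period. -/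
def Qfun (w : ℕ → ℤ) (n : ℤ) (k : ℕ) (ρ : ℕ) : ℤ :=
  if ρ ≤ 2 * k + 1 then Qraw w n k ρ else Qraw w n k (4 * k + 2 - ρ)

/-- Partial quotient at residue `ρ` of the period. -/
def afun (m : ℤ) (w : ℕ → ℤ) (n : ℤ) (k : ℕ) (ρ : ℕ) : ℤ :=
  if ρ = 0 then 2 * (w (2 * k + 2) * n + m)
  else if ρ = 2 * k + 1 then w (2 * k + 2) * n + m
  else if ρ % 2 = 1 then m else 2 * m

section Trans

variable (m : ℤ) (w : ℕ → ℤ) (n : ℤ)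
variable (hm : 1 ≤ m) (hn : 1 ≤ n) (hw0 : w 0 = 1) (hw1 : w 1 = 0)
variable (hrec : ∀ j : ℕ, w (j + 2) = (if j % 2 = 0 then 2 * m else m) * w (j + 1) + w j)

include hm hn hw0 hw1 hrec in
theorem Qraw_pos (k ρ : ℕ) : 0 < Qraw w n k ρ := by
  have h1 := w_nonneg m w hm hw0 hw1 hrec (ρ + 1)
  have h2 := w_nonneg m w hm hw0 hw1 hrec (2 * k + 2 - ρ)
  unfold Qraw
  split_ifs <;> nlinarith [mul_nonneg h1 h2]

include hm hn hw0 hw1 hrec in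
theorem ineq_odd (s t k : ℕ) (hk : k = s + t) :
    0 ≤ Praw m w n k (2 * s + 1) ∧
    (w (2 * k + 2) * n + m) + 1 ≤ Praw m w n k (2 * s + 1) + Qraw w n k (2 * s) ∧
    (w (2 * k + 2) * n + m) + 1 ≤ Praw m w n k (2 * s + 1) + Qraw w n k (2 * s + 1) := by
  subst hk
  simp only [Praw, Qraw, if_neg (show ¬(2 * s + 1) % 2 = 0 by omega),
    if_pos (show (2 * s) % 2 = 0 by omega)]
  rw [show 2 * (s + t) + 2 - (2 * s + 1) = 2 * t + 1 by omega,
    show 2 * (s + t) + 2 - (2 * s) = 2 * t + 2 by omega,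
    show 2 * s + 1 + 1 = 2 * s + 2 by omega]
  have hW : w (2 * (s + t) + 2) = w (2 * s + 2) * w (2 * t + 2)
      + 2 * w (2 * s + 1) * w (2 * t + 1) := by
    have h := w_adde2 m w hm hw0 hw1 hrec t s
    rw [show 2 * s + 2 * t + 2 = 2 * (s + t) + 2 by ring] at h
    exact h
  have hres : w (2 * s + 2) = 2 * m * w (2 * s + 1) + w (2 * s) := w_rec_even m w hrec s
  have hret : w (2 * t + 2) = 2 * m * w (2 * t + 1) + w (2 * t) := w_rec_even m w hrec t
  have hmono_s : w (2 * s + 1) ≤ w (2 * s + 2) := w_mono m w hm hw0 hw1 hrec (2 * s)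
  have hmono_t : w (2 * t + 1) ≤ w (2 * t + 2) := w_mono m w hm hw0 hw1 hrec (2 * t)
  have n1 := w_nonneg m w hm hw0 hw1 hrec (2 * s)
  have n2 := w_nonneg m w hm hw0 hw1 hrec (2 * s + 1)
  have n3 := w_nonneg m w hm hw0 hw1 hrec (2 * s + 2)
  have n4 := w_nonneg m w hm hw0 hw1 hrec (2 * t)
  have n5 := w_nonneg m w hm hw0 hw1 hrec (2 * t + 1)
  have n6 := w_nonneg m w hm hw0 hw1 hrec (2 * t + 2)
  refine ⟨?_, ?_, ?_⟩
  · -- W - 4*δ = a2*b2 - 2*a1*b1 ≥ 0 since a2 ≥ 2*a1, b2 ≥ b1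
    have h2a : 2 * w (2 * s + 1) ≤ w (2 * s + 2) := by nlinarith [hres, n1, n2, hm]
    have key : 0 ≤ w (2 * s + 2) * w (2 * t + 2) - 2 * w (2 * s + 1) * w (2 * t + 1) := by
      nlinarith [mul_nonneg (sub_nonneg.mpr h2a) n5, mul_nonneg n3 (sub_nonneg.mpr hmono_t)]
    nlinarith [hW, key, hn, hm]
  · -- 2*α - 4*δ = 2*a1*(b2 - 2*b1) ≥ 0
    have h2b : 2 * w (2 * t + 1) ≤ w (2 * t + 2) := by nlinarith [hret, n4, n5, hm]
    have key : 0 ≤ w (2 * s + 1) * w (2 * t + 2) - 2 * w (2 * s + 1) * w (2 * t + 1) := by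
      nlinarith [mul_nonneg n2 (sub_nonneg.mpr h2b)]
    nlinarith [key, hn]
  · -- 4*β - 4*δ = 4*b1*(a2 - a1) ≥ 0
    have key : 0 ≤ w (2 * s + 2) * w (2 * t + 1) - w (2 * s + 1) * w (2 * t + 1) := by
      nlinarith [mul_nonneg (sub_nonneg.mpr hmono_s) n5]
    nlinarith [key, hn]

include hm hn hw0 hw1 hrec in
theorem ineq_even (s t k : ℕ) (hk : k = s + t + 1) :
    0 ≤ Praw m w n k (2 * s + 2) ∧
    (w (2 * k + 2) * n + m) + 1 ≤ Praw m w n k (2 * s + 2) + Qraw w n k (2 * s + 1) ∧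
    (w (2 * k + 2) * n + m) + 1 ≤ Praw m w n k (2 * s + 2) + Qraw w n k (2 * s + 2) := by
  subst hk
  simp only [Praw, Qraw, if_pos (show (2 * s + 2) % 2 = 0 by omega),
    if_neg (show ¬(2 * s + 1) % 2 = 0 by omega)]
  rw [show 2 * (s + t + 1) + 2 - (2 * s + 2) = 2 * t + 2 by omega,
    show 2 * (s + t + 1) + 2 - (2 * s + 1) = 2 * t + 3 by omega,
    show 2 * s + 1 + 1 = 2 * s + 2 by omega, show 2 * s + 2 + 1 = 2 * s + 3 by omega]
  have hA : w (2 * (s + t + 1) + 2) = 2 * w (2 * t + 3) * w (2 * s + 3)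
      + w (2 * t + 2) * w (2 * s + 2) := by
    have h := (w_add m w hm hw0 hw1 hrec (t + 1) (s + 1)).2
    rw [show 2 * (s + 1) + 2 * (t + 1) = 2 * (s + t + 1) + 2 by ring,
      show 2 * (t + 1) + 1 = 2 * t + 3 by ring, show 2 * (t + 1) = 2 * t + 2 by ring,
      show 2 * (s + 1) + 1 = 2 * s + 3 by ring, show 2 * (s + 1) = 2 * s + 2 by ring] at h
    exact h
  have hmono_s : w (2 * s + 2) ≤ w (2 * s + 3) := w_mono m w hm hw0 hw1 hrec (2 * s + 1)
  have hmono_t : w (2 * t + 2) ≤ w (2 * t + 3) := w_mono m w hm hw0 hw1 hrec (2 * t + 1)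
  have n3 := w_nonneg m w hm hw0 hw1 hrec (2 * s + 2)
  have n3' := w_nonneg m w hm hw0 hw1 hrec (2 * s + 3)
  have n6 := w_nonneg m w hm hw0 hw1 hrec (2 * t + 2)
  have n6' := w_nonneg m w hm hw0 hw1 hrec (2 * t + 3)
  have hprod : w (2 * s + 2) * w (2 * t + 2) ≤ w (2 * s + 3) * w (2 * t + 3) :=
    mul_le_mul hmono_s hmono_t n6 n3'
  refine ⟨?_, ?_, ?_⟩
  · -- W - 2*ζ = 2*a3*b3 - a2*b2 ≥ 0
    nlinarith [hA, hprod, hn, hm, mul_nonneg n3 n6]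
  · -- 4*β - 2*ζ = 2*a2*(2*b3 - b2) ≥ 0
    have key : 0 ≤ 2 * (w (2 * s + 2) * w (2 * t + 3)) - w (2 * s + 2) * w (2 * t + 2) := by
      nlinarith [mul_nonneg n3 (sub_nonneg.mpr hmono_t), mul_nonneg n3 n6]
    nlinarith [key, hn]
  · -- 2*α' - 2*ζ = 2*b2*(a3 - a2) ≥ 0
    have key : 0 ≤ w (2 * s + 3) * w (2 * t + 2) - w (2 * s + 2) * w (2 * t + 2) := by
      nlinarith [mul_nonneg (sub_nonneg.mpr hmono_s) n6]
    nlinarith [key, hn]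

end Trans

section TransMain

variable (m : ℤ) (w : ℕ → ℤ) (n : ℤ)
variable (hm : 1 ≤ m) (hn : 1 ≤ n) (hw0 : w 0 = 1) (hw1 : w 1 = 0)
variable (hrec : ∀ j : ℕ, w (j + 2) = (if j % 2 = 0 then 2 * m else m) * w (j + 1) + w j)

include hm hn hw0 hw1 hrec in
theorem trans_main (k : ℕ) (hk : 1 ≤ k) (ρ : ℕ) (hρ : ρ < 4 * k + 2) :
    Pfun m w n k ρ + Pfun m w n k ((ρ + 1) % (4 * k + 2))
        = afun m w n k ρ * Qfun w n k ρ ∧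
      Qfun w n k ρ * Qfun w n k ((ρ + 1) % (4 * k + 2))
        = ((w (2 * k + 2) * n + m) ^ 2 + 2 * (2 * w (2 * k + 1) * n + 1))
            - Pfun m w n k ((ρ + 1) % (4 * k + 2)) ^ 2 ∧
      0 < Qfun w n k ρ ∧ 0 < Qfun w n k ((ρ + 1) % (4 * k + 2)) ∧
      0 ≤ Pfun m w n k ((ρ + 1) % (4 * k + 2)) ∧
      (w (2 * k + 2) * n + m) + 1
        ≤ Pfun m w n k ((ρ + 1) % (4 * k + 2)) + Qfun w n k ρ := by
  have hA0 : 0 ≤ w (2 * k + 2) * n + m := by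
    nlinarith [w_nonneg m w hm hw0 hw1 hrec (2 * k + 2), hn, hm]
  have hrek : w (2 * k + 2) = 2 * m * w (2 * k + 1) + w (2 * k) := w_rec_even m w hrec k
  have hVnn := w_nonneg m w hm hw0 hw1 hrec (2 * k + 1)
  have hw2 : w 2 = 1 := w_two m w hm hw0 hw1 hrec
  -- Qfun positivity is uniform
  have hQpos : ∀ σ, 0 < Qfun w n k σ := by
    intro σ
    unfold Qfun
    split_ifs <;> exact Qraw_pos m w n hm hn hw0 hw1 hrec k _
  rcases eq_or_ne ρ 0 with rfl | hρ0
  · -- case ρ = 0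
    have hmod : (0 + 1) % (4 * k + 2) = 1 := Nat.mod_eq_of_lt (by omega)
    rw [hmod]
    have hPf0 : Pfun m w n k 0 = w (2 * k + 2) * n + m := by unfold Pfun; rw [if_pos rfl]
    have hQf0 : Qfun w n k 0 = 1 := by
      unfold Qfun Qraw
      rw [if_pos (show (0:ℕ) ≤ 2 * k + 1 by omega)]
      simp [hw1]
    have hPf1 : Pfun m w n k 1 = w (2 * k + 2) * n + m := by
      unfold Pfun Praw
      rw [if_neg (by omega), if_pos (by omega), if_neg (by omega), hw1]
      ring
    have hQf1 : Qfun w n k 1 = 4 * w (2 * k + 1) * n + 2 := by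
      unfold Qfun Qraw
      have hc : ¬ ((1 : ℕ) % 2 = 0) := by omega
      rw [if_pos (show (1:ℕ) ≤ 2 * k + 1 by omega)]
      simp only [if_neg hc]
      rw [show 2 * k + 2 - 1 = 2 * k + 1 by omega, show (1 : ℕ) + 1 = 2 by omega, hw2]
      ring
    have ha : afun m w n k 0 = 2 * (w (2 * k + 2) * n + m) := by unfold afun; rw [if_pos rfl]
    rw [hPf0, hQf0, hPf1, hQf1, ha]
    refine ⟨by ring, by ring, by norm_num, by positivity, hA0, by linarith⟩
  rcases eq_or_ne ρ (2 * k + 1) with rfl | hρc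
  · -- case ρ = 2k+1 (center)
    have hmod : (2 * k + 1 + 1) % (4 * k + 2) = 2 * k + 2 := Nat.mod_eq_of_lt (by omega)
    rw [hmod]
    have hPc : Praw m w n k (2 * k + 1) = w (2 * k + 2) * n + m := by
      unfold Praw
      rw [if_neg (by omega), show 2 * k + 2 - (2 * k + 1) = 1 by omega, hw1]
      ring
    have hPf : Pfun m w n k (2 * k + 1) = w (2 * k + 2) * n + m := by
      unfold Pfun; rw [if_neg (by omega), if_pos (by omega)]; exact hPc
    have hQf : Qfun w n k (2 * k + 1) = 2 := by
      unfold Qfun Qraw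
      have hc : ¬ ((2 * k + 1) % 2 = 0) := by omega
      rw [if_pos (show 2 * k + 1 ≤ 2 * k + 1 by omega)]
      simp only [if_neg hc]
      rw [show 2 * k + 2 - (2 * k + 1) = 1 by omega, hw1]
      ring
    have hPf' : Pfun m w n k (2 * k + 2) = w (2 * k + 2) * n + m := by
      unfold Pfun
      rw [if_neg (by omega), if_neg (by omega), show 4 * k + 3 - (2 * k + 2) = 2 * k + 1 by omega]
      exact hPc
    have hQf' : Qfun w n k (2 * k + 2) = 2 * w (2 * k + 1) * n + 1 := by
      unfold Qfun Qraw
      have hc : (2 * k) % 2 = 0 := by omega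
      rw [if_neg (show ¬ (2 * k + 2 ≤ 2 * k + 1) by omega),
        show 4 * k + 2 - (2 * k + 2) = 2 * k by omega]
      simp only [if_pos hc]
      rw [show 2 * k + 2 - 2 * k = 2 by omega, hw2]
      ring
    have ha : afun m w n k (2 * k + 1) = w (2 * k + 2) * n + m := by
      unfold afun; rw [if_neg (by omega), if_pos rfl]
    rw [hPf, hQf, hPf', hQf', ha]
    refine ⟨by ring, by ring, by norm_num, by nlinarith [hVnn, hn], hA0, by nlinarith⟩
  rcases eq_or_ne ρ (4 * k + 1) with rfl | hρl
  · -- case ρ = 4k+1 (last)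
    have hmod : (4 * k + 1 + 1) % (4 * k + 2) = 0 := by
      rw [show 4 * k + 1 + 1 = 4 * k + 2 by omega, Nat.mod_self]
    rw [hmod]
    have hPf : Pfun m w n k (4 * k + 1) = m + (w (2 * k + 2) - 2 * w (2 * k)) * n := by
      unfold Pfun Praw
      rw [if_neg (by omega), if_neg (by omega), show 4 * k + 3 - (4 * k + 1) = 2 by omega,
        if_pos (by omega), show 2 * k + 2 - 2 = 2 * k by omega, hw2]
      ring
    have hQf : Qfun w n k (4 * k + 1) = 4 * w (2 * k + 1) * n + 2 := by
      unfold Qfun Qraw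
      have hc : ¬ ((1 : ℕ) % 2 = 0) := by omega
      rw [if_neg (show ¬ (4 * k + 1 ≤ 2 * k + 1) by omega),
        show 4 * k + 2 - (4 * k + 1) = 1 by omega]
      simp only [if_neg hc]
      rw [show (1 : ℕ) + 1 = 2 by omega, show 2 * k + 2 - 1 = 2 * k + 1 by omega, hw2]
      ring
    have hPf0 : Pfun m w n k 0 = w (2 * k + 2) * n + m := by unfold Pfun; rw [if_pos rfl]
    have hQf0 : Qfun w n k 0 = 1 := by
      unfold Qfun Qraw
      rw [if_pos (show (0:ℕ) ≤ 2 * k + 1 by omega)]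
      simp [hw1]
    have ha : afun m w n k (4 * k + 1) = m := by
      unfold afun
      rw [if_neg (by omega), if_neg (by omega), if_pos (by omega)]
    rw [hPf, hQf, hPf0, hQf0, ha]
    refine ⟨by linear_combination (2 * n) * hrek, by ring, by nlinarith [hVnn, hn],
      by norm_num, hA0, by nlinarith [hVnn, hn]⟩
  -- remaining: interior positions
  have hmod : (ρ + 1) % (4 * k + 2) = ρ + 1 := Nat.mod_eq_of_lt (by omega)
  rw [hmod]
  rcases lt_or_ge ρ (2 * k + 1) with hfwd | hmir
  · -- forward cases: 1 ≤ ρ ≤ 2k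
    have hPf : Pfun m w n k ρ = Praw m w n k ρ := by
      unfold Pfun; rw [if_neg hρ0, if_pos (by omega)]
    have hPf' : Pfun m w n k (ρ + 1) = Praw m w n k (ρ + 1) := by
      unfold Pfun; rw [if_neg (by omega), if_pos (by omega)]
    have hQf : Qfun w n k ρ = Qraw w n k ρ := by unfold Qfun; rw [if_pos (by omega)]
    have hQf' : Qfun w n k (ρ + 1) = Qraw w n k (ρ + 1) := by
      unfold Qfun; rw [if_pos (by omega)]
    rw [hPf, hPf', hQf, hQf']
    rcases Nat.even_or_odd ρ with he | ho
    · -- ρ = 2s, 1 ≤ s ≤ k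
      obtain ⟨s, rfl⟩ : ∃ s, ρ = 2 * s := by
        obtain ⟨s, hs⟩ := he; exact ⟨s, by omega⟩
      have hs1 : 1 ≤ s := by omega
      set t := k - s with ht
      have hkt : k = s + t := by omega
      have ha : afun m w n k (2 * s) = 2 * m := by
        unfold afun; rw [if_neg hρ0, if_neg hρc, if_neg (by omega)]
      rw [ha]
      obtain ⟨s', rfl⟩ : ∃ s', s = s' + 1 := ⟨s - 1, by omega⟩
      have hio := ineq_odd m w n hm hn hw0 hw1 hrec (s' + 1) t k hkt
      refine ⟨?_, ?_, Qraw_pos m w n hm hn hw0 hw1 hrec k _,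
        Qraw_pos m w n hm hn hw0 hw1 hrec k _, hio.1, hio.2.1⟩
      · have h := F1e m w n hm hw0 hw1 hrec s' t k (by omega)
        rw [show 2 * (s' + 1) = 2 * s' + 2 by ring, show 2 * s' + 2 + 1 = 2 * s' + 3 by ring]
        linarith [h]
      · exact F2o m w n hm hw0 hw1 hrec (s' + 1) t k hkt
    · -- ρ = 2s+1, 0 ≤ s ≤ k-1
      obtain ⟨s, rfl⟩ : ∃ s, ρ = 2 * s + 1 := by
        obtain ⟨s, hs⟩ := ho; exact ⟨s, by omega⟩
      have hsk : s + 1 ≤ k := by omega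
      set t := k - s - 1 with ht
      have hkt : k = s + t + 1 := by omega
      have ha : afun m w n k (2 * s + 1) = m := by
        unfold afun; rw [if_neg hρ0, if_neg hρc, if_pos (by omega)]
      rw [ha]
      have hie := ineq_even m w n hm hn hw0 hw1 hrec s t k hkt
      refine ⟨?_, ?_, ?_, ?_, ?_, ?_⟩
      · have h := F1o m w n hm hw0 hw1 hrec s t k hkt
        rw [show 2 * s + 1 + 1 = 2 * s + 2 by ring] at h ⊢
        exact h
      · have h := F2e m w n hm hw0 hw1 hrec s t k hkt
        rw [show 2 * s + 1 + 1 = 2 * s + 2 by ring] at h ⊢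
        exact h
      · exact Qraw_pos m w n hm hn hw0 hw1 hrec k _
      · exact Qraw_pos m w n hm hn hw0 hw1 hrec k _
      · rw [show 2 * s + 1 + 1 = 2 * s + 2 by ring]; exact hie.1
      · rw [show 2 * s + 1 + 1 = 2 * s + 2 by ring]; exact hie.2.1
  · -- mirror cases: 2k+2 ≤ ρ ≤ 4k  (ρ = 2k+1 and ρ = 4k+1 excluded)
    have hρ2 : 2 * k + 2 ≤ ρ := by omega
    have hρ3 : ρ ≤ 4 * k := by omega
    set σ := 4 * k + 2 - ρ with hσ
    have hσr : 2 ≤ σ ∧ σ ≤ 2 * k := by omega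
    have hPf : Pfun m w n k ρ = Praw m w n k (σ + 1) := by
      unfold Pfun
      rw [if_neg hρ0, if_neg (by omega), show 4 * k + 3 - ρ = σ + 1 by omega]
    have hPf' : Pfun m w n k (ρ + 1) = Praw m w n k σ := by
      unfold Pfun
      rw [if_neg (by omega), if_neg (by omega), show 4 * k + 3 - (ρ + 1) = σ by omega]
    have hQf : Qfun w n k ρ = Qraw w n k σ := by
      unfold Qfun; rw [if_neg (by omega)]
    have hQf' : Qfun w n k (ρ + 1) = Qraw w n k (σ - 1) := by
      unfold Qfun; rw [if_neg (by omega), show 4 * k + 2 - (ρ + 1) = σ - 1 by omega]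
    rw [hPf, hPf', hQf, hQf']
    rcases Nat.even_or_odd σ with he | ho
    · -- σ = 2s, s ≥ 1 : use F1e (s-1), F2e (s-1), ineq_even (s-1)
      obtain ⟨s, hs2⟩ : ∃ s, σ = 2 * s + 2 := by
        obtain ⟨s, hs⟩ := he; exact ⟨s - 1, by omega⟩
      set t := k - s - 1 with htd
      have hkt : k = s + t + 1 := by omega
      have ha : afun m w n k ρ = 2 * m := by
        unfold afun
        rw [if_neg hρ0, if_neg hρc, if_neg (by omega)]
      rw [ha, hs2, show 2 * s + 2 - 1 = 2 * s + 1 by omega]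
      have hie := ineq_even m w n hm hn hw0 hw1 hrec s t k hkt
      refine ⟨?_, ?_, ?_, ?_, hie.1, hie.2.2⟩
      · have h := F1e m w n hm hw0 hw1 hrec s t k hkt
        rw [show 2 * s + 2 + 1 = 2 * s + 3 by ring]
        linarith [h]
      · have h := F2e m w n hm hw0 hw1 hrec s t k hkt
        linarith [h]
      · exact Qraw_pos m w n hm hn hw0 hw1 hrec k _
      · exact Qraw_pos m w n hm hn hw0 hw1 hrec k _
    · -- σ = 2s+1, s ≥ 1 : use F1o s, F2o s, ineq_odd s
      obtain ⟨s, hs2⟩ : ∃ s, σ = 2 * s + 1 := by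
        obtain ⟨s, hs⟩ := ho; exact ⟨s, by omega⟩
      have hs1 : 1 ≤ s := by omega
      set t := k - s with htd
      have hkt : k = s + t := by omega
      have ha : afun m w n k ρ = m := by
        unfold afun
        rw [if_neg hρ0, if_neg hρc, if_pos (by omega)]
      rw [ha, hs2, show 2 * s + 1 - 1 = 2 * s by omega]
      have hio := ineq_odd m w n hm hn hw0 hw1 hrec s t k hkt
      refine ⟨?_, ?_, ?_, ?_, hio.1, hio.2.2⟩
      · have h := F1o m w n hm hw0 hw1 hrec s (t - 1) k (by omega)
        rw [show 2 * s + 1 + 1 = 2 * s + 2 by ring]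
        linarith [h]
      · have h := F2o m w n hm hw0 hw1 hrec s t k hkt
        linarith [h]
      · exact Qraw_pos m w n hm hn hw0 hw1 hrec k _
      · exact Qraw_pos m w n hm hn hw0 hw1 hrec k _

end TransMain


/-- One step of the continued fraction algorithm on a quadratic surd. -/
theorem surd_step (D P Q P' Q' a : ℤ) (hQ : 0 < Q) (hQ' : 0 < Q') (hP' : 0 ≤ P')
    (hT1 : P + P' = a * Q) (hT2 : Q * Q' = D - P' ^ 2) (hub : D < (P' + Q) ^ 2) :
    ⌊(Real.sqrt D + P) / Q⌋ = a ∧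
      Int.fract ((Real.sqrt D + P) / Q) ≠ 0 ∧
      (Int.fract ((Real.sqrt D + P) / Q))⁻¹ = (Real.sqrt D + P') / Q' := by
  have hDP : P' ^ 2 < D := by nlinarith
  have hD0 : (0 : ℝ) ≤ (D : ℤ) := by exact_mod_cast (by nlinarith : (0:ℤ) ≤ D)
  have hQR : (0 : ℝ) < (Q : ℤ) := by exact_mod_cast hQ
  have hQR' : (0 : ℝ) < (Q' : ℤ) := by exact_mod_cast hQ'
  have hlb : (P' : ℝ) < Real.sqrt D := by
    rw [Real.lt_sqrt (by exact_mod_cast hP')]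
    exact_mod_cast hDP
  have hub' : Real.sqrt D < (P' : ℝ) + Q := by
    rw [Real.sqrt_lt' (by positivity)]
    push_cast
    exact_mod_cast hub
  have hfloor : ⌊(Real.sqrt D + P) / Q⌋ = a := by
    rw [Int.floor_eq_iff]
    constructor
    · rw [le_div_iff₀ hQR]
      have : (a : ℝ) * Q = P + P' := by exact_mod_cast hT1.symm
      rw [this]; linarith
    · rw [div_lt_iff₀ hQR]
      have : ((a : ℝ) + 1) * Q = (P + P') + Q := by
        have : ((P : ℝ) + P') = a * Q := by exact_mod_cast hT1
        rw [add_mul, ← this]; ring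
      rw [this]; linarith
  have hfr : Int.fract ((Real.sqrt D + P) / Q) = (Real.sqrt D - P') / Q := by
    rw [Int.fract, hfloor]
    have hPa : (a : ℝ) * Q = P + P' := by exact_mod_cast hT1.symm
    field_simp
    linarith
  have hpos : (0:ℝ) < (Real.sqrt D - P') / Q := by
    apply div_pos (by linarith) hQR
  refine ⟨hfloor, ?_, ?_⟩
  · rw [hfr]; exact ne_of_gt hpos
  · rw [hfr]
    rw [inv_div, div_eq_div_iff (by linarith : (Real.sqrt D - (P':ℝ)) ≠ 0) (ne_of_gt hQR')]
    have hs : Real.sqrt D ^ 2 = D := Real.sq_sqrt hD0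
    have h2 : (Q:ℝ) * Q' = D - (P':ℝ)^2 := by exact_mod_cast hT2
    nlinarith [hs, h2]

theorem partDen_of_gauss (v : ℝ) (g : ℕ → ℝ) (hg0 : g 0 = v)
    (hgs : ∀ j, g (j + 1) = (Int.fract (g j))⁻¹) (i : ℕ) (hfr : Int.fract (g i) ≠ 0) :
    (GenContFract.of v).partDens.get? i = some ((⌊(Int.fract (g i))⁻¹⌋ : ℤ) : ℝ) := by
  have key : ∀ i j, (GenContFract.of (g j)).s.get? i = (GenContFract.of (g (j + i))).s.get? 0 := by
    intro i
    induction i with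
    | zero => intro j; rfl
    | succ i ih =>
      intro j
      have hj : j + 1 + i = j + (i + 1) := by omega
      rw [GenContFract.of_s_succ, ← hgs j, ih (j + 1), hj]
  have h0 : (GenContFract.of v).s.get? i = some ⟨1, ((⌊(Int.fract (g i))⁻¹⌋ : ℤ) : ℝ)⟩ := by
    rw [← hg0, key i 0]
    have : (0 : ℕ) + i = i := by omega
    rw [this]
    exact GenContFract.of_s_head hfr
  exact GenContFract.partDen_eq_s_b h0

theorem cf_repeated_m_two_m_pairs
    (m : ℤ) (hm : 1 ≤ m)
    (q : ℕ → ℤ)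
    (hq0 : q 0 = 1) (hq1 : q 1 = m)
    (hq : ∀ j : ℕ, 1 ≤ j →
      q (j + 1) = (if j % 2 = 1 then 2 * m else m) * q j + q (j - 1))
    (k : ℕ) (hk : 1 ≤ k) (n : ℤ) (hn : 1 ≤ n) :
    ⌊Real.sqrt (((q (2 * k) * n + m) ^ 2 + 2 * (2 * q (2 * k - 1) * n + 1) : ℤ) : ℝ)⌋
        = q (2 * k) * n + m ∧
    ∀ i : ℕ,
      (GenContFract.of
          (Real.sqrt (((q (2 * k) * n + m) ^ 2
            + 2 * (2 * q (2 * k - 1) * n + 1) : ℤ) : ℝ))).partDens.get? i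
        = some ((((List.replicate k ([m, 2 * m] : List ℤ)).flatten ++ [q (2 * k) * n + m]
            ++ (List.replicate k ([2 * m, m] : List ℤ)).flatten
            ++ [2 * (q (2 * k) * n + m)]).getD (i % (4 * k + 2)) 0 : ℝ)) := by
  -- set up the shifted sequence w
  set w : ℕ → ℤ := fun j => match j with
    | 0 => 1
    | 1 => 0
    | (j + 2) => q j with hwdef
  have hw0 : w 0 = 1 := rfl
  have hw1 : w 1 = 0 := rfl
  have hwq : ∀ j, w (j + 2) = q j := fun j => rfl
  have hrec : ∀ j : ℕ, w (j + 2) = (if j % 2 = 0 then 2 * m else m) * w (j + 1) + w j := by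
    intro j
    match j with
    | 0 => rw [hwq 0, hq0, hw1, hw0]; norm_num
    | 1 => rw [hwq 1, hq1, hwq 0, hq0, hw1]; norm_num
    | (j + 2) =>
      rw [hwq (j + 2), hwq (j + 1), hwq j]
      have h := hq (j + 1) (by omega)
      rw [show j + 1 + 1 = j + 2 by omega, show j + 1 - 1 = j by omega] at h
      rcases Nat.even_or_odd j with ⟨c, rfl⟩ | ⟨c, rfl⟩
      · rw [if_pos (show (c + c + 1) % 2 = 1 by omega)] at h
        rw [if_pos (show (c + c + 2) % 2 = 0 by omega)]
        exact h
      · rw [if_neg (show ¬ ((2 * c + 1 + 1) % 2 = 1) by omega)] at h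
        rw [if_neg (show ¬ ((2 * c + 1 + 2) % 2 = 0) by omega)]
        exact h
  -- abbreviations
  set A : ℤ := w (2 * k + 2) * n + m with hA
  set D : ℤ := A ^ 2 + 2 * (2 * w (2 * k + 1) * n + 1) with hDdef
  have hq2k : q (2 * k) = w (2 * k + 2) := (hwq (2 * k)).symm
  have hq2k1 : q (2 * k - 1) = w (2 * k + 1) := by
    have h := hwq (2 * k - 1)
    rw [show 2 * k - 1 + 2 = 2 * k + 1 by omega] at h
    exact h.symm
  have hDeq : ((q (2 * k) * n + m) ^ 2 + 2 * (2 * q (2 * k - 1) * n + 1) : ℤ) = D := by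
    rw [hq2k, hq2k1, hDdef, hA]
  rw [hDeq]
  -- basic facts
  have hVnn := w_nonneg m w hm hw0 hw1 hrec (2 * k + 1)
  have hWnn := w_nonneg m w hm hw0 hw1 hrec (2 * k + 2)
  have hKnn := w_nonneg m w hm hw0 hw1 hrec (2 * k)
  have hrek : w (2 * k + 2) = 2 * m * w (2 * k + 1) + w (2 * k) := w_rec_even m w hrec k
  have hA0 : 0 ≤ A := by rw [hA]; nlinarith
  have hDA : D < (A + 1) ^ 2 := by
    rw [hDdef, hA]
    nlinarith [mul_nonneg (mul_nonneg (sub_nonneg.mpr hm) hVnn) (by linarith : (0:ℤ) ≤ n),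
      mul_nonneg hKnn (by linarith : (0:ℤ) ≤ n)]
  have hPfun0 : Pfun m w n k 0 = A := by unfold Pfun; rw [if_pos rfl, hA]
  have hQfun0 : Qfun w n k 0 = 1 := by
    unfold Qfun Qraw
    rw [if_pos (show (0:ℕ) ≤ 2 * k + 1 by omega)]
    simp [hw1]
  have hafun0 : afun m w n k 0 = 2 * A := by unfold afun; rw [if_pos rfl, hA]
  -- the Gauss orbit
  set g : ℕ → ℝ := fun i => Nat.rec (Real.sqrt ((D : ℤ) : ℝ)) (fun _ x => (Int.fract x)⁻¹) i
    with hgdef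
  have hg0 : g 0 = Real.sqrt ((D : ℤ) : ℝ) := rfl
  have hgs : ∀ j, g (j + 1) = (Int.fract (g j))⁻¹ := fun j => rfl
  have hL : 1 < 4 * k + 2 := by omega
  -- the step applications
  have hfull : ∀ i : ℕ,
      Int.fract (g i) ≠ 0 ∧
      ⌊g i⌋ = (if i = 0 then A else afun m w n k (i % (4 * k + 2))) ∧
      g (i + 1) = (Real.sqrt ((D : ℤ) : ℝ) + ((Pfun m w n k ((i + 1) % (4 * k + 2)) : ℤ) : ℝ))
          / ((Qfun w n k ((i + 1) % (4 * k + 2)) : ℤ) : ℝ) := by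
    intro i
    induction i with
    | zero =>
      have hmod1 : (0 + 1) % (4 * k + 2) = 1 := Nat.mod_eq_of_lt (by omega)
      have T := trans_main m w n hm hn hw0 hw1 hrec k hk 0 (by omega)
      rw [hmod1, hPfun0, hQfun0, hafun0, ← hA, ← hDdef] at T
      obtain ⟨hT1, hT2, _, hQ'pos, hP'nn, hT5⟩ := T
      have hstep := surd_step D 0 1 (Pfun m w n k 1) (Qfun w n k 1) A (by norm_num) hQ'pos
        hP'nn (by linarith) (by linarith) ?_
      · have hx : (Real.sqrt ((D : ℤ) : ℝ) + ((0 : ℤ) : ℝ)) / ((1 : ℤ) : ℝ)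
            = g 0 := by rw [hg0]; push_cast; ring
        rw [hx] at hstep
        refine ⟨hstep.2.1, ?_, ?_⟩
        · rw [if_pos rfl]; exact hstep.1
        · rw [hmod1, hgs 0, hstep.2.2]
      · -- D < (Pfun 1 + 1)^2
        have h1 : A + 1 ≤ Pfun m w n k 1 + 1 := by linarith
        calc D < (A + 1) ^ 2 := hDA
        _ ≤ (Pfun m w n k 1 + 1) ^ 2 := by
            apply pow_le_pow_left₀ (by linarith) h1
    | succ i ih =>
      obtain ⟨hfr, hfl, hsurd⟩ := ih
      set ρ := (i + 1) % (4 * k + 2) with hρdef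
      have hρlt : ρ < 4 * k + 2 := Nat.mod_lt _ (by omega)
      have T := trans_main m w n hm hn hw0 hw1 hrec k hk ρ hρlt
      rw [← hA, ← hDdef] at T
      obtain ⟨hT1, hT2, hQpos, hQ'pos, hP'nn, hT5⟩ := T
      have hstep := surd_step D (Pfun m w n k ρ) (Qfun w n k ρ)
        (Pfun m w n k ((ρ + 1) % (4 * k + 2))) (Qfun w n k ((ρ + 1) % (4 * k + 2)))
        (afun m w n k ρ) hQpos hQ'pos hP'nn (by linarith) (by linarith) ?_
      · rw [← hsurd] at hstep
        have hmod2 : (i + 1 + 1) % (4 * k + 2) = (ρ + 1) % (4 * k + 2) := by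
          rw [hρdef, Nat.add_mod (i + 1) 1, Nat.mod_eq_of_lt hL]
        refine ⟨hstep.2.1, ?_, ?_⟩
        · rw [if_neg (by omega)]; exact hstep.1
        · rw [hmod2, hgs (i + 1), hstep.2.2]
      · have h1 : A + 1 ≤ Pfun m w n k ((ρ + 1) % (4 * k + 2)) + Qfun w n k ρ := by linarith
        calc D < (A + 1) ^ 2 := hDA
        _ ≤ (Pfun m w n k ((ρ + 1) % (4 * k + 2)) + Qfun w n k ρ) ^ 2 := by
            apply pow_le_pow_left₀ (by linarith) h1
  constructor
  · have h := (hfull 0).2.1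
    rw [if_pos rfl] at h
    rw [← hg0, h, hA]
  · intro i
    have hpd := partDen_of_gauss (Real.sqrt ((D : ℤ) : ℝ)) g hg0 hgs i (hfull i).1
    rw [hpd]
    congr 1
    have hfl := (hfull (i + 1)).2.1
    rw [if_neg (by omega)] at hfl
    rw [hgs i] at hfl
    rw [hfl]
    -- now : (afun ((i+1) % L) : ℝ) = (getD (i % L) : ℝ)
    norm_cast
    have hj : i % (4 * k + 2) < 4 * k + 2 := Nat.mod_lt _ (by omega)
    rw [getD_pattern m (q (2 * k) * n + m) k (i % (4 * k + 2)) hj]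
    have hmod : (i + 1) % (4 * k + 2) = (i % (4 * k + 2) + 1) % (4 * k + 2) := by
      rw [Nat.add_mod i 1, Nat.mod_eq_of_lt hL]
    rw [hmod]
    set j := i % (4 * k + 2) with hjdef
    rcases eq_or_ne j (4 * k + 1) with hj4 | hj4
    · rw [hj4, show 4 * k + 1 + 1 = 4 * k + 2 by omega, Nat.mod_self, hafun0,
        if_neg (by omega), if_pos rfl, hA, hq2k]
    · have hmod2 : (j + 1) % (4 * k + 2) = j + 1 := Nat.mod_eq_of_lt (by omega)
      rw [hmod2]
      rcases eq_or_ne j (2 * k) with hj2 | hj2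
      · rw [hj2, if_pos rfl]
        unfold afun
        rw [if_neg (by omega), if_pos rfl, hq2k]
      · rw [if_neg hj2, if_neg hj4]
        unfold afun
        rw [if_neg (by omega), if_neg (by omega)]
        rcases Nat.even_or_odd j with ⟨c, hc⟩ | ⟨c, hc⟩
        · rw [if_pos (by omega), if_pos (by omega)]
        · rw [if_neg (by omega), if_neg (by omega)]
end

section
/- Fix an integer m ≥ 0 and let (u_j) be defined by u_0 = 0, u_1 = 1, u_{j+1} = (2m+1) u_j + u_{j-1} for j ≥ 1 (so u_{3k-1} is odd for every k ≥ 1). Then for all integers k ≥ 1 and n ≥ 1, setting a = u_{3k-1} n − (u_{3k-1} − (2m+1))/2, the simple continued fraction expansion of √(a² + 2 u_{3k-2} n − u_{3k-2} + 1) is [a; \overline{(2m+1) repeated (3k−2) times, 2a}]; that is, the period of length 3k−1 consists of the quotient 2m+1 repeated 3k−2 times followed by 2a. -/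
/-!
Write `c = 2m + 1`, `s = 2n - 1` and `L = 3k - 2`, so that `2a = s u_{L+1} + c` and
`4N = (2a)² + 4 (s u_L + 1)` for the radicand `N`. For `p + q = L` put
`Q = s u_{p+1} u_q + 1` and `M = s (u_{p+1} u_{q+1} - u_p u_q) + c`. The numbers
`(√N + M/2)/Q` are the complete quotients of `√N` over one period: by the addition formula
`u_{p+q+1} = u_{p+1} u_{q+1} + u_p u_q` the norm `N - (M/2)²` factors as the product of
consecutive denominators, which makes every step from `(p, q + 1)` to `(p + 1, q)` one step
of the continued fraction algorithm with quotient `c`. At `(L, 0)` the complete quotient is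
`√N + a`, whose integer part is `2a`, and the next one is again the one at `(0, L)`.
-/

structure IsLucasSeq (c : ℤ) (u : ℕ → ℤ) : Prop where
  zero : u 0 = 0
  one : u 1 = 1
  recurrence : ∀ j, u (j + 2) = c * u (j + 1) + u j

namespace IsLucasSeq

variable {c : ℤ} {u : ℕ → ℤ}

theorem add (hu : IsLucasSeq c u) (p q : ℕ) :
    u (p + q + 1) = u (p + 1) * u (q + 1) + u p * u q := by
  induction p generalizing q with
  | zero => simp [hu.zero, hu.one]
  | succ p ih =>
    rw [show p + 1 + q + 1 = p + (q + 1) + 1 by omega, ih, hu.recurrence p, hu.recurrence q]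
    ring

theorem nonneg (hu : IsLucasSeq c u) (hc : 0 ≤ c) (j : ℕ) : 0 ≤ u j := by
  induction j using Nat.twoStepInduction with
  | zero => rw [hu.zero]
  | one => rw [hu.one]; exact zero_le_one
  | more j ih₀ ih₁ => rw [hu.recurrence]; positivity

theorem le_succ (hu : IsLucasSeq c u) (hc : 1 ≤ c) (j : ℕ) : u j ≤ u (j + 1) := by
  cases j with
  | zero => rw [hu.zero, hu.one]; exact zero_le_one
  | succ j =>
    have h₀ := hu.nonneg (by omega) j
    have h₁ := hu.nonneg (by omega) (j + 1)
    rw [hu.recurrence]; nlinarith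

end IsLucasSeq

-- `M` is twice the usual numerator, so that half-integral numerators are allowed.
noncomputable def quadQuot (N M Q : ℤ) : ℝ := (√(N : ℝ) + M / 2) / Q

theorem quadQuot_step {N M Q M' Q' b : ℤ} (hQ : 0 < Q) (hQ' : 0 < Q')
    (hsum : M + M' = 2 * b * Q) (hdisc : 4 * Q * Q' + M' ^ 2 = 4 * N)
    (hlt : Q' < Q + M') :
    b < quadQuot N M Q ∧ quadQuot N M Q < b + 1 ∧
      (quadQuot N M Q - b)⁻¹ = quadQuot N M' Q' := by
  have hQR : (0 : ℝ) < Q := by exact_mod_cast hQ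
  have hQ'R : (0 : ℝ) < Q' := by exact_mod_cast hQ'
  have hsumR : (M : ℝ) + M' = 2 * b * Q := by exact_mod_cast hsum
  have hdiscR : 4 * (Q : ℝ) * Q' + (M' : ℝ) ^ 2 = 4 * N := by exact_mod_cast hdisc
  have hltR : (Q' : ℝ) < Q + M' := by exact_mod_cast hlt
  have hsq : √(N : ℝ) ^ 2 = N := Real.sq_sqrt (by nlinarith)
  have hsqrt_nonneg := Real.sqrt_nonneg (N : ℝ)
  -- `(√N - M'/2)(√N + M'/2) = Q Q'`
  have hfrac : quadQuot N M Q - b = (√(N : ℝ) - M' / 2) / Q := by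
    rw [quadQuot]; field_simp; linarith
  have hlower : (M' : ℝ) / 2 < √(N : ℝ) := by nlinarith
  have hupper : √(N : ℝ) < M' / 2 + Q := by nlinarith
  refine ⟨?_, ?_, ?_⟩
  · rw [← sub_pos, hfrac]; exact div_pos (by linarith) hQR
  · rw [← sub_lt_iff_lt_add', hfrac, div_lt_one hQR]; linarith
  · rw [hfrac, inv_div, quadQuot, div_eq_div_iff (by linarith) hQ'R.ne']
    linear_combination (1 / 4) * hdiscR - hsq

namespace GenContFract

theorem partDens_get?_of_orbit {x : ℝ} {b₀ : ℤ} {X : ℕ → ℝ} {b : ℕ → ℤ}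
    (h₀ : b₀ < x ∧ x < b₀ + 1 ∧ (x - b₀)⁻¹ = X 0)
    (hX : ∀ j, b j < X j ∧ X j < b j + 1 ∧ (X j - b j)⁻¹ = X (j + 1)) (i : ℕ) :
    (GenContFract.of x).partDens.get? i = some (b i : ℝ) := by
  suffices hs : (GenContFract.of x).s.get? i = some ⟨1, b i⟩ from partDen_eq_s_b hs
  have hfract : ∀ {y : ℝ} {n : ℤ}, n < y → y < n + 1 → Int.fract y = y - n :=
    fun h₁ h₂ => by rw [Int.fract, Int.floor_eq_iff.mpr ⟨h₁.le, h₂⟩]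
  obtain ⟨hlt, hlt', hinv⟩ := h₀
  induction i generalizing x b₀ X b with
  | zero =>
    change (GenContFract.of x).s.head = _
    rw [of_s_head (by rw [hfract hlt hlt']; linarith), hfract hlt hlt', hinv,
      Int.floor_eq_iff.mpr ⟨(hX 0).1.le, (hX 0).2.1⟩]
  | succ i ih =>
    rw [of_s_succ, hfract hlt hlt', hinv]
    exact ih (fun j => hX (j + 1)) (hX 0).1 (hX 0).2.1 (hX 0).2.2

theorem partDens_get?_of_periodic_orbit {x : ℝ} {b₀ : ℤ} {L : ℕ} (hL : 0 < L)
    {Y : ℕ → ℝ} {b : ℕ → ℤ}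
    (h₀ : b₀ < x ∧ x < b₀ + 1 ∧ (x - b₀)⁻¹ = Y 0)
    (hY : ∀ t < L, b t < Y t ∧ Y t < b t + 1 ∧ (Y t - b t)⁻¹ = Y ((t + 1) % L)) (i : ℕ) :
    (GenContFract.of x).partDens.get? i = some (b (i % L) : ℝ) := by
  refine partDens_get?_of_orbit (X := fun j => Y (j % L)) (b := fun j => b (j % L))
    (by rwa [Nat.zero_mod]) (fun j => ?_) i
  simpa only [Nat.mod_add_mod] using hY (j % L) (Nat.mod_lt j hL)

end GenContFract

section SqrtPeriod

variable (N : ℤ) (u : ℕ → ℤ) (s c : ℤ)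

-- `(p, q)` with `p + q = L` indexes the `(p + 1)`-st complete quotient of a period of length
-- `L + 1`.
def periodDen (p q : ℕ) : ℤ := s * u (p + 1) * u q + 1

def periodNum (p q : ℕ) : ℤ := s * (u (p + 1) * u (q + 1) - u p * u q) + c

noncomputable def periodQuot (p q : ℕ) : ℝ :=
  quadQuot N (periodNum u s c p q) (periodDen u s p q)

variable {N u s c}

theorem periodNum_add_periodNum_succ (hrec : ∀ j, u (j + 2) = c * u (j + 1) + u j)
    (p q : ℕ) :
    periodNum u s c p (q + 1) + periodNum u s c (p + 1) q = 2 * c * periodDen u s p (q + 1) := by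
  simp only [periodNum, periodDen, hrec]
  ring

theorem periodDen_mul_periodDen_succ (hu : IsLucasSeq c u) (p q : ℕ) :
    4 * periodDen u s p (q + 1) * periodDen u s (p + 1) q + periodNum u s c (p + 1) q ^ 2 =
      (s * u (p + q + 2) + c) ^ 2 + 4 * (s * u (p + q + 1) + 1) := by
  have h₁ : u (p + q + 2) = u (p + 2) * u (q + 1) + u (p + 1) * u q := by
    rw [← hu.add]; ring_nf
  unfold periodDen periodNum
  rw [h₁, hu.add p q, hu.recurrence p]
  ring

theorem periodDen_pos (hu : IsLucasSeq c u) (hc : 0 ≤ c) (hs : 0 ≤ s) (p q : ℕ) :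
    0 < periodDen u s p q := by
  have := hu.nonneg hc (p + 1)
  have := hu.nonneg hc q
  unfold periodDen
  positivity

theorem periodDen_succ_lt (hu : IsLucasSeq c u) (hc : 1 ≤ c) (hs : 0 ≤ s) (p q : ℕ) :
    periodDen u s (p + 1) q < periodDen u s p (q + 1) + periodNum u s c (p + 1) q := by
  have key : 0 ≤ s * (u (p + 1) + u (p + 2)) * (u (q + 1) - u q) :=
    mul_nonneg (mul_nonneg hs (add_nonneg (hu.nonneg (by omega) _) (hu.nonneg (by omega) _)))
      (sub_nonneg.mpr (hu.le_succ hc q))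
  unfold periodDen periodNum
  linarith

theorem periodQuot_step (hu : IsLucasSeq c u) (hc : 1 ≤ c) (hs : 0 ≤ s) {p q : ℕ}
    (hN : 4 * N = (s * u (p + q + 2) + c) ^ 2 + 4 * (s * u (p + q + 1) + 1)) :
    c < periodQuot N u s c p (q + 1) ∧ periodQuot N u s c p (q + 1) < c + 1 ∧
      (periodQuot N u s c p (q + 1) - c)⁻¹ = periodQuot N u s c (p + 1) q :=
  quadQuot_step (periodDen_pos hu (by omega) hs _ _) (periodDen_pos hu (by omega) hs _ _)
    (periodNum_add_periodNum_succ hu.recurrence p q) (by rw [periodDen_mul_periodDen_succ hu, hN])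
    (periodDen_succ_lt hu hc hs p q)

variable {L : ℕ} {a : ℤ}

theorem periodQuot_last (hu0 : u 0 = 0) (hu1 : u 1 = 1) (ha : 2 * a = s * u (L + 1) + c) :
    periodQuot N u s c L 0 = quadQuot N (2 * a) 1 := by
  simp [periodQuot, periodNum, periodDen, hu0, hu1, ha]

theorem periodQuot_first (hu0 : u 0 = 0) (hu1 : u 1 = 1) (ha : 2 * a = s * u (L + 1) + c) :
    periodQuot N u s c 0 L = quadQuot N (2 * a) (s * u L + 1) := by
  simp [periodQuot, periodNum, periodDen, hu0, hu1, ha]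

-- Both the step out of `√N` and the step closing the period have this shape.
theorem quadQuot_step_periodQuot_first (hu : IsLucasSeq c u) (hc : 1 ≤ c) (hs : 0 ≤ s)
    (ha : 2 * a = s * u (L + 1) + c) (hN : 4 * N = (2 * a) ^ 2 + 4 * (s * u L + 1))
    {M b : ℤ} (hM : M + 2 * a = 2 * b) :
    b < quadQuot N M 1 ∧ quadQuot N M 1 < b + 1 ∧
      (quadQuot N M 1 - b)⁻¹ = periodQuot N u s c 0 L := by
  have := hu.nonneg (by omega) L
  have := hu.le_succ hc L
  rw [periodQuot_first hu.zero hu.one ha]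
  exact quadQuot_step one_pos (by positivity) (by linarith) (by linarith) (by nlinarith)

theorem sqrt_partDens_periodic (hu : IsLucasSeq c u) (hc : 1 ≤ c) (hs : 0 ≤ s)
    (ha : 2 * a = s * u (L + 1) + c) (hN : 4 * N = (2 * a) ^ 2 + 4 * (s * u L + 1)) :
    ⌊√(N : ℝ)⌋ = a ∧ ∀ i, (GenContFract.of √(N : ℝ)).partDens.get? i =
      some (((List.replicate L c ++ [2 * a]).getD (i % (L + 1)) 0 : ℤ) : ℝ) := by
  have h₀ : a < √(N : ℝ) ∧ √(N : ℝ) < a + 1 ∧ (√(N : ℝ) - a)⁻¹ = periodQuot N u s c 0 L := by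
    simpa [quadQuot] using
      quadQuot_step_periodQuot_first hu hc hs ha hN (M := 0) (b := a) (by ring)
  refine ⟨Int.floor_eq_iff.mpr ⟨h₀.1.le, h₀.2.1⟩,
    GenContFract.partDens_get?_of_periodic_orbit (Y := fun t => periodQuot N u s c t (L - t))
      (b := fun t => (List.replicate L c ++ [2 * a]).getD t 0) L.succ_pos h₀ fun t ht => ?_⟩
  rcases Nat.lt_succ_iff_lt_or_eq.mp ht with ht | rfl
  · obtain ⟨q, hq⟩ : ∃ q, L - t = q + 1 := ⟨L - t - 1, by omega⟩
    rw [List.getD_append _ _ _ _ (by simpa using ht), List.getD_replicate _ ht,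
      Nat.mod_eq_of_lt (by omega), hq, show L - (t + 1) = q by omega]
    refine periodQuot_step hu hc hs ?_
    rwa [show t + q + 2 = L + 1 by omega, show t + q + 1 = L by omega, ← ha]
  · rw [List.getD_append_right _ _ _ _ (by simp), Nat.mod_self, Nat.sub_self,
      periodQuot_last hu.zero hu.one ha]
    simpa using
      quadQuot_step_periodQuot_first hu hc hs ha hN (M := 2 * a) (b := 2 * a) (by ring)

end SqrtPeriod

theorem cf_odd_quotient_repeated_three_k_sub_two
    (m : ℤ) (hm : 0 ≤ m)
    (u : ℕ → ℤ)
    (hu0 : u 0 = 0) (hu1 : u 1 = 1)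
    (hu : ∀ j : ℕ, 1 ≤ j → u (j + 1) = (2 * m + 1) * u j + u (j - 1))
    (k : ℕ) (hk : 1 ≤ k) (n : ℤ) (hn : 1 ≤ n)
    (a : ℤ) (ha : 2 * a = 2 * (u (3 * k - 1) * n) - (u (3 * k - 1) - (2 * m + 1))) :
    ⌊Real.sqrt ((a ^ 2 + 2 * u (3 * k - 2) * n - u (3 * k - 2) + 1 : ℤ) : ℝ)⌋ = a ∧
    ∀ i : ℕ,
      (GenContFract.of
          (Real.sqrt ((a ^ 2 + 2 * u (3 * k - 2) * n
            - u (3 * k - 2) + 1 : ℤ) : ℝ))).partDens.get? i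
        = some (((List.replicate (3 * k - 2) (2 * m + 1) ++ [2 * a]).getD
            (i % (3 * k - 1)) 0 : ℝ)) := by
  have hrec : ∀ j, u (j + 2) = (2 * m + 1) * u (j + 1) + u j := fun j => hu (j + 1) (by omega)
  obtain ⟨L, hL, hL'⟩ : ∃ L, 3 * k - 2 = L ∧ 3 * k - 1 = L + 1 := ⟨_, rfl, by omega⟩
  rw [hL'] at ha
  rw [hL, hL']
  exact sqrt_partDens_periodic ⟨hu0, hu1, hrec⟩ (by omega) (s := 2 * n - 1) (by omega)
    (by linarith) (by ring)
end

section
/- Fix an integer m ≥ 0 and let (u_j) be defined by u_0 = 0, u_1 = 1, u_{j+1} = (2m+1) u_j + u_{j-1} for j ≥ 1 (so u_{3k+1} is odd and u_{3k} is even for every k ≥ 1). Then for all integers k ≥ 1 and n ≥ 1, setting a = u_{3k+1} n − (u_{3k+1} − (2m+1))/2, the simple continued fraction expansion of √(a² + 2 u_{3k} n − u_{3k} + 1) is [a; \overline{(2m+1) repeated 3k times, 2a}]; that is, the period of length 3k+1 consists of the quotient 2m+1 repeated 3k times followed by 2a. -/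
open GenContFract

private lemma sqrt_floor_helper (D p q b : ℤ) (hq : 0 < q)
    (h1 : 0 ≤ b * q - p) (h2 : (b * q - p) ^ 2 < D) (h3 : D < ((b + 1) * q - p) ^ 2) :
    ⌊(Real.sqrt D + p) / q⌋ = b := by
  have hD0 : (0:ℤ) ≤ D := le_trans (sq_nonneg _) h2.le
  have hs0 : 0 ≤ Real.sqrt D := Real.sqrt_nonneg _
  have hs2 : Real.sqrt D ^ 2 = (D:ℝ) := Real.sq_sqrt (by exact_mod_cast hD0)
  have hq' : (0:ℝ) < (q:ℝ) := by exact_mod_cast hq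
  have h1' : (0:ℝ) ≤ (b:ℝ)*q - p := by exact_mod_cast h1
  have h2' : ((b:ℝ)*q - p)^2 < (D:ℝ) := by exact_mod_cast h2
  have h3' : (D:ℝ) < (((b:ℝ)+1)*q - p)^2 := by exact_mod_cast h3
  have low : (b:ℝ)*q - p < Real.sqrt D := by nlinarith
  have hpos : (0:ℝ) < ((b:ℝ)+1)*q - p := by nlinarith
  have high : Real.sqrt D < ((b:ℝ)+1)*q - p := by nlinarith
  rw [Int.floor_eq_iff]
  constructor
  · rw [le_div_iff₀ hq']; linarith
  · rw [div_lt_iff₀ hq']; linarith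

private lemma sqrt_inv_helper (D p q q2 : ℤ) (hq : 0 < q) (hq2 : 0 < q2)
    (hid : q * q2 = D - p ^ 2) (hp : 0 ≤ p) :
    (Real.sqrt D - p) / q ≠ 0 ∧ ((Real.sqrt D - p) / q)⁻¹ = (Real.sqrt D + p) / q2 := by
  have hp2 : p^2 < D := by nlinarith
  have hD0 : (0:ℤ) ≤ D := by nlinarith [sq_nonneg p]
  have hs2 : Real.sqrt D ^ 2 = (D:ℝ) := Real.sq_sqrt (by exact_mod_cast hD0)
  have hs0 := Real.sqrt_nonneg (D:ℝ)
  have hp' : (0:ℝ) ≤ (p:ℝ) := by exact_mod_cast hp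
  have hp2' : ((p:ℝ))^2 < (D:ℝ) := by exact_mod_cast hp2
  have hlt : (p:ℝ) < Real.sqrt D := by nlinarith
  have hq' : (0:ℝ) < (q:ℝ) := by exact_mod_cast hq
  have hq2' : (0:ℝ) < (q2:ℝ) := by exact_mod_cast hq2
  have hnum : (0:ℝ) < Real.sqrt D - p := by linarith
  refine ⟨ne_of_gt (div_pos hnum hq'), ?_⟩
  have hidR : (q:ℝ) * (q2:ℝ) = (D:ℝ) - (p:ℝ)^2 := by exact_mod_cast hid
  rw [inv_div, div_eq_div_iff (ne_of_gt hnum) (ne_of_gt hq2')]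
  linear_combination hidR - hs2

private lemma stream_congr_of_fr_eq {x : ℝ} {n n' : ℕ} {p p' : GenContFract.IntFractPair ℝ}
    (h : IntFractPair.stream x n = some p) (h' : IntFractPair.stream x n' = some p')
    (hfr : p.fr = p'.fr) :
    IntFractPair.stream x (n + 1) = IntFractPair.stream x (n' + 1) := by
  rcases eq_or_ne p.fr 0 with h0 | h0
  · rw [IntFractPair.stream_eq_none_of_fr_eq_zero h h0,
      IntFractPair.stream_eq_none_of_fr_eq_zero h' (hfr ▸ h0)]
  · rw [IntFractPair.stream_succ_of_some h h0, IntFractPair.stream_succ_of_some h' (hfr ▸ h0), hfr]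

private lemma stream_congr_of_eq {x : ℝ} {n n' : ℕ}
    (h : IntFractPair.stream x n = IntFractPair.stream x n') :
    IntFractPair.stream x (n + 1) = IntFractPair.stream x (n' + 1) := by
  cases hn : IntFractPair.stream x n with
  | none =>
      have hn' : IntFractPair.stream x n' = none := by rw [← h]; exact hn
      rw [IntFractPair.succ_nth_stream_eq_none_iff.mpr (Or.inl hn),
        IntFractPair.succ_nth_stream_eq_none_iff.mpr (Or.inl hn')]
  | some p =>
      have hn' : IntFractPair.stream x n' = some p := by rw [← h]; exact hn
      exact stream_congr_of_fr_eq hn hn' rfl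

set_option maxHeartbeats 2000000 in
theorem cf_odd_quotient_repeated_three_k
    (m : ℤ) (hm : 0 ≤ m)
    (u : ℕ → ℤ)
    (hu0 : u 0 = 0) (hu1 : u 1 = 1)
    (hu : ∀ j : ℕ, 1 ≤ j → u (j + 1) = (2 * m + 1) * u j + u (j - 1))
    (k : ℕ) (hk : 1 ≤ k) (n : ℤ) (hn : 1 ≤ n)
    (a : ℤ) (ha : 2 * a = 2 * (u (3 * k + 1) * n) - (u (3 * k + 1) - (2 * m + 1))) :
    ⌊Real.sqrt ((a ^ 2 + 2 * u (3 * k) * n - u (3 * k) + 1 : ℤ) : ℝ)⌋ = a ∧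
    ∀ i : ℕ,
      (GenContFract.of
          (Real.sqrt ((a ^ 2 + 2 * u (3 * k) * n
            - u (3 * k) + 1 : ℤ) : ℝ))).partDens.get? i
        = some (((List.replicate (3 * k) (2 * m + 1) ++ [2 * a]).getD
            (i % (3 * k + 1)) 0 : ℝ)) := by
  -- basic u facts
  have hu' : ∀ j, u (j + 2) = (2 * m + 1) * u (j + 1) + u j := by
    intro j; have := hu (j + 1) (by omega); simpa using this
  have hunn2 : ∀ j, 0 ≤ u j ∧ 0 ≤ u (j + 1) := by
    intro j
    induction j with
    | zero => exact ⟨hu0.ge, by rw [hu1]; norm_num⟩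
    | succ j ih => exact ⟨ih.2, by
        rw [hu']
        have := mul_nonneg (by linarith : (0:ℤ) ≤ 2 * m + 1) ih.2
        linarith [ih.1]⟩
  have hunn : ∀ j, 0 ≤ u j := fun j => (hunn2 j).1
  have hmono : ∀ j, u j ≤ u (j + 1) := by
    intro j
    cases j with
    | zero => rw [hu0, hu1]; norm_num
    | succ j =>
      rw [hu']
      have := mul_nonneg (by linarith : (0:ℤ) ≤ 2 * m) (hunn (j + 1))
      linarith [hunn j]
  have haddP : ∀ s, (∀ r, u (r + s + 1) = u (r + 1) * u (s + 1) + u r * u s) ∧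
      (∀ r, u (r + s + 2) = u (r + 1) * u (s + 2) + u r * u (s + 1)) := by
    intro s
    induction s with
    | zero =>
      constructor
      · intro r; rw [hu1, hu0]; ring
      · intro r
        have h2 : u 2 = 2 * m + 1 := by
          have := hu' 0; rw [hu0, hu1] at this; linarith
        rw [hu' r, h2, hu1]; ring
    | succ s ih =>
      refine ⟨ih.2, fun r => ?_⟩
      have e1 := hu' (r + s + 1)
      have e2 := hu' (s + 1)
      have e3 := hu' s
      have i1 := ih.1 r
      have i2 := ih.2 r
      show u (r + s + 3) = u (r + 1) * u (s + 3) + u r * u (s + 2)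
      linear_combination e1 + (2 * m + 1) * i2 + i1 - u (r + 1) * e2 - u r * e3
  have hadd : ∀ r s, u (r + s + 1) = u (r + 1) * u (s + 1) + u r * u s :=
    fun r s => (haddP s).1 r
  have hadd2 : ∀ j i, u (j + i) + (2 * m + 1) * (u j * u i)
      = u j * u (i + 1) + u (j + 1) * u i := by
    intro j i
    cases j with
    | zero => rw [Nat.zero_add, hu0, hu1]; ring
    | succ j =>
      rw [show j + 1 + i = j + i + 1 by omega]
      linear_combination hadd j i - u i * hu' j
  -- setup
  set w : ℤ := 2 * n - 1 with hwdef
  have hw : 1 ≤ w := by omega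
  set D : ℤ := a ^ 2 + 2 * u (3 * k) * n - u (3 * k) + 1 with hDdef
  set x : ℝ := Real.sqrt ((D : ℤ) : ℝ) with hxdef
  clear_value x D
  have ha2 : 2 * a = w * u (3 * k + 1) + (2 * m + 1) := by
    linear_combination ha - u (3 * k + 1) * hwdef
  have hD : D = a ^ 2 + w * u (3 * k) + 1 := by
    linear_combination hDdef - u (3 * k) * hwdef
  have hQpos : ∀ b c : ℤ, 0 ≤ b → 0 ≤ c → (0:ℤ) < w * b * c + 1 := by
    intro b c hb hc
    linarith [mul_nonneg (mul_nonneg (by linarith : (0:ℤ) ≤ w) hb) hc]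
  have haw : (0:ℤ) ≤ w * u (3 * k + 1) := mul_nonneg (by linarith) (hunn _)
  have h0a : (0:ℤ) ≤ a := by linarith [ha2, haw, hm]
  have hfloorx : ⌊x⌋ = a := by
    have h := sqrt_floor_helper D 0 1 a one_pos (by linarith)
      (by have := mul_nonneg (by linarith : (0:ℤ) ≤ w) (hunn (3 * k))
          have e : (a * 1 - 0) ^ 2 = a ^ 2 := by ring
          rw [e]; linarith [hD])
      (by have := mul_nonneg (by linarith : (0:ℤ) ≤ w) (sub_nonneg.mpr (hmono (3 * k)))
          have e : ((a + 1) * 1 - 0) ^ 2 = a ^ 2 + 2 * a + 1 := by ring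
          rw [e]; nlinarith [hD, ha2, hm])
    rw [hxdef]
    simpa using h
  have hfract_x : Int.fract x = x - (a : ℝ) := by
    rw [Int.fract, hfloorx]
  -- the invariant
  have INV : ∀ j, j ≤ 3 * k → IntFractPair.stream x j =
      some ⟨if j = 0 then a else 2 * m + 1,
        (x - ((a - w * u j * u (3 * k - j) : ℤ) : ℝ))
          / ((w * u j * u (3 * k + 1 - j) + 1 : ℤ) : ℝ)⟩ := by
    intro j hj
    induction j with
    | zero =>
      rw [IntFractPair.stream_zero]
      have hofx : IntFractPair.of x = ⟨a, x - (a : ℝ)⟩ := by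
        rw [IntFractPair.of.eq_def, hfloorx, hfract_x]
      rw [hofx]
      simp only [if_pos rfl, Nat.sub_zero, hu0]
      congr 1
      push_cast
      ring
    | succ j ih =>
      have hj' : j ≤ 3 * k := by omega
      have IH := ih hj'
      obtain ⟨i, hi⟩ : ∃ i, 3 * k = j + 1 + i := ⟨3 * k - (j + 1), by omega⟩
      rw [show 3 * k - j = i + 1 by omega, show 3 * k + 1 - j = i + 2 by omega] at IH
      rw [show 3 * k - (j + 1) = i by omega, show 3 * k + 1 - (j + 1) = i + 1 by omega]
      set p : ℤ := a - w * u j * u (i + 1) with hpd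
      set q : ℤ := w * u j * u (i + 2) + 1 with hqd
      set q2 : ℤ := w * u (j + 1) * u (i + 1) + 1 with hq2d
      set p2 : ℤ := a - w * u (j + 1) * u i with hp2d
      set q3 : ℤ := w * u (j + 2) * u i + 1 with hq3d
      clear_value p q q2 p2 q3
      have ha2' : 2 * a = w * u (j + (i + 1) + 1) + (2 * m + 1) := by
        rw [show j + (i + 1) + 1 = 3 * k + 1 by omega]; exact ha2
      have hD' : D = a ^ 2 + w * u (j + (i + 1)) + 1 := by
        rw [show j + (i + 1) = 3 * k by omega]; exact hD
      have A1 : u (j + (i + 1) + 1) = u (j + 1) * u (i + 2) + u j * u (i + 1) := by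
        have := hadd j (i + 1); rwa [show i + 1 + 1 = i + 2 by omega] at this
      have A2 : u (j + (i + 1)) + (2 * m + 1) * (u j * u (i + 1))
          = u j * u (i + 2) + u (j + 1) * u (i + 1) := by
        have := hadd2 j (i + 1); rwa [show i + 1 + 1 = i + 2 by omega] at this
      have B1 : u (j + (i + 1) + 1) = u (j + 2) * u (i + 1) + u (j + 1) * u i := by
        have := hadd (j + 1) i
        rwa [show j + 1 + i + 1 = j + (i + 1) + 1 by omega,
          show j + 1 + 1 = j + 2 by omega] at this
      have A2b : u (j + (i + 1)) + (2 * m + 1) * (u (j + 1) * u i)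
          = u (j + 1) * u (i + 1) + u (j + 2) * u i := by
        have := hadd2 (j + 1) i
        rwa [show j + 1 + i = j + (i + 1) by omega, show j + 1 + 1 = j + 2 by omega] at this
      have HU := hu' j
      have hqpos : 0 < q := by rw [hqd]; exact hQpos _ _ (hunn j) (hunn (i + 2))
      have hq2pos : 0 < q2 := by rw [hq2d]; exact hQpos _ _ (hunn (j + 1)) (hunn (i + 1))
      have hq3pos : 0 < q3 := by rw [hq3d]; exact hQpos _ _ (hunn (j + 2)) (hunn i)
      have hid1 : q * q2 = D - p ^ 2 := by
        rw [hpd, hqd, hq2d]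
        linear_combination (-(w ^ 2 * u j * u (i + 1))) * A1 + (-w) * A2
          + (-(w * u j * u (i + 1))) * ha2' + (-1 : ℤ) * hD'
      have hid2 : q2 * q3 = D - p2 ^ 2 := by
        rw [hp2d, hq2d, hq3d]
        linear_combination (-(w ^ 2 * u (j + 1) * u i)) * B1 + (-w) * A2b
          + (-(w * u (j + 1) * u i)) * ha2' + (-1 : ℤ) * hD'
      have hrec : (2 * m + 1) * q2 - p = p2 := by
        rw [hpd, hq2d, hp2d]
        linear_combination (-(w * u (i + 1))) * HU + (-w) * B1 + (-1 : ℤ) * ha2'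
      have hpeq : 2 * p = w * (u (j + 1) * u (i + 2) - u j * u (i + 1)) + (2 * m + 1) := by
        rw [hpd]; linear_combination ha2' + w * A1
      have hp_nn : 0 ≤ p := by
        have hmul : u j * u (i + 1) ≤ u (j + 1) * u (i + 2) :=
          mul_le_mul (hmono j) (hmono (i + 1)) (hunn (i + 1))
            (le_trans (hunn j) (hmono j))
        linarith [hpeq, hm, hmul, mul_nonneg (sub_nonneg.mpr hw) (sub_nonneg.mpr hmul)]
      have hp2eq : 2 * p2 = w * (u (j + 2) * u (i + 1) - u (j + 1) * u i) + (2 * m + 1) := by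
        rw [hp2d]; linear_combination ha2' + w * B1
      have hp2_nn : 0 ≤ p2 := by
        have hmul : u (j + 1) * u i ≤ u (j + 2) * u (i + 1) :=
          mul_le_mul (hmono (j + 1)) (hmono i) (hunn i)
            (le_trans (hunn (j + 1)) (hmono (j + 1)))
        linarith [hp2eq, hm, hmul, mul_nonneg (sub_nonneg.mpr hw) (sub_nonneg.mpr hmul)]
      have hReq : 2 * p2 + q2 - q3
          = w * ((u (j + 2) + u (j + 1)) * (u (i + 1) - u i)) + (2 * m + 1) := by
        rw [hp2d, hq2d, hq3d]; linear_combination ha2' + w * B1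
      have hRpos : 0 < 2 * p2 + q2 - q3 := by
        rw [hReq]
        linarith [hm, mul_nonneg (by linarith : (0:ℤ) ≤ w)
          (mul_nonneg (add_nonneg (hunn (j + 2)) (hunn (j + 1)))
            (sub_nonneg.mpr (hmono i)))]
      have hinv := sqrt_inv_helper D p q q2 hqpos hq2pos hid1 hp_nn
      rw [← hxdef] at hinv
      have hstep := IntFractPair.stream_succ_of_some IH hinv.1
      rw [hstep, hinv.2]
      have hfloor1 : ⌊(x + (p : ℝ)) / (q2 : ℝ)⌋ = 2 * m + 1 := by
        have h1 : 0 ≤ (2 * m + 1) * q2 - p := by rw [hrec]; exact hp2_nn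
        have h2 : ((2 * m + 1) * q2 - p) ^ 2 < D := by
          rw [hrec]; linarith [hid2, mul_pos hq2pos hq3pos]
        have h3 : D < ((2 * m + 1 + 1) * q2 - p) ^ 2 := by
          have e : (2 * m + 1 + 1) * q2 - p = p2 + q2 := by linarith
          rw [e]
          have hx := mul_pos hq2pos hRpos
          linarith [hid2, hx]
        have h := sqrt_floor_helper D p q2 (2 * m + 1) hq2pos h1 h2 h3
        rw [hxdef]; exact h
      have hrecR : ((2 * m + 1 : ℤ) : ℝ) * (q2 : ℝ) - (p : ℝ) = (p2 : ℝ) := by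
        exact_mod_cast hrec
      have hq2R : ((q2 : ℤ) : ℝ) ≠ 0 := by
        exact_mod_cast ne_of_gt hq2pos
      have hfr1 : Int.fract ((x + (p : ℝ)) / (q2 : ℝ)) = (x - (p2 : ℝ)) / (q2 : ℝ) := by
        rw [Int.fract, hfloor1]
        field_simp
        push_cast at hrecR ⊢
        linarith
      have hof1 : IntFractPair.of ((x + (p : ℝ)) / (q2 : ℝ))
          = ⟨2 * m + 1, (x - (p2 : ℝ)) / (q2 : ℝ)⟩ := by
        rw [IntFractPair.of.eq_def, hfloor1, hfr1]
      rw [hof1]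
      rw [if_neg (Nat.succ_ne_zero j)]
  -- x floor and the final pair
  have base0 : IntFractPair.stream x 0 = some ⟨a, x - (a : ℝ)⟩ := by
    rw [IntFractPair.stream_zero, IntFractPair.of.eq_def, hfloorx, hfract_x]
  have hcpos : (0:ℤ) < w * u (3 * k) + 1 := by
    linarith [mul_nonneg (by linarith : (0:ℤ) ≤ w) (hunn (3 * k))]
  have STR : IntFractPair.stream x (3 * k + 1) = some ⟨2 * a, x - (a : ℝ)⟩ := by
    have I3 := INV (3 * k) le_rfl
    rw [show 3 * k - 3 * k = 0 by omega, show 3 * k + 1 - 3 * k = 1 by omega, hu0, hu1,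
      if_neg (by omega : ¬ 3 * k = 0)] at I3
    simp only [mul_zero, sub_zero, mul_one] at I3
    have hid3 : (w * u (3 * k) + 1) * 1 = D - a ^ 2 := by linear_combination -hD
    have hinv3 := sqrt_inv_helper D a (w * u (3 * k) + 1) 1 hcpos one_pos hid3 h0a
    rw [← hxdef] at hinv3
    have hstep := IntFractPair.stream_succ_of_some I3 hinv3.1
    rw [hstep, hinv3.2]
    have e1 : ((1 : ℤ) : ℝ) = 1 := by norm_num
    rw [e1, div_one]
    have hfl : ⌊x + (a : ℝ)⌋ = 2 * a := by
      rw [Int.floor_add_intCast, hfloorx]; ring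
    have hfr : Int.fract (x + (a : ℝ)) = x - (a : ℝ) := by
      rw [Int.fract_add_intCast, hfract_x]
    rw [IntFractPair.of.eq_def, hfl, hfr]
  -- periodicity
  have per : ∀ i, IntFractPair.stream x (3 * k + 1 + (i + 1)) = IntFractPair.stream x (i + 1) := by
    intro i
    induction i with
    | zero => exact stream_congr_of_fr_eq STR base0 rfl
    | succ i ih => exact stream_congr_of_eq ih
  have hmod : ∀ i, IntFractPair.stream x (i + 1)
      = IntFractPair.stream x (i % (3 * k + 1) + 1) := by
    intro i
    induction i using Nat.strong_induction_on with
    | _ i ih =>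
      by_cases h : i < 3 * k + 1
      · rw [Nat.mod_eq_of_lt h]
      · push_neg at h
        obtain ⟨i', rfl⟩ : ∃ i', i = 3 * k + 1 + i' := ⟨i - (3 * k + 1), by omega⟩
        calc IntFractPair.stream x (3 * k + 1 + i' + 1)
            = IntFractPair.stream x (i' + 1) := per i'
          _ = IntFractPair.stream x (i' % (3 * k + 1) + 1) := ih i' (by omega)
          _ = IntFractPair.stream x ((3 * k + 1 + i') % (3 * k + 1) + 1) := by
              rw [Nat.add_mod_left]
  -- conclusion
  refine ⟨hfloorx, fun i => ?_⟩
  have hrlt : i % (3 * k + 1) < 3 * k + 1 := Nat.mod_lt _ (by omega)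
  by_cases hcase : i % (3 * k + 1) = 3 * k
  · have hst : IntFractPair.stream x (i + 1) = some ⟨2 * a, x - (a : ℝ)⟩ := by
      rw [hmod i, hcase]; exact STR
    have hsget := get?_of_eq_some_of_succ_get?_intFractPair_stream hst
    rw [partDen_eq_s_b hsget]
    have hl : (List.replicate (3 * k) (2 * m + 1) ++ [2 * a]).getD (i % (3 * k + 1)) 0
        = 2 * a := by
      rw [hcase, List.getD_append_right _ _ _ _ (by simp)]
      simp
    rw [hl]
  · have hI := INV (i % (3 * k + 1) + 1) (by omega)
    rw [if_neg (Nat.succ_ne_zero _)] at hI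
    have hst := (hmod i).trans hI
    have hsget := get?_of_eq_some_of_succ_get?_intFractPair_stream hst
    rw [partDen_eq_s_b hsget]
    have hl : (List.replicate (3 * k) (2 * m + 1) ++ [2 * a]).getD (i % (3 * k + 1)) 0
        = 2 * m + 1 := by
      rw [List.getD_append _ _ _ _ (by simp; omega)]
      rw [List.getD_eq_getElem?_getD]
      rw [List.getElem?_replicate_of_lt (by omega : i % (3 * k + 1) < 3 * k)]
      rfl
    rw [hl]
end
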